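/- arXiv:1306.4236 — 5 statements merged into one kernel-verified Lean document; each statement's English description precedes it below -/
import Mathlib

section
/- For every integer s > 625, any 3-uniform [1,s]-almost intersecting hypergraph has at most 6s+6 edges. -/
namespace Stmt14

variable {α : Type*} [DecidableEq α]

/-- number of edges containing both `x` and `y`. -/
def pdeg (F : Finset (Finset α)) (x y : α) : ℕ :=
  (F.filter fun A => x ∈ A ∧ y ∈ A).card

/-- Edges containing the pair {x,y} and meeting B are at most `B.card` many. -/
lemma hits_pair {F : Finset (Finset α)} (huni : ∀ A ∈ F, A.card = 3)
    {x y : α} (hxy : x ≠ y) {B : Finset α} (hx : x ∉ B) (hy : y ∉ B) :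
    (F.filter fun A => (x ∈ A ∧ y ∈ A) ∧ ¬ Disjoint A B).card ≤ B.card := by
  have hsub : (F.filter fun A => (x ∈ A ∧ y ∈ A) ∧ ¬ Disjoint A B)
      ⊆ B.image (fun t => ({x, y, t} : Finset α)) := by
    intro A hA
    simp only [Finset.mem_filter] at hA
    obtain ⟨hAF, ⟨hxA, hyA⟩, hnd⟩ := hA
    obtain ⟨t, htA, htB⟩ := Finset.not_disjoint_iff.1 hnd
    have htx : t ≠ x := fun h => hx (h ▸ htB)
    have hty : t ≠ y := fun h => hy (h ▸ htB)
    have hsub2 : ({x, y, t} : Finset α) ⊆ A := by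
      intro z hz
      simp only [Finset.mem_insert, Finset.mem_singleton] at hz
      rcases hz with rfl | rfl | rfl <;> assumption
    have hcard : ({x, y, t} : Finset α).card = 3 := by
      rw [Finset.card_insert_of_notMem, Finset.card_insert_of_notMem,
        Finset.card_singleton]
      · simp [hty.symm]
      · simp [hxy, htx.symm]
    have : ({x, y, t} : Finset α) = A :=
      Finset.eq_of_subset_of_card_le hsub2 (by rw [hcard, huni A hAF])
    exact Finset.mem_image.2 ⟨t, htB, this⟩
  calc (F.filter fun A => (x ∈ A ∧ y ∈ A) ∧ ¬ Disjoint A B).card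
      ≤ (B.image (fun t => ({x, y, t} : Finset α))).card := Finset.card_le_card hsub
    _ ≤ B.card := Finset.card_image_le

/-- Edges containing `v` and meeting `B` are at most `∑ b ∈ B, pdeg v b` many. -/
lemma hits_vertex {F : Finset (Finset α)} {v : α} {B : Finset α} :
    (F.filter fun A => v ∈ A ∧ ¬ Disjoint A B).card ≤ ∑ b ∈ B, pdeg F v b := by
  have hsub : (F.filter fun A => v ∈ A ∧ ¬ Disjoint A B)
      ⊆ B.biUnion (fun b => F.filter fun A => v ∈ A ∧ b ∈ A) := by
    intro A hA
    simp only [Finset.mem_filter] at hA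
    obtain ⟨hAF, hvA, hnd⟩ := hA
    obtain ⟨t, htA, htB⟩ := Finset.not_disjoint_iff.1 hnd
    exact Finset.mem_biUnion.2 ⟨t, htB, Finset.mem_filter.2 ⟨hAF, hvA, htA⟩⟩
  exact le_trans (Finset.card_le_card hsub) (Finset.card_biUnion_le)

/-- Any family of edges all disjoint from a member `E` of `F` has size at most `s`. -/
lemma budget {s : ℕ} {F : Finset (Finset α)}
    (hup : ∀ A ∈ F, (F.filter fun B => Disjoint A B).card ≤ s)
    {E : Finset α} (hE : E ∈ F) {S : Finset (Finset α)}
    (hS : ∀ B ∈ S, B ∈ F ∧ Disjoint E B) : S.card ≤ s := by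
  refine le_trans (Finset.card_le_card fun B hB => ?_) (hup E hE)
  exact Finset.mem_filter.2 ⟨(hS B hB).1, (hS B hB).2⟩

lemma pdeg_le {s : ℕ} {F : Finset (Finset α)}
    (huni : ∀ A ∈ F, A.card = 3)
    (hlow : ∀ A ∈ F, ∃ B ∈ F, Disjoint A B)
    (hup : ∀ A ∈ F, (F.filter fun B => Disjoint A B).card ≤ s)
    {x y : α} (hxy : x ≠ y) : pdeg F x y ≤ s + 3 := by
  rcases (F.filter fun A => x ∈ A ∧ y ∈ A).eq_empty_or_nonempty with h | ⟨E, hE⟩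
  · simp [pdeg, h]
  simp only [Finset.mem_filter] at hE
  obtain ⟨hEF, hxE, hyE⟩ := hE
  obtain ⟨B, hBF, hdisj⟩ := hlow E hEF
  have hxB : x ∉ B := Finset.disjoint_left.1 hdisj hxE
  have hyB : y ∉ B := Finset.disjoint_left.1 hdisj hyE
  have hsplit := Finset.card_filter_add_card_filter_not
    (s := F.filter fun A => x ∈ A ∧ y ∈ A) (p := fun A => Disjoint A B)
  have h1 : ((F.filter fun A => x ∈ A ∧ y ∈ A).filter fun A => Disjoint A B).card ≤ s := by
    refine budget hup hBF fun C hC => ?_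
    simp only [Finset.mem_filter] at hC
    exact ⟨hC.1.1, hC.2.symm⟩
  have h2 : ((F.filter fun A => x ∈ A ∧ y ∈ A).filter fun A => ¬ Disjoint A B).card ≤ 3 := by
    rw [Finset.filter_filter]
    have := hits_pair huni hxy hxB hyB (F := F)
    calc (F.filter fun A => (x ∈ A ∧ y ∈ A) ∧ ¬Disjoint A B).card ≤ B.card := this
      _ = 3 := huni B hBF
  unfold pdeg
  omega

-- star of pair (u,x) restricted to edges disjoint from E
def SS (F : Finset (Finset α)) (u x : α) (E : Finset α) : Finset (Finset α) :=
  (F.filter fun A => u ∈ A ∧ x ∈ A).filter fun A => Disjoint A E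

lemma SS_count {F : Finset (Finset α)} (huni : ∀ A ∈ F, A.card = 3)
    {u x : α} (hux : u ≠ x) {E : Finset α} (hE : E ∈ F)
    (huE : u ∉ E) (hxE : x ∉ E) :
    pdeg F u x ≤ (SS F u x E).card + 3 := by
  have hsplit := Finset.card_filter_add_card_filter_not
    (s := F.filter fun A => u ∈ A ∧ x ∈ A) (p := fun A => Disjoint A E)
  have h2 : ((F.filter fun A => u ∈ A ∧ x ∈ A).filter fun A => ¬ Disjoint A E).card ≤ 3 := by
    rw [Finset.filter_filter]
    calc (F.filter fun A => (u ∈ A ∧ x ∈ A) ∧ ¬Disjoint A E).card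
        ≤ E.card := hits_pair huni hux huE hxE
      _ = 3 := huni E hE
  unfold pdeg SS
  omega

lemma SS_disj {F : Finset (Finset α)} {u x : α} {E : Finset α} :
    ∀ B ∈ SS F u x E, B ∈ F ∧ Disjoint E B := by
  intro B hB
  simp only [SS, Finset.mem_filter] at hB
  exact ⟨hB.1.1, hB.2.symm⟩

lemma SS_inter {F : Finset (Finset α)} (huni : ∀ A ∈ F, A.card = 3)
    {u x y : α} (hux : u ≠ x) (huy : u ≠ y) (hxy : x ≠ y) {E : Finset α} :
    ((SS F u x E) ∩ (SS F u y E)).card ≤ 1 := by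
  rw [Finset.card_le_one]
  have key : ∀ A ∈ (SS F u x E) ∩ (SS F u y E), A = ({u, x, y} : Finset α) := by
    intro A hA
    simp only [Finset.mem_inter, SS, Finset.mem_filter] at hA
    obtain ⟨⟨⟨hAF, huA, hxA⟩, -⟩, ⟨⟨-, -, hyA⟩, -⟩⟩ := hA
    have hsub : ({u, x, y} : Finset α) ⊆ A := by
      intro z hz
      simp only [Finset.mem_insert, Finset.mem_singleton] at hz
      rcases hz with rfl | rfl | rfl <;> assumption
    have hcard : ({u, x, y} : Finset α).card = 3 := by
      rw [Finset.card_insert_of_notMem, Finset.card_insert_of_notMem,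
        Finset.card_singleton]
      · simp [hxy]
      · simp [hux, huy]
    exact (Finset.eq_of_subset_of_card_le hsub (by rw [hcard, huni A hAF])).symm
  intro a ha b hb
  rw [key a ha, key b hb]

lemma two_star {s : ℕ} {F : Finset (Finset α)}
    (huni : ∀ A ∈ F, A.card = 3)
    (hup : ∀ A ∈ F, (F.filter fun B => Disjoint A B).card ≤ s)
    {u x1 x2 : α} (h12 : x1 ≠ x2) (hu1 : u ≠ x1) (hu2 : u ≠ x2)
    {E : Finset α} (hE : E ∈ F) (huE : u ∉ E) (h1E : x1 ∉ E) (h2E : x2 ∉ E) :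
    pdeg F u x1 + pdeg F u x2 ≤ s + 7 := by
  have c1 := SS_count huni hu1 hE huE h1E
  have c2 := SS_count huni hu2 hE huE h2E
  have hui := Finset.card_union_add_card_inter (SS F u x1 E) (SS F u x2 E)
  have hint := SS_inter huni hu1 hu2 h12 (E := E)
  have hbud : (SS F u x1 E ∪ SS F u x2 E).card ≤ s := by
    refine le_trans (Finset.card_le_card fun B hB => Finset.mem_filter.2 ?_) (hup E hE)
    rcases Finset.mem_union.1 hB with h | h
    · exact SS_disj B h
    · exact SS_disj B h
  omega

lemma three_star {s : ℕ} {F : Finset (Finset α)}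
    (huni : ∀ A ∈ F, A.card = 3)
    (hup : ∀ A ∈ F, (F.filter fun B => Disjoint A B).card ≤ s)
    {u x1 x2 x3 : α} (h12 : x1 ≠ x2) (h13 : x1 ≠ x3) (h23 : x2 ≠ x3)
    (hu1 : u ≠ x1) (hu2 : u ≠ x2) (hu3 : u ≠ x3)
    {E : Finset α} (hE : E ∈ F) (huE : u ∉ E) (h1E : x1 ∉ E) (h2E : x2 ∉ E) (h3E : x3 ∉ E) :
    pdeg F u x1 + pdeg F u x2 + pdeg F u x3 ≤ s + 12 := by
  have c1 := SS_count huni hu1 hE huE h1E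
  have c2 := SS_count huni hu2 hE huE h2E
  have c3 := SS_count huni hu3 hE huE h3E
  have hui12 := Finset.card_union_add_card_inter (SS F u x1 E) (SS F u x2 E)
  have hui3 := Finset.card_union_add_card_inter (SS F u x1 E ∪ SS F u x2 E) (SS F u x3 E)
  have hint12 := SS_inter huni hu1 hu2 h12 (E := E)
  have hint13 := SS_inter huni hu1 hu3 h13 (E := E)
  have hint23 := SS_inter huni hu2 hu3 h23 (E := E)
  have hdistr : (SS F u x1 E ∪ SS F u x2 E) ∩ SS F u x3 E
      = (SS F u x1 E ∩ SS F u x3 E) ∪ (SS F u x2 E ∩ SS F u x3 E) :=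
    Finset.union_inter_distrib_right _ _ _
  have hint3 : ((SS F u x1 E ∪ SS F u x2 E) ∩ SS F u x3 E).card ≤ 2 := by
    rw [hdistr]
    calc _ ≤ (SS F u x1 E ∩ SS F u x3 E).card + (SS F u x2 E ∩ SS F u x3 E).card :=
          Finset.card_union_le _ _
      _ ≤ 2 := by omega
  have hbud : (SS F u x1 E ∪ SS F u x2 E ∪ SS F u x3 E).card ≤ s := by
    refine le_trans (Finset.card_le_card fun B hB => Finset.mem_filter.2 ?_) (hup E hE)
    rcases Finset.mem_union.1 hB with h | h
    · rcases Finset.mem_union.1 h with h' | h'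
      · exact SS_disj B h'
      · exact SS_disj B h'
    · exact SS_disj B h
  omega

end Stmt14

open Stmt14 in
set_option maxHeartbeats 2000000 in
/-- For every `s > 625`, any 3-uniform `[1,s]`-almost intersecting
hypergraph has at most `6s+6` edges. -/
theorem stmt_14 {α : Type*} [DecidableEq α] (s : ℕ) (hs : 625 < s)
    (F : Finset (Finset α))
    (huniform : ∀ A ∈ F, A.card = 3)
    (hai : ∀ A ∈ F, 1 ≤ (F.filter fun B => Disjoint A B).card ∧
      (F.filter fun B => Disjoint A B).card ≤ s) :
    F.card ≤ 6 * s + 6 := by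
  by_contra hcon
  push_neg at hcon
  have hn : 6 * s + 7 ≤ F.card := hcon
  clear hcon
  have hlow : ∀ A ∈ F, ∃ B ∈ F, Disjoint A B := by
    intro A hA
    have h1 : 0 < (F.filter fun B => Disjoint A B).card := (hai A hA).1
    obtain ⟨B, hB⟩ := Finset.card_pos.1 h1
    exact ⟨B, (Finset.mem_filter.1 hB).1, (Finset.mem_filter.1 hB).2⟩
  have hup : ∀ A ∈ F, (F.filter fun B => Disjoint A B).card ≤ s := fun A hA => (hai A hA).2
  -- ### Step 1: find a pair with large pair-degree
  have hFne : F.Nonempty := Finset.card_pos.1 (show 0 < F.card by omega)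
  obtain ⟨A0, hA0⟩ := hFne
  obtain ⟨B0, hB0, hdAB⟩ := hlow A0 hA0
  have hcover : F ⊆ (F.filter fun A => Disjoint A0 A) ∪ ((F.filter fun A => Disjoint B0 A) ∪
      ((A0 ×ˢ B0).biUnion fun q => F.filter fun A => q.1 ∈ A ∧ q.2 ∈ A)) := by
    intro A hA
    by_cases h1 : Disjoint A0 A
    · exact Finset.mem_union_left _ (Finset.mem_filter.2 ⟨hA, h1⟩)
    by_cases h2 : Disjoint B0 A
    · exact Finset.mem_union_right _ (Finset.mem_union_left _ (Finset.mem_filter.2 ⟨hA, h2⟩))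
    refine Finset.mem_union_right _ (Finset.mem_union_right _ ?_)
    obtain ⟨x, hxA0, hxA⟩ := Finset.not_disjoint_iff.1 h1
    obtain ⟨y, hyB0, hyA⟩ := Finset.not_disjoint_iff.1 h2
    exact Finset.mem_biUnion.2 ⟨(x, y), Finset.mem_product.2 ⟨hxA0, hyB0⟩,
      Finset.mem_filter.2 ⟨hA, hxA, hyA⟩⟩
  have hsum : F.card ≤ s + (s + ∑ q ∈ A0 ×ˢ B0, pdeg F q.1 q.2) := by
    calc F.card ≤ _ := Finset.card_le_card hcover
      _ ≤ (F.filter fun A => Disjoint A0 A).card + ((F.filter fun A => Disjoint B0 A).card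
          + ((A0 ×ˢ B0).biUnion fun q => F.filter fun A => q.1 ∈ A ∧ q.2 ∈ A).card) := by
          refine le_trans (Finset.card_union_le _ _) ?_
          exact Nat.add_le_add_left (Finset.card_union_le _ _) _
      _ ≤ s + (s + ∑ q ∈ A0 ×ˢ B0, pdeg F q.1 q.2) := by
          refine Nat.add_le_add (hup A0 hA0) (Nat.add_le_add (hup B0 hB0) ?_)
          exact Finset.card_biUnion_le
  have hbigpair : ∃ x y, x ≠ y ∧ 4 * s + 7 ≤ 9 * pdeg F x y := by
    by_contra hno
    push_neg at hno
    have hbound : ∀ q ∈ A0 ×ˢ B0, 9 * pdeg F q.1 q.2 ≤ 4 * s + 6 := by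
      intro q hq
      have hx := (Finset.mem_product.1 hq).1
      have hy := (Finset.mem_product.1 hq).2
      have hxy : q.1 ≠ q.2 := by
        intro h
        exact (Finset.disjoint_left.1 hdAB hx) (h ▸ hy)
      have := hno q.1 q.2 hxy
      omega
    have hsum2 : ∑ q ∈ A0 ×ˢ B0, 9 * pdeg F q.1 q.2 ≤ (A0 ×ˢ B0).card * (4 * s + 6) := by
      have := Finset.sum_le_card_nsmul (A0 ×ˢ B0) (fun q => 9 * pdeg F q.1 q.2)
        (4 * s + 6) hbound
      simpa using this
    have hcard9 : (A0 ×ˢ B0).card = 9 := by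
      rw [Finset.card_product, huniform A0 hA0, huniform B0 hB0]
    rw [hcard9, ← Finset.mul_sum] at hsum2
    omega
  obtain ⟨u', w', hu'w', hm9'⟩ := hbigpair
  have hpdeg_comm : ∀ x y : α, pdeg F x y = pdeg F y x := by
    intro x y
    unfold pdeg
    congr 1
    ext A
    simp [and_comm]
  -- order so that deg u ≥ deg w
  obtain ⟨u, w, huw, hm9, hdord⟩ : ∃ u w, u ≠ w ∧ 4 * s + 7 ≤ 9 * pdeg F u w ∧
      (F.filter fun A => w ∈ A).card ≤ (F.filter fun A => u ∈ A).card := by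
    rcases le_total ((F.filter fun A => w' ∈ A).card) ((F.filter fun A => u' ∈ A).card) with h | h
    · exact ⟨u', w', hu'w', hm9', h⟩
    · exact ⟨w', u', hu'w'.symm, by rwa [hpdeg_comm w' u'], h⟩
  -- ### Step 2: basic partition quantities
  set m := pdeg F u w with hm_def
  set Fu := F.filter fun A => u ∈ A with hFu_def
  set Fnu := F.filter fun A => u ∉ A with hFnu_def
  set Sp := Fu.filter fun A => w ∈ A with hSp_def
  set Ku := Fu.filter fun A => w ∉ A with hKu_def
  set Kw := Fnu.filter fun A => w ∈ A with hKw_def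
  set G := Fnu.filter fun A => w ∉ A with hG_def
  have hsplit1 : Sp.card + Ku.card = Fu.card :=
    Finset.card_filter_add_card_filter_not (p := fun A => w ∈ A)
  have hsplit2 : Kw.card + G.card = Fnu.card :=
    Finset.card_filter_add_card_filter_not (p := fun A => w ∈ A)
  have hsplit3 : Fu.card + Fnu.card = F.card :=
    Finset.card_filter_add_card_filter_not (p := fun A => u ∈ A)
  have hSpm : Sp.card = m := by
    rw [hSp_def, hFu_def, Finset.filter_filter, hm_def]
    rfl
  have hdw : (F.filter fun A => w ∈ A).card = Sp.card + Kw.card := by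
    have e1 : (F.filter fun A => w ∈ A).filter (fun A => u ∈ A) = Sp := by
      rw [hSp_def, hFu_def, Finset.filter_comm]
    have e2 : (F.filter fun A => w ∈ A).filter (fun A => u ∉ A) = Kw := by
      rw [hKw_def, hFnu_def, Finset.filter_comm]
    have := Finset.card_filter_add_card_filter_not
      (s := F.filter fun A => w ∈ A) (p := fun A => u ∈ A)
    rw [e1] at this
    rw [← this, e2]
  have hpair : ∀ x y : α, x ≠ y → pdeg F x y ≤ s + 3 := fun x y hxy =>
    pdeg_le huniform hlow hup hxy
  have hmle : m ≤ s + 3 := hpair u w huw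
  have hm279 : 279 ≤ m := by omega
  -- ### Step 3: G is small
  have hgbound : G.card ≤ s + 7 := by
    have key : ∑ A ∈ Sp, (G.filter fun B => Disjoint A B).card
        = ∑ B ∈ G, (Sp.filter fun A => Disjoint A B).card := by
      simp only [Finset.card_filter]
      exact Finset.sum_comm
    have perA : ∀ A ∈ Sp, (G.filter fun B => Disjoint A B).card ≤ s := by
      intro A hA
      have hAF : A ∈ F := Finset.mem_filter.1 (Finset.mem_filter.1 hA).1 |>.1
      refine le_trans (Finset.card_le_card ?_) (hup A hAF)
      intro B hB
      have h1 := Finset.mem_filter.1 hB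
      have h2 := Finset.mem_filter.1 h1.1
      have h3 := Finset.mem_filter.1 h2.1
      exact Finset.mem_filter.2 ⟨h3.1, h1.2⟩
    have perB : ∀ B ∈ G, Sp.card ≤ (Sp.filter fun A => Disjoint A B).card + 3 := by
      intro B hB
      have hBF : B ∈ F := (Finset.mem_filter.1 (Finset.mem_filter.1 hB).1).1
      have huB : u ∉ B := (Finset.mem_filter.1 (Finset.mem_filter.1 hB).1).2
      have hwB : w ∉ B := (Finset.mem_filter.1 hB).2
      have hsp := Finset.card_filter_add_card_filter_not
        (s := Sp) (p := fun A => Disjoint A B)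
      have hnd : (Sp.filter fun A => ¬ Disjoint A B).card ≤ 3 := by
        have eSp : Sp = F.filter fun A => u ∈ A ∧ w ∈ A := by
          rw [hSp_def, hFu_def, Finset.filter_filter]
        rw [eSp, Finset.filter_filter]
        calc (F.filter fun A => (u ∈ A ∧ w ∈ A) ∧ ¬Disjoint A B).card
            ≤ B.card := hits_pair huniform huw huB hwB
          _ = 3 := huniform B hBF
      omega
    have hup' : ∑ B ∈ G, (Sp.filter fun A => Disjoint A B).card ≤ m * s := by
      calc ∑ B ∈ G, (Sp.filter fun A => Disjoint A B).card
          = ∑ A ∈ Sp, (G.filter fun B => Disjoint A B).card := key.symm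
        _ ≤ ∑ A ∈ Sp, s := Finset.sum_le_sum perA
        _ = m * s := by rw [Finset.sum_const, smul_eq_mul, hSpm]
    have hlow' : G.card * m ≤ ∑ B ∈ G, ((Sp.filter fun A => Disjoint A B).card + 3) := by
      calc G.card * m = ∑ _B ∈ G, m := by rw [Finset.sum_const, smul_eq_mul]
        _ ≤ _ := Finset.sum_le_sum (fun B hB => by rw [← hSpm]; exact perB B hB)
    rw [Finset.sum_add_distrib, Finset.sum_const, smul_eq_mul] at hlow'
    -- now: G.card * m ≤ m * s + G.card * 3
    have hmain : G.card * m ≤ m * s + G.card * 3 := le_trans hlow' (by omega)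
    by_contra hg'
    push_neg at hg'
    have hg8 : s + 8 ≤ G.card := hg'
    obtain ⟨m', hm'⟩ : ∃ m', m = m' + 3 := ⟨m - 3, by omega⟩
    rw [hm'] at hmain
    have e1 : G.card * (m' + 3) = G.card * m' + G.card * 3 := by ring
    have e2 : (m' + 3) * s = m' * s + 3 * s := by ring
    rw [e1, e2] at hmain
    have h3 : G.card * m' ≤ m' * s + 3 * s := by omega
    have h4 : (s + 8) * m' ≤ G.card * m' := Nat.mul_le_mul_right _ hg8
    have h5 : (s + 8) * m' = s * m' + 8 * m' := by ring
    have h6 : m' * s = s * m' := by ring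
    rw [h5] at h4
    rw [h6] at h3
    have h7 : 8 * m' ≤ 3 * s := by omega
    omega
    -- ### Step 4: a partner P0 of an Sp-edge lies in G; degree bounds
  have hSpne : Sp.Nonempty := Finset.card_pos.1 (show 0 < Sp.card by omega)
  obtain ⟨E00, hE00⟩ := hSpne
  have hE00F : E00 ∈ F := (Finset.mem_filter.1 (Finset.mem_filter.1 hE00).1).1
  have huE00 : u ∈ E00 := (Finset.mem_filter.1 (Finset.mem_filter.1 hE00).1).2
  have hwE00 : w ∈ E00 := (Finset.mem_filter.1 hE00).2
  obtain ⟨P0, hP0F, hdP0⟩ := hlow E00 hE00F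
  have huP0 : u ∉ P0 := Finset.disjoint_left.1 hdP0 huE00
  have hwP0 : w ∉ P0 := Finset.disjoint_left.1 hdP0 hwE00
  have hP0G : P0 ∈ G := Finset.mem_filter.2 ⟨Finset.mem_filter.2 ⟨hP0F, huP0⟩, hwP0⟩
  -- degree of a vertex v not in some edge B is at most s + sum of pair degrees into B
  have hdegv : ∀ (v : α) (B : Finset α), B ∈ F → v ∉ B →
      (F.filter fun A => v ∈ A).card ≤ s + ∑ b ∈ B, pdeg F v b := by
    intro v B hBF hvB
    have hsp := Finset.card_filter_add_card_filter_not
      (s := F.filter fun A => v ∈ A) (p := fun A => Disjoint A B)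
    have hdisj : ((F.filter fun A => v ∈ A).filter fun A => Disjoint A B).card ≤ s := by
      refine le_trans (Finset.card_le_card ?_) (hup B hBF)
      intro A hA
      have h1 := Finset.mem_filter.1 hA
      exact Finset.mem_filter.2 ⟨(Finset.mem_filter.1 h1.1).1, h1.2.symm⟩
    have hndisj : ((F.filter fun A => v ∈ A).filter fun A => ¬Disjoint A B).card
        ≤ ∑ b ∈ B, pdeg F v b := by
      rw [Finset.filter_filter]
      exact hits_vertex
    omega
  have hdu49 : Fu.card ≤ 4 * s + 9 := by
    have h1 := hdegv u P0 hP0F huP0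
    have h2 : ∑ b ∈ P0, pdeg F u b ≤ 3 * (s + 3) := by
      have h3 : ∑ b ∈ P0, pdeg F u b ≤ P0.card * (s + 3) := by
        have := Finset.sum_le_card_nsmul P0 (fun b => pdeg F u b) (s + 3)
          (fun b hb => hpair u b (fun h => huP0 (h ▸ hb)))
        simpa using this
      rw [huniform P0 hP0F] at h3
      exact h3
    rw [hFu_def]
    omega
  have hdu2 : 5 * s + m ≤ 2 * Fu.card := by omega
  -- ### Step 5: the set X of strong pair-partners of u
  set X := (F.sup id).filter (fun x => x ≠ u ∧ s + 22 ≤ 3 * pdeg F u x) with hX_def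
  have hXintro : ∀ x : α, x ≠ u → s + 22 ≤ 3 * pdeg F u x → x ∈ X := by
    intro x hxu hx
    have hp1 : 0 < (F.filter fun A => u ∈ A ∧ x ∈ A).card := by
      have : 0 < pdeg F u x := by omega
      exact this
    obtain ⟨A, hA⟩ := Finset.card_pos.1 hp1
    have hA' := Finset.mem_filter.1 hA
    refine Finset.mem_filter.2 ⟨?_, hxu, hx⟩
    exact Finset.mem_sup.2 ⟨A, hA'.1, hA'.2.2⟩
  have hXelim : ∀ x ∈ X, x ≠ u ∧ s + 22 ≤ 3 * pdeg F u x := by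
    intro x hx
    exact (Finset.mem_filter.1 hx).2
  have hwX : w ∈ X := hXintro w (Ne.symm huw) (by omega)
  -- ### Step 6: every edge not containing u has at least two vertices in X
  have h2cov : ∀ E ∈ F, u ∉ E → 2 ≤ (E ∩ X).card := by
    intro E hEF huE
    have hdegE : Fu.card ≤ s + ∑ b ∈ E, pdeg F u b := by
      rw [hFu_def]; exact hdegv u E hEF huE
    obtain ⟨e1, e2, e3, h12, h13, h23, hEe⟩ := Finset.card_eq_three.1 (huniform E hEF)
    have he1E : e1 ∈ E := by rw [hEe]; simp
    have he2E : e2 ∈ E := by rw [hEe]; simp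
    have he3E : e3 ∈ E := by rw [hEe]; simp
    have hue1 : u ≠ e1 := fun h => huE (h ▸ he1E)
    have hue2 : u ≠ e2 := fun h => huE (h ▸ he2E)
    have hue3 : u ≠ e3 := fun h => huE (h ▸ he3E)
    have hsum3 : ∑ b ∈ E, pdeg F u b = pdeg F u e1 + (pdeg F u e2 + pdeg F u e3) := by
      rw [hEe, Finset.sum_insert (by simp [h12, h13]), Finset.sum_insert (by simp [h23]),
        Finset.sum_singleton]
    have hp1 : pdeg F u e1 ≤ s + 3 := hpair u e1 hue1
    have hp2 : pdeg F u e2 ≤ s + 3 := hpair u e2 hue2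
    have hp3 : pdeg F u e3 ≤ s + 3 := hpair u e3 hue3
    have hmk : ∀ a b : α, a ≠ b → a ∈ E → b ∈ E → a ∈ X → b ∈ X → 2 ≤ (E ∩ X).card := by
      intro a b hab haE hbE haX hbX
      have hsub : ({a, b} : Finset α) ⊆ E ∩ X := by
        intro z hz
        rcases Finset.mem_insert.1 hz with rfl | hz
        · exact Finset.mem_inter.2 ⟨haE, haX⟩
        · rw [Finset.mem_singleton] at hz
          subst hz
          exact Finset.mem_inter.2 ⟨hbE, hbX⟩
      calc 2 = ({a, b} : Finset α).card := (Finset.card_pair hab).symm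
        _ ≤ (E ∩ X).card := Finset.card_le_card hsub
    by_cases t1 : s + 22 ≤ 3 * pdeg F u e1
    · by_cases t2 : s + 22 ≤ 3 * pdeg F u e2
      · exact hmk e1 e2 h12 he1E he2E (hXintro e1 (Ne.symm hue1) t1) (hXintro e2 (Ne.symm hue2) t2)
      · by_cases t3 : s + 22 ≤ 3 * pdeg F u e3
        · exact hmk e1 e3 h13 he1E he3E (hXintro e1 (Ne.symm hue1) t1) (hXintro e3 (Ne.symm hue3) t3)
        · exfalso; omega
    · by_cases t2 : s + 22 ≤ 3 * pdeg F u e2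
      · by_cases t3 : s + 22 ≤ 3 * pdeg F u e3
        · exact hmk e2 e3 h23 he2E he3E (hXintro e2 (Ne.symm hue2) t2) (hXintro e3 (Ne.symm hue3) t3)
        · exfalso; omega
      · exfalso; omega
    -- ### Step 7: no edge avoiding u can avoid three members of X
  have hXsd : ∀ E ∈ F, u ∉ E → (X \ E).card ≤ 2 := by
    intro E hEF huE
    by_contra hbig
    push_neg at hbig
    obtain ⟨x1, hx1, x2, hx2, x3, hx3, h12, h13, h23⟩ := Finset.two_lt_card.1 hbig
    have hx1X : x1 ∈ X := (Finset.mem_sdiff.1 hx1).1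
    have hx2X : x2 ∈ X := (Finset.mem_sdiff.1 hx2).1
    have hx3X : x3 ∈ X := (Finset.mem_sdiff.1 hx3).1
    have hx1E : x1 ∉ E := (Finset.mem_sdiff.1 hx1).2
    have hx2E : x2 ∉ E := (Finset.mem_sdiff.1 hx2).2
    have hx3E : x3 ∉ E := (Finset.mem_sdiff.1 hx3).2
    have hts := three_star huniform hup h12 h13 h23
      (Ne.symm (hXelim x1 hx1X).1) (Ne.symm (hXelim x2 hx2X).1) (Ne.symm (hXelim x3 hx3X).1)
      hEF huE hx1E hx2E hx3E
    have hb1 := (hXelim x1 hx1X).2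
    have hb2 := (hXelim x2 hx2X).2
    have hb3 := (hXelim x3 hx3X).2
    omega
  -- ### Step 8: 3 ≤ |X| ≤ 5
  have hX3 : 3 ≤ X.card := by
    have h2P0 : 2 ≤ (P0 ∩ X).card := h2cov P0 hP0F huP0
    have hwP0X : w ∉ P0 ∩ X := fun h => hwP0 (Finset.mem_inter.1 h).1
    have hsub : insert w (P0 ∩ X) ⊆ X := by
      intro z hz
      rcases Finset.mem_insert.1 hz with rfl | hz
      · exact hwX
      · exact (Finset.mem_inter.1 hz).2
    calc 3 ≤ (insert w (P0 ∩ X)).card := by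
          rw [Finset.card_insert_of_notMem hwP0X]; omega
      _ ≤ X.card := Finset.card_le_card hsub
  have hX5 : X.card ≤ 5 := by
    have h1 : (X ∩ P0).card + (X \ P0).card = X.card := Finset.card_inter_add_card_sdiff X P0
    have h2 : (X ∩ P0).card ≤ 3 := by
      calc (X ∩ P0).card ≤ P0.card := Finset.card_le_card (Finset.inter_subset_right)
        _ = 3 := huniform P0 hP0F
    have h3 := hXsd P0 hP0F huP0
    omega
  -- common tools for the cases |X| = 3, 4 : every u-edge meets X
  have hUXhit : X.card ≤ 4 → ∀ E ∈ F, u ∈ E → (E ∩ X).Nonempty := by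
    intro hX4le E hEF huE'
    by_contra hne
    rw [Finset.not_nonempty_iff_eq_empty] at hne
    have hEX : ∀ t ∈ E, t ∉ X := by
      intro t htE htX
      have : t ∈ E ∩ X := Finset.mem_inter.2 ⟨htE, htX⟩
      rw [hne] at this
      exact absurd this (Finset.notMem_empty t)
    have hcard2 : (E.erase u).card = 2 := by
      rw [Finset.card_erase_of_mem huE', huniform E hEF]
    obtain ⟨y, z, hyz, hYe⟩ := Finset.card_eq_two.1 hcard2
    have hyE : y ∈ E := Finset.mem_of_mem_erase (by rw [hYe]; simp)
    have hzE : z ∈ E := Finset.mem_of_mem_erase (by rw [hYe]; simp)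
    have hycnt : ∀ y' ∈ E, (F.filter fun A => u ∉ A ∧ y' ∈ A).card ≤ 6 := by
      intro y' hy'E
      have hy'X : y' ∉ X := hEX y' hy'E
      have hinj : ∀ A ∈ (F.filter fun A => u ∉ A ∧ y' ∈ A), A = insert y' (A ∩ X) := by
        intro A hA
        have hA' := Finset.mem_filter.1 hA
        have hsub : insert y' (A ∩ X) ⊆ A := by
          intro z' hz'
          rcases Finset.mem_insert.1 hz' with rfl | hz'
          · exact hA'.2.2
          · exact (Finset.mem_inter.1 hz').1
        have hy'AX : y' ∉ A ∩ X := fun h => hy'X (Finset.mem_inter.1 h).2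
        have hAX2 : (A ∩ X).card = 2 := by
          have hge : 2 ≤ (A ∩ X).card := h2cov A hA'.1 hA'.2.1
          have hle : (A ∩ X).card ≤ 2 := by
            have hsub2 : A ∩ X ⊆ A.erase y' := by
              intro t ht
              have ht' := Finset.mem_inter.1 ht
              exact Finset.mem_erase.2 ⟨fun h => hy'X (h ▸ ht'.2), ht'.1⟩
            calc (A ∩ X).card ≤ (A.erase y').card := Finset.card_le_card hsub2
              _ = 2 := by rw [Finset.card_erase_of_mem hA'.2.2, huniform A hA'.1]
          omega
        have hc3 : (insert y' (A ∩ X)).card = 3 := by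
          rw [Finset.card_insert_of_notMem hy'AX, hAX2]
        exact (Finset.eq_of_subset_of_card_le hsub (by rw [hc3, huniform A hA'.1])).symm
      have hmaps : ∀ A ∈ (F.filter fun A => u ∉ A ∧ y' ∈ A), A ∩ X ∈ X.powersetCard 2 := by
        intro A hA
        have hA' := Finset.mem_filter.1 hA
        refine Finset.mem_powersetCard.2 ⟨Finset.inter_subset_right, ?_⟩
        have hge : 2 ≤ (A ∩ X).card := h2cov A hA'.1 hA'.2.1
        have hle : (A ∩ X).card ≤ 2 := by
          have hsub2 : A ∩ X ⊆ A.erase y' := by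
            intro t ht
            have ht' := Finset.mem_inter.1 ht
            exact Finset.mem_erase.2 ⟨fun h => hy'X (h ▸ ht'.2), ht'.1⟩
          calc (A ∩ X).card ≤ (A.erase y').card := Finset.card_le_card hsub2
            _ = 2 := by rw [Finset.card_erase_of_mem hA'.2.2, huniform A hA'.1]
        omega
      calc (F.filter fun A => u ∉ A ∧ y' ∈ A).card
          ≤ (X.powersetCard 2).card := by
            refine Finset.card_le_card_of_injOn (fun A => A ∩ X) hmaps ?_
            intro A hA A' hA' hAA
            rw [hinj A hA, hinj A' hA']
            exact congrArg (insert y') hAA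
        _ = X.card.choose 2 := Finset.card_powersetCard 2 X
        _ ≤ Nat.choose 4 2 := Nat.choose_le_choose 2 hX4le
        _ = 6 := by decide
    have hsp := Finset.card_filter_add_card_filter_not
      (s := Fnu) (p := fun A => Disjoint A E)
    have hdisj : (Fnu.filter fun A => Disjoint A E).card ≤ s := by
      refine le_trans (Finset.card_le_card ?_) (hup E hEF)
      intro A hA
      have h1 := Finset.mem_filter.1 hA
      exact Finset.mem_filter.2 ⟨(Finset.mem_filter.1 h1.1).1, h1.2.symm⟩
    have hndisj : (Fnu.filter fun A => ¬Disjoint A E).card ≤ 12 := by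
      have hsub : (Fnu.filter fun A => ¬Disjoint A E) ⊆
          (F.filter fun A => u ∉ A ∧ y ∈ A) ∪ (F.filter fun A => u ∉ A ∧ z ∈ A) := by
        intro A hA
        have h1 := Finset.mem_filter.1 hA
        have h2 := Finset.mem_filter.1 h1.1
        obtain ⟨t, htA, htE⟩ := Finset.not_disjoint_iff.1 h1.2
        have htu : t ≠ u := fun h => h2.2 (h ▸ htA)
        have htY : t ∈ E.erase u := Finset.mem_erase.2 ⟨htu, htE⟩
        rw [hYe] at htY
        rcases Finset.mem_insert.1 htY with rfl | htY
        · exact Finset.mem_union_left _ (Finset.mem_filter.2 ⟨h2.1, h2.2, htA⟩)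
        · rw [Finset.mem_singleton] at htY
          subst htY
          exact Finset.mem_union_right _ (Finset.mem_filter.2 ⟨h2.1, h2.2, htA⟩)
      calc (Fnu.filter fun A => ¬Disjoint A E).card
          ≤ _ := Finset.card_le_card hsub
        _ ≤ (F.filter fun A => u ∉ A ∧ y ∈ A).card + (F.filter fun A => u ∉ A ∧ z ∈ A).card :=
            Finset.card_union_le _ _
        _ ≤ 12 := by
            have := hycnt y hyE
            have := hycnt z hzE
            omega
    omega
  -- Fu is covered by the pair-stars at X (when |X| ≤ 4)
  have hsuma : X.card ≤ 4 → Fu.card ≤ ∑ x ∈ X, pdeg F u x := by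
    intro hX4le
    have hsub : Fu ⊆ X.biUnion (fun x => F.filter fun A => u ∈ A ∧ x ∈ A) := by
      intro A hA
      have hA' := Finset.mem_filter.1 hA
      obtain ⟨x, hx⟩ := hUXhit hX4le A hA'.1 hA'.2
      have hx' := Finset.mem_inter.1 hx
      exact Finset.mem_biUnion.2 ⟨x, hx'.2, Finset.mem_filter.2 ⟨hA'.1, hA'.2, hx'.1⟩⟩
    exact le_trans (Finset.card_le_card hsub) Finset.card_biUnion_le
  -- ### case analysis on |X|
  have hX345 : X.card = 3 ∨ X.card = 4 ∨ X.card = 5 := by omega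
  rcases hX345 with hXc | hXc | hXc
  ·
    -- |X| = 3 : the final counting
    obtain ⟨x1, x2, x3, h12, h13, h23, hXe⟩ := Finset.card_eq_three.1 hXc
    have hX4le : X.card ≤ 4 := by omega
    -- no u-edge contains two members of X
    have hno2 : ∀ A ∈ F, u ∈ A → (A ∩ X).card ≤ 1 := by
      intro A hAF huA
      by_contra hbig
      push_neg at hbig
      obtain ⟨P, hPF, hdisj⟩ := hlow A hAF
      have huP : u ∉ P := Finset.disjoint_left.1 hdisj huA
      have h2P : 2 ≤ (P ∩ X).card := h2cov P hPF huP
      have hdisj2 : Disjoint (A ∩ X) (P ∩ X) :=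
        Finset.disjoint_of_subset_left Finset.inter_subset_left
          (Finset.disjoint_of_subset_right Finset.inter_subset_left hdisj)
      have hsub : (A ∩ X) ∪ (P ∩ X) ⊆ X :=
        Finset.union_subset Finset.inter_subset_right Finset.inter_subset_right
      have := Finset.card_union_of_disjoint hdisj2
      have hle := Finset.card_le_card hsub
      rw [this] at hle
      omega
    -- no non-u-edge contains three members of X
    have hno3 : ∀ A ∈ F, u ∉ A → (A ∩ X).card ≤ 2 := by
      intro A hAF huA
      by_contra hbig
      push_neg at hbig
      have hXsubA : X ⊆ A := by
        have hsub : A ∩ X ⊆ X := Finset.inter_subset_right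
        have : A ∩ X = X := Finset.eq_of_subset_of_card_le hsub (by omega)
        rw [← this]
        exact Finset.inter_subset_left
      obtain ⟨P, hPF, hdisj⟩ := hlow A hAF
      have hPX : ∀ t, t ∈ P ∩ X → False := by
        intro t ht
        have ht' := Finset.mem_inter.1 ht
        exact Finset.disjoint_left.1 hdisj (hXsubA ht'.2) ht'.1
      by_cases huP : u ∈ P
      · obtain ⟨t, ht⟩ := hUXhit hX4le P hPF huP
        exact hPX t ht
      · have h2P : 2 ≤ (P ∩ X).card := h2cov P hPF huP
        obtain ⟨t, ht⟩ := Finset.card_pos.1 (show 0 < (P ∩ X).card by omega)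
        exact hPX t ht
    -- the key bound for one "couple"
    have main3 : ∀ p q r : α, X = {p, q, r} → p ≠ q → p ≠ r → q ≠ r →
        pdeg F u p + (F.filter fun A => u ∉ A ∧ q ∈ A ∧ r ∈ A).card ≤ 2 * s + 2 := by
      intro p q r hXeq hpq hpr hqr
      have hpX : p ∈ X := by rw [hXeq]; simp
      have hqX : q ∈ X := by rw [hXeq]; simp
      have hrX : r ∈ X := by rw [hXeq]; simp
      have hpu : p ≠ u := (hXelim p hpX).1
      have hap : s + 22 ≤ 3 * pdeg F u p := (hXelim p hpX).2
      have hap1 : 0 < (F.filter fun A => u ∈ A ∧ p ∈ A).card := by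
        have : 0 < pdeg F u p := by omega
        exact this
      obtain ⟨Ai, hAi⟩ := Finset.card_pos.1 hap1
      have hAiF : Ai ∈ F := (Finset.mem_filter.1 hAi).1
      have huAi : u ∈ Ai := (Finset.mem_filter.1 hAi).2.1
      have hpAi : p ∈ Ai := (Finset.mem_filter.1 hAi).2.2
      -- partner of Ai gives a (q,r)-edge
      obtain ⟨P, hPF, hdisjP⟩ := hlow Ai hAiF
      have huP : u ∉ P := Finset.disjoint_left.1 hdisjP huAi
      have hpP : p ∉ P := Finset.disjoint_left.1 hdisjP hpAi
      have hPXsub : P ∩ X ⊆ ({q, r} : Finset α) := by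
        intro t ht
        have ht' := Finset.mem_inter.1 ht
        have htX : t ∈ ({p, q, r} : Finset α) := by rw [← hXeq]; exact ht'.2
        simp only [Finset.mem_insert, Finset.mem_singleton] at htX ⊢
        rcases htX with rfl | h | h
        · exact absurd ht'.1 hpP
        · exact Or.inl h
        · exact Or.inr h
      have hPX : P ∩ X = ({q, r} : Finset α) := by
        refine Finset.eq_of_subset_of_card_le hPXsub ?_
        rw [Finset.card_pair hqr]
        exact h2cov P hPF huP
      have hqP : q ∈ P := by
        have : q ∈ P ∩ X := by rw [hPX]; simp
        exact (Finset.mem_inter.1 this).1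
      have hrP : r ∈ P := by
        have : r ∈ P ∩ X := by rw [hPX]; simp
        exact (Finset.mem_inter.1 this).1
      have hq1 : 0 < (F.filter fun A => u ∉ A ∧ q ∈ A ∧ r ∈ A).card := by
        refine Finset.card_pos.2 ⟨P, Finset.mem_filter.2 ⟨hPF, huP, hqP, hrP⟩⟩
      -- third vertex r0 of Ai
      have hAiX1 : (Ai ∩ X).card ≤ 1 := hno2 Ai hAiF huAi
      have hAiI : Ai ∩ insert u X = ({u, p} : Finset α) := by
        apply Finset.Subset.antisymm
        · intro t ht
          have ht' := Finset.mem_inter.1 ht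
          rcases Finset.mem_insert.1 ht'.2 with rfl | htX
          · simp
          · have htAX : t ∈ Ai ∩ X := Finset.mem_inter.2 ⟨ht'.1, htX⟩
            have hpAX : p ∈ Ai ∩ X := Finset.mem_inter.2 ⟨hpAi, hpX⟩
            have := Finset.card_le_one.1 hAiX1 t htAX p hpAX
            simp [this]
        · intro t ht
          rcases Finset.mem_insert.1 ht with rfl | ht
          · exact Finset.mem_inter.2 ⟨huAi, Finset.mem_insert_self _ _⟩
          · rw [Finset.mem_singleton] at ht
            subst ht
            exact Finset.mem_inter.2 ⟨hpAi, Finset.mem_insert_of_mem hpX⟩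
      have hAisd : (Ai \ insert u X).card = 1 := by
        have h1 := Finset.card_inter_add_card_sdiff Ai (insert u X)
        rw [hAiI] at h1
        rw [Finset.card_pair (Ne.symm hpu)] at h1
        rw [huniform Ai hAiF] at h1
        omega
      obtain ⟨r0, hr0⟩ := Finset.card_eq_one.1 hAisd
      have hr0Ai : r0 ∈ Ai := by
        have : r0 ∈ Ai \ insert u X := by rw [hr0]; simp
        exact (Finset.mem_sdiff.1 this).1
      have hr0nI : r0 ∉ insert u X := by
        have : r0 ∈ Ai \ insert u X := by rw [hr0]; simp
        exact (Finset.mem_sdiff.1 this).2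
      have hr0X : r0 ∉ X := fun h => hr0nI (Finset.mem_insert_of_mem h)
      have hr0u : r0 ≠ u := fun h => hr0nI (h ▸ Finset.mem_insert_self u X)
      -- edges in the (q,r)-star meeting Ai are unique
      have hqr_unique : ((F.filter fun A => u ∉ A ∧ q ∈ A ∧ r ∈ A).filter
          fun B => ¬ Disjoint B Ai).card ≤ 1 := by
        rw [Finset.card_le_one]
        have hkey : ∀ B ∈ (F.filter fun A => u ∉ A ∧ q ∈ A ∧ r ∈ A).filter
            (fun B => ¬ Disjoint B Ai), B = insert q (insert r {r0}) := by
          intro B hB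
          have hB1 := Finset.mem_filter.1 hB
          have hB2 := Finset.mem_filter.1 hB1.1
          obtain ⟨hBF, huB, hqB, hrB⟩ := hB2
          obtain ⟨t, htB, htAi⟩ := Finset.not_disjoint_iff.1 hB1.2
          have htu : t ≠ u := fun h => huB (h ▸ htB)
          have htX : t ∉ X := by
            intro htX
            have htAX : t ∈ Ai ∩ X := Finset.mem_inter.2 ⟨htAi, htX⟩
            have hpAX : p ∈ Ai ∩ X := Finset.mem_inter.2 ⟨hpAi, hpX⟩
            have htp := Finset.card_le_one.1 hAiX1 t htAX p hpAX
            rw [htp] at htB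
            -- p ∈ B now, so B ∩ X has 3 elements
            have hsub3 : ({p, q, r} : Finset α) ⊆ B ∩ X := by
              intro z hz
              simp only [Finset.mem_insert, Finset.mem_singleton] at hz
              rcases hz with rfl | rfl | rfl
              · exact Finset.mem_inter.2 ⟨htB, hpX⟩
              · exact Finset.mem_inter.2 ⟨hqB, hqX⟩
              · exact Finset.mem_inter.2 ⟨hrB, hrX⟩
            have hc3 : ({p, q, r} : Finset α).card = 3 := by
              rw [Finset.card_insert_of_notMem, Finset.card_insert_of_notMem,
                Finset.card_singleton]
              · simp [hqr]
              · simp [hpq, hpr]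
            have := Finset.card_le_card hsub3
            have := hno3 B hBF huB
            omega
          have htI : t ∈ Ai \ insert u X := by
            refine Finset.mem_sdiff.2 ⟨htAi, ?_⟩
            intro h
            rcases Finset.mem_insert.1 h with rfl | h
            · exact htu rfl
            · exact htX h
          rw [hr0] at htI
          rw [Finset.mem_singleton] at htI
          subst htI
          -- B = {q, r, t}
          have hsub : insert q (insert r {t}) ⊆ B := by
            intro z hz
            simp only [Finset.mem_insert, Finset.mem_singleton] at hz
            rcases hz with rfl | rfl | rfl <;> assumption
          have hqt : q ≠ t := fun h => htX (h ▸ hqX)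
          have hrt : r ≠ t := fun h => htX (h ▸ hrX)
          have hc3 : (insert q (insert r {t}) : Finset α).card = 3 := by
            rw [Finset.card_insert_of_notMem, Finset.card_insert_of_notMem,
              Finset.card_singleton]
            · simp [hrt]
            · simp [hqr, hqt]
          exact (Finset.eq_of_subset_of_card_le hsub (by rw [hc3, huniform B hBF])).symm
        intro a ha b hb
        rw [hkey a ha, hkey b hb]
      have hqr_budget : ((F.filter fun A => u ∉ A ∧ q ∈ A ∧ r ∈ A).filter
          fun B => Disjoint B Ai).card ≤ s := by
        refine le_trans (Finset.card_le_card ?_) (hup Ai hAiF)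
        intro B hB
        have hB1 := Finset.mem_filter.1 hB
        have hB2 := Finset.mem_filter.1 hB1.1
        exact Finset.mem_filter.2 ⟨hB2.1, hB1.2.symm⟩
      have hqle : (F.filter fun A => u ∉ A ∧ q ∈ A ∧ r ∈ A).card ≤ s + 1 := by
        have := Finset.card_filter_add_card_filter_not
          (s := F.filter fun A => u ∉ A ∧ q ∈ A ∧ r ∈ A) (p := fun B => Disjoint B Ai)
        omega
      -- now bound the p-star using an edge of the (q,r)-star
      obtain ⟨Bq, hBq⟩ := Finset.card_pos.1 hq1
      have hBqF : Bq ∈ F := (Finset.mem_filter.1 hBq).1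
      have huBq : u ∉ Bq := (Finset.mem_filter.1 hBq).2.1
      have hqBq : q ∈ Bq := (Finset.mem_filter.1 hBq).2.2.1
      have hrBq : r ∈ Bq := (Finset.mem_filter.1 hBq).2.2.2
      have hpBq : p ∉ Bq := by
        intro hpBq
        have hsub3 : ({p, q, r} : Finset α) ⊆ Bq ∩ X := by
          intro z hz
          simp only [Finset.mem_insert, Finset.mem_singleton] at hz
          rcases hz with rfl | rfl | rfl
          · exact Finset.mem_inter.2 ⟨hpBq, hpX⟩
          · exact Finset.mem_inter.2 ⟨hqBq, hqX⟩
          · exact Finset.mem_inter.2 ⟨hrBq, hrX⟩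
        have hc3 : ({p, q, r} : Finset α).card = 3 := by
          rw [Finset.card_insert_of_notMem, Finset.card_insert_of_notMem,
            Finset.card_singleton]
          · simp [hqr]
          · simp [hpq, hpr]
        have := Finset.card_le_card hsub3
        have := hno3 Bq hBqF huBq
        omega
      have hBqX : Bq ∩ X = ({q, r} : Finset α) := by
        have hsubqr : ({q, r} : Finset α) ⊆ Bq ∩ X := by
          intro z hz
          rcases Finset.mem_insert.1 hz with rfl | hz
          · exact Finset.mem_inter.2 ⟨hqBq, hqX⟩
          · rw [Finset.mem_singleton] at hz
            subst hz
            exact Finset.mem_inter.2 ⟨hrBq, hrX⟩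
        refine (Finset.eq_of_subset_of_card_le hsubqr ?_).symm
        rw [Finset.card_pair hqr]
        exact hno3 Bq hBqF huBq
      have hBqsd : (Bq \ X).card = 1 := by
        have h1 := Finset.card_inter_add_card_sdiff Bq X
        rw [hBqX, Finset.card_pair hqr, huniform Bq hBqF] at h1
        omega
      obtain ⟨t0, ht0⟩ := Finset.card_eq_one.1 hBqsd
      have ht0Bq : t0 ∈ Bq := by
        have : t0 ∈ Bq \ X := by rw [ht0]; simp
        exact (Finset.mem_sdiff.1 this).1
      have ht0X : t0 ∉ X := by
        have : t0 ∈ Bq \ X := by rw [ht0]; simp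
        exact (Finset.mem_sdiff.1 this).2
      have hp_unique : ((F.filter fun A => u ∈ A ∧ p ∈ A).filter
          fun A => ¬ Disjoint A Bq).card ≤ 1 := by
        rw [Finset.card_le_one]
        have hkey : ∀ A ∈ (F.filter fun A => u ∈ A ∧ p ∈ A).filter
            (fun A => ¬ Disjoint A Bq), A = insert u (insert p {t0}) := by
          intro A hA
          have hA1 := Finset.mem_filter.1 hA
          have hA2 := Finset.mem_filter.1 hA1.1
          obtain ⟨hAF, huA, hpA⟩ := hA2
          obtain ⟨t, htA, htBq⟩ := Finset.not_disjoint_iff.1 hA1.2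
          have htu : t ≠ u := fun h => huBq (h ▸ htBq)
          have htX : t ∉ X := by
            intro htX
            have htAX : t ∈ A ∩ X := Finset.mem_inter.2 ⟨htA, htX⟩
            have hpAX : p ∈ A ∩ X := Finset.mem_inter.2 ⟨hpA, hpX⟩
            have htp := Finset.card_le_one.1 (hno2 A hAF huA) t htAX p hpAX
            rw [htp] at htBq
            exact hpBq htBq
          have htsd : t ∈ Bq \ X := Finset.mem_sdiff.2 ⟨htBq, htX⟩
          rw [ht0, Finset.mem_singleton] at htsd
          subst htsd
          have hsub : insert u (insert p {t}) ⊆ A := by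
            intro z hz
            simp only [Finset.mem_insert, Finset.mem_singleton] at hz
            rcases hz with rfl | rfl | rfl <;> assumption
          have hpt : p ≠ t := fun h => htX (h ▸ hpX)
          have hc3 : (insert u (insert p {t}) : Finset α).card = 3 := by
            rw [Finset.card_insert_of_notMem, Finset.card_insert_of_notMem,
              Finset.card_singleton]
            · simp [hpt]
            · simp [Ne.symm hpu, htu.symm]
          exact (Finset.eq_of_subset_of_card_le hsub (by rw [hc3, huniform A hAF])).symm
        intro a ha b hb
        rw [hkey a ha, hkey b hb]
      have hp_budget : ((F.filter fun A => u ∈ A ∧ p ∈ A).filter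
          fun A => Disjoint A Bq).card ≤ s := by
        refine le_trans (Finset.card_le_card ?_) (hup Bq hBqF)
        intro B hB
        have hB1 := Finset.mem_filter.1 hB
        have hB2 := Finset.mem_filter.1 hB1.1
        exact Finset.mem_filter.2 ⟨hB2.1, hB1.2.symm⟩
      have hale : pdeg F u p ≤ s + 1 := by
        have := Finset.card_filter_add_card_filter_not
          (s := F.filter fun A => u ∈ A ∧ p ∈ A) (p := fun A => Disjoint A Bq)
        unfold pdeg
        omega
      omega
    -- partition of Fu into the three u-stars
    have hc12 : ({x1, x2} : Finset α).card = 2 := Finset.card_pair h12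
    have hc13 : ({x1, x3} : Finset α).card = 2 := Finset.card_pair h13
    have hc23 : ({x2, x3} : Finset α).card = 2 := Finset.card_pair h23
    have hFu3 : Fu.card = pdeg F u x1 + pdeg F u x2 + pdeg F u x3 := by
      have hcup : Fu = (F.filter fun A => u ∈ A ∧ x1 ∈ A) ∪
          ((F.filter fun A => u ∈ A ∧ x2 ∈ A) ∪ (F.filter fun A => u ∈ A ∧ x3 ∈ A)) := by
        ext A
        simp only [hFu_def, Finset.mem_union, Finset.mem_filter]
        constructor
        · rintro ⟨hAF, huA⟩
          obtain ⟨x, hx⟩ := hUXhit hX4le A hAF huA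
          have hx' := Finset.mem_inter.1 hx
          have hxX : x ∈ ({x1, x2, x3} : Finset α) := by rw [← hXe]; exact hx'.2
          simp only [Finset.mem_insert, Finset.mem_singleton] at hxX
          rcases hxX with rfl | rfl | rfl
          · exact Or.inl ⟨hAF, huA, hx'.1⟩
          · exact Or.inr (Or.inl ⟨hAF, huA, hx'.1⟩)
          · exact Or.inr (Or.inr ⟨hAF, huA, hx'.1⟩)
        · rintro (⟨h1, h2, h3⟩ | ⟨h1, h2, h3⟩ | ⟨h1, h2, h3⟩) <;> exact ⟨h1, h2⟩
      have hdgen : ∀ a b : α, a ∈ X → b ∈ X → a ≠ b →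
          Disjoint (F.filter fun A => u ∈ A ∧ a ∈ A) (F.filter fun A => u ∈ A ∧ b ∈ A) := by
        intro a b haX hbX hab
        rw [Finset.disjoint_left]
        intro A hA hA'
        have h1 := Finset.mem_filter.1 hA
        have h2 := Finset.mem_filter.1 hA'
        have hsub : ({a, b} : Finset α) ⊆ A ∩ X := by
          intro z hz
          rcases Finset.mem_insert.1 hz with rfl | hz
          · exact Finset.mem_inter.2 ⟨h1.2.2, haX⟩
          · rw [Finset.mem_singleton] at hz
            subst hz
            exact Finset.mem_inter.2 ⟨h2.2.2, hbX⟩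
        have hcard := Finset.card_le_card hsub
        rw [Finset.card_pair hab] at hcard
        have := hno2 A h1.1 h1.2.1
        omega
      have hx1X : x1 ∈ X := by rw [hXe]; simp
      have hx2X : x2 ∈ X := by rw [hXe]; simp
      have hx3X : x3 ∈ X := by rw [hXe]; simp
      rw [hcup, Finset.card_union_of_disjoint, Finset.card_union_of_disjoint]
      · unfold pdeg; ring
      · exact hdgen x2 x3 hx2X hx3X h23
      · rw [Finset.disjoint_union_right]
        exact ⟨hdgen x1 x2 hx1X hx2X h12, hdgen x1 x3 hx1X hx3X h13⟩
    -- partition of Fnu into the three pair-stars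
    have hFnu3 : Fnu.card = (F.filter fun A => u ∉ A ∧ x2 ∈ A ∧ x3 ∈ A).card
        + (F.filter fun A => u ∉ A ∧ x1 ∈ A ∧ x3 ∈ A).card
        + (F.filter fun A => u ∉ A ∧ x1 ∈ A ∧ x2 ∈ A).card := by
      have hcup : Fnu = (F.filter fun A => u ∉ A ∧ x2 ∈ A ∧ x3 ∈ A) ∪
          ((F.filter fun A => u ∉ A ∧ x1 ∈ A ∧ x3 ∈ A) ∪
            (F.filter fun A => u ∉ A ∧ x1 ∈ A ∧ x2 ∈ A)) := by
        ext A
        simp only [hFnu_def, Finset.mem_union, Finset.mem_filter]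
        constructor
        · rintro ⟨hAF, huA⟩
          have h2le : 2 ≤ (A ∩ X).card := h2cov A hAF huA
          have h1lt : 1 < (A ∩ X).card := by omega
          obtain ⟨a, ha, b, hb, hab⟩ := Finset.one_lt_card.1 h1lt
          have hmem : ∀ t ∈ A ∩ X, (t = x1 ∨ t = x2 ∨ t = x3) ∧ t ∈ A := by
            intro t ht
            have ht' := Finset.mem_inter.1 ht
            have : t ∈ ({x1, x2, x3} : Finset α) := by rw [← hXe]; exact ht'.2
            simp only [Finset.mem_insert, Finset.mem_singleton] at this
            exact ⟨this, ht'.1⟩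
          obtain ⟨hacase, haA⟩ := hmem a ha
          obtain ⟨hbcase, hbA⟩ := hmem b hb
          rcases hacase with h | h | h <;> rcases hbcase with h' | h' | h'
          · exact absurd (h.trans h'.symm) hab
          · exact Or.inr (Or.inr ⟨hAF, huA, h ▸ haA, h' ▸ hbA⟩)
          · exact Or.inr (Or.inl ⟨hAF, huA, h ▸ haA, h' ▸ hbA⟩)
          · exact Or.inr (Or.inr ⟨hAF, huA, h' ▸ hbA, h ▸ haA⟩)
          · exact absurd (h.trans h'.symm) hab
          · exact Or.inl ⟨hAF, huA, h ▸ haA, h' ▸ hbA⟩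
          · exact Or.inr (Or.inl ⟨hAF, huA, h' ▸ hbA, h ▸ haA⟩)
          · exact Or.inl ⟨hAF, huA, h' ▸ hbA, h ▸ haA⟩
          · exact absurd (h.trans h'.symm) hab
        · rintro (⟨h1, h2, h3⟩ | ⟨h1, h2, h3⟩ | ⟨h1, h2, h3⟩) <;> exact ⟨h1, h2⟩
      have hdgen : ∀ a b c d : α, a ∈ X → b ∈ X → c ∈ X → d ∈ X → a ≠ b → c ≠ d →
          (¬ (({a, b} : Finset α) = {c, d})) →
          Disjoint (F.filter fun A => u ∉ A ∧ a ∈ A ∧ b ∈ A)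
            (F.filter fun A => u ∉ A ∧ c ∈ A ∧ d ∈ A) := by
        intro a b c d haX hbX hcX hdX hab hcd hne
        rw [Finset.disjoint_left]
        intro A hA hA'
        have h1 := Finset.mem_filter.1 hA
        have h2 := Finset.mem_filter.1 hA'
        have hsub : ({a, b} : Finset α) ∪ ({c, d} : Finset α) ⊆ A ∩ X := by
          intro z hz
          rcases Finset.mem_union.1 hz with hz | hz
          · rcases Finset.mem_insert.1 hz with rfl | hz
            · exact Finset.mem_inter.2 ⟨h1.2.2.1, haX⟩
            · rw [Finset.mem_singleton] at hz
              subst hz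
              exact Finset.mem_inter.2 ⟨h1.2.2.2, hbX⟩
          · rcases Finset.mem_insert.1 hz with rfl | hz
            · exact Finset.mem_inter.2 ⟨h2.2.2.1, hcX⟩
            · rw [Finset.mem_singleton] at hz
              subst hz
              exact Finset.mem_inter.2 ⟨h2.2.2.2, hdX⟩
        have h3le : 3 ≤ (({a, b} : Finset α) ∪ ({c, d} : Finset α)).card := by
          have hIle : ((({a, b} : Finset α)) ∩ ({c, d} : Finset α)).card ≤ 1 := by
            by_contra hI
            push_neg at hI
            have e1 : (({a, b} : Finset α)) ∩ ({c, d} : Finset α) = {a, b} :=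
              Finset.eq_of_subset_of_card_le Finset.inter_subset_left
                (by rw [Finset.card_pair hab]; omega)
            have e2 : (({a, b} : Finset α)) ∩ ({c, d} : Finset α) = {c, d} :=
              Finset.eq_of_subset_of_card_le Finset.inter_subset_right
                (by rw [Finset.card_pair hcd]; omega)
            exact hne (e1.symm.trans e2)
          have hui := Finset.card_union_add_card_inter (({a, b} : Finset α)) ({c, d} : Finset α)
          rw [Finset.card_pair hab, Finset.card_pair hcd] at hui
          omega
        have hcard := Finset.card_le_card hsub
        have := hno3 A h1.1 h1.2.1
        omega
      have hx1X : x1 ∈ X := by rw [hXe]; simp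
      have hx2X : x2 ∈ X := by rw [hXe]; simp
      have hx3X : x3 ∈ X := by rw [hXe]; simp
      have hpairne1 : ¬ (({x2, x3} : Finset α) = {x1, x3}) := by
        intro h
        have : x1 ∈ ({x2, x3} : Finset α) := by rw [h]; simp
        simp only [Finset.mem_insert, Finset.mem_singleton] at this
        rcases this with h' | h'
        · exact h12 h'
        · exact h13 h'
      have hpairne2 : ¬ (({x2, x3} : Finset α) = {x1, x2}) := by
        intro h
        have : x1 ∈ ({x2, x3} : Finset α) := by rw [h]; simp
        simp only [Finset.mem_insert, Finset.mem_singleton] at this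
        rcases this with h' | h'
        · exact h12 h'
        · exact h13 h'
      have hpairne3 : ¬ (({x1, x3} : Finset α) = {x1, x2}) := by
        intro h
        have : x2 ∈ ({x1, x3} : Finset α) := by rw [h]; simp
        simp only [Finset.mem_insert, Finset.mem_singleton] at this
        rcases this with h' | h'
        · exact h12 h'.symm
        · exact h23 h'
      rw [hcup, Finset.card_union_of_disjoint, Finset.card_union_of_disjoint]
      · ring
      · exact hdgen x1 x3 x1 x2 hx1X hx3X hx1X hx2X h13 h12 hpairne3
      · rw [Finset.disjoint_union_right]
        exact ⟨hdgen x2 x3 x1 x3 hx2X hx3X hx1X hx3X h23 h13 hpairne1,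
          hdgen x2 x3 x1 x2 hx2X hx3X hx1X hx2X h23 h12 hpairne2⟩
    -- the three couple bounds
    have hXe2 : X = ({x2, x1, x3} : Finset α) := by
      rw [hXe]; ext t; simp; tauto
    have hXe3 : X = ({x3, x1, x2} : Finset α) := by
      rw [hXe]; ext t; simp; tauto
    have hcpl1 := main3 x1 x2 x3 hXe h12 h13 h23
    have hcpl2 := main3 x2 x1 x3 hXe2 (Ne.symm h12) h23 h13
    have hcpl3 := main3 x3 x1 x2 hXe3 (Ne.symm h13) (Ne.symm h23) h12
    omega
  ·
    -- |X| = 4 : impossible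
    have hX4le : X.card ≤ 4 := by omega
    have hsuma4 : Fu.card ≤ ∑ x ∈ X, pdeg F u x := hsuma hX4le
    set ex2 := Fnu.filter (fun E => (E ∩ X).card = 2) with hex2_def
    have hFnusplit : ex2.card + (Fnu.filter (fun E => ¬ (E ∩ X).card = 2)).card = Fnu.card :=
      Finset.card_filter_add_card_filter_not (p := fun E => (E ∩ X).card = 2)
    have hex3 : (Fnu.filter (fun E => ¬ (E ∩ X).card = 2)).card ≤ 4 := by
      have hsub : (Fnu.filter (fun E => ¬ (E ∩ X).card = 2)) ⊆ X.powersetCard 3 := by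
        intro A hA
        have hA1 := Finset.mem_filter.1 hA
        have hA2 := Finset.mem_filter.1 hA1.1
        have h2le : 2 ≤ (A ∩ X).card := h2cov A hA2.1 hA2.2
        have hle3 : (A ∩ X).card ≤ 3 := by
          calc (A ∩ X).card ≤ A.card := Finset.card_le_card Finset.inter_subset_left
            _ = 3 := huniform A hA2.1
        have h3 : (A ∩ X).card = 3 := by omega
        have heq : A ∩ X = A := Finset.eq_of_subset_of_card_le Finset.inter_subset_left
          (by rw [huniform A hA2.1]; omega)
        refine Finset.mem_powersetCard.2 ⟨?_, huniform A hA2.1⟩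
        rw [← heq]
        exact Finset.inter_subset_right
      calc (Fnu.filter (fun E => ¬ (E ∩ X).card = 2)).card
          ≤ (X.powersetCard 3).card := Finset.card_le_card hsub
        _ = X.card.choose 3 := Finset.card_powersetCard 3 X
        _ = 4 := by rw [hXc]; decide
    -- basic facts about members of ex2
    have hex2mem : ∀ E ∈ ex2, E ∈ F ∧ u ∉ E ∧ (E ∩ X).card = 2 := by
      intro E hE
      have h1 := Finset.mem_filter.1 hE
      have h2 := Finset.mem_filter.1 h1.1
      exact ⟨h2.1, h2.2, h1.2⟩
    have hsdcard : ∀ E ∈ ex2, (X \ E).card = 2 := by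
      intro E hE
      obtain ⟨-, -, h2⟩ := hex2mem E hE
      have h1 := Finset.card_inter_add_card_sdiff X E
      rw [Finset.inter_comm] at h1
      omega
    -- the couple inequality
    have hcouple : ∀ E ∈ ex2, ∑ x ∈ X \ E, pdeg F u x ≤ s + 7 := by
      intro E hE
      obtain ⟨hEF, huE, -⟩ := hex2mem E hE
      obtain ⟨c, d, hcd, hcdE⟩ := Finset.card_eq_two.1 (hsdcard E hE)
      have hcX : c ∈ X := by
        have : c ∈ X \ E := by rw [hcdE]; simp
        exact (Finset.mem_sdiff.1 this).1
      have hdX : d ∈ X := by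
        have : d ∈ X \ E := by rw [hcdE]; simp
        exact (Finset.mem_sdiff.1 this).1
      have hcE : c ∉ E := by
        have : c ∈ X \ E := by rw [hcdE]; simp
        exact (Finset.mem_sdiff.1 this).2
      have hdE : d ∉ E := by
        have : d ∈ X \ E := by rw [hcdE]; simp
        exact (Finset.mem_sdiff.1 this).2
      have hts := two_star huniform hup hcd (Ne.symm (hXelim c hcX).1) (Ne.symm (hXelim d hdX).1)
        hEF huE hcE hdE
      rw [hcdE, Finset.sum_pair hcd]
      exact hts
    by_cases hcaseA : ∃ E ∈ ex2, ∃ E' ∈ ex2, Disjoint (E ∩ X) (E' ∩ X)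
    · -- CASE A : two ex2-edges with complementary X-pairs
      obtain ⟨E, hE, E', hE', hdisjEE⟩ := hcaseA
      have hcompl : E' ∩ X ⊆ X \ E := by
        intro t ht
        have ht' := Finset.mem_inter.1 ht
        refine Finset.mem_sdiff.2 ⟨ht'.2, ?_⟩
        intro htE
        exact Finset.disjoint_left.1 hdisjEE (Finset.mem_inter.2 ⟨htE, ht'.2⟩) ht
      have hcompl2 : E ∩ X ⊆ X \ E' := by
        intro t ht
        have ht' := Finset.mem_inter.1 ht
        refine Finset.mem_sdiff.2 ⟨ht'.2, ?_⟩
        intro htE'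
        exact Finset.disjoint_left.1 hdisjEE ht (Finset.mem_inter.2 ⟨htE', ht'.2⟩)
      have he1 : E' ∩ X = X \ E := Finset.eq_of_subset_of_card_le hcompl
        (by rw [hsdcard E hE, (hex2mem E' hE').2.2])
      have he2 : E ∩ X = X \ E' := Finset.eq_of_subset_of_card_le hcompl2
        (by rw [hsdcard E' hE', (hex2mem E hE).2.2])
      have hsplitX : ∑ x ∈ X \ (E ∩ X), pdeg F u x + ∑ x ∈ E ∩ X, pdeg F u x
          = ∑ x ∈ X, pdeg F u x :=
        Finset.sum_sdiff Finset.inter_subset_right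
      have hsd_eq : X \ (E ∩ X) = X \ E := by
        ext t
        simp only [Finset.mem_sdiff, Finset.mem_inter]
        tauto
      rw [hsd_eq] at hsplitX
      have hb1 := hcouple E hE
      have hb2 := hcouple E' hE'
      rw [← he2] at hb2
      -- total sum ≤ 2s + 14
      have htot : ∑ x ∈ X, pdeg F u x ≤ 2 * s + 14 := by omega
      omega
    · -- CASE B : all X-pairs of ex2-edges pairwise intersect
      push_neg at hcaseA
      rcases ex2.eq_empty_or_nonempty with hex2e | ⟨E0, hE0⟩
      · rw [hex2e] at hFnusplit
        simp at hFnusplit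
        omega
      -- star case handler
      have hstarcase : ∀ c ∈ X, (∀ E ∈ ex2, c ∈ E) → False := by
        intro c hcX hstar
        have hsecond : ∀ E ∈ ex2, ∃ e, e ∈ X.erase c ∧ e ∈ E ∧ E ∩ X = {c, e} := by
          intro E hE
          obtain ⟨hEF, huE, h2⟩ := hex2mem E hE
          have hcEX : c ∈ E ∩ X := Finset.mem_inter.2 ⟨hstar E hE, hcX⟩
          have herase : ((E ∩ X).erase c).card = 1 := by
            rw [Finset.card_erase_of_mem hcEX, h2]
          obtain ⟨e, he⟩ := Finset.card_eq_one.1 herase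
          have heEX : e ∈ (E ∩ X).erase c := by rw [he]; simp
          have hec : e ≠ c := (Finset.mem_erase.1 heEX).1
          have heE : e ∈ E := (Finset.mem_inter.1 (Finset.mem_of_mem_erase heEX)).1
          have heX : e ∈ X := (Finset.mem_inter.1 (Finset.mem_of_mem_erase heEX)).2
          refine ⟨e, Finset.mem_erase.2 ⟨hec, heX⟩, heE, ?_⟩
          have hsub : ({c, e} : Finset α) ⊆ E ∩ X := by
            intro z hz
            rcases Finset.mem_insert.1 hz with rfl | hz
            · exact hcEX
            · rw [Finset.mem_singleton] at hz
              subst hz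
              exact Finset.mem_inter.2 ⟨heE, heX⟩
          exact (Finset.eq_of_subset_of_card_le hsub
            (by rw [Finset.card_pair (Ne.symm hec)]; omega)).symm
        set act := (X.erase c).filter (fun e => ∃ E ∈ ex2, e ∈ E ∩ X) with hact_def
        have hex2cov : ex2 ⊆ act.biUnion (fun e => F.filter fun A => c ∈ A ∧ e ∈ A) := by
          intro E hE
          obtain ⟨e, heXc, heE, hEX⟩ := hsecond E hE
          have heX : e ∈ X := Finset.mem_of_mem_erase heXc
          refine Finset.mem_biUnion.2 ⟨e, ?_, ?_⟩
          · exact Finset.mem_filter.2 ⟨heXc, E, hE, Finset.mem_inter.2 ⟨heE, heX⟩⟩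
          · exact Finset.mem_filter.2 ⟨(hex2mem E hE).1, hstar E hE, heE⟩
        have hactle : act.card ≤ 3 := by
          calc act.card ≤ (X.erase c).card := Finset.card_le_card (Finset.filter_subset _ _)
            _ = 3 := by rw [Finset.card_erase_of_mem hcX, hXc]
        have hex2card : ex2.card ≤ act.card * (s + 3) := by
          calc ex2.card ≤ (act.biUnion (fun e => F.filter fun A => c ∈ A ∧ e ∈ A)).card :=
                Finset.card_le_card hex2cov
            _ ≤ ∑ e ∈ act, (F.filter fun A => c ∈ A ∧ e ∈ A).card := Finset.card_biUnion_le
            _ ≤ act.card * (s + 3) := by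
                have := Finset.sum_le_card_nsmul act (fun e => (F.filter fun A => c ∈ A ∧ e ∈ A).card)
                  (s + 3) (fun e he => by
                    have hec : c ≠ e := Ne.symm (Finset.mem_erase.1 (Finset.mem_of_mem_filter e he)).1
                    exact hpair c e hec)
                simpa using this
        -- one active pair bounds the whole sum
        obtain ⟨e0, he0Xc, he0E0, hE0X⟩ := hsecond E0 hE0
        have he0act : e0 ∈ act := Finset.mem_filter.2 ⟨he0Xc, E0, hE0,
          Finset.mem_inter.2 ⟨he0E0, Finset.mem_of_mem_erase he0Xc⟩⟩
        have hsd_eq0 : X \ (E0 ∩ X) = X \ E0 := by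
          ext t
          simp only [Finset.mem_sdiff, Finset.mem_inter]
          tauto
        have hsplitX0 : ∑ x ∈ X \ E0, pdeg F u x + ∑ x ∈ E0 ∩ X, pdeg F u x
            = ∑ x ∈ X, pdeg F u x := by
          rw [← hsd_eq0]
          exact Finset.sum_sdiff Finset.inter_subset_right
        have he0c : c ≠ e0 := Ne.symm (Finset.mem_erase.1 he0Xc).1
        have hsumE0X : ∑ x ∈ E0 ∩ X, pdeg F u x = pdeg F u c + pdeg F u e0 := by
          rw [hE0X, Finset.sum_pair he0c]
        have hac : pdeg F u c ≤ s + 3 := hpair u c (Ne.symm (hXelim c hcX).1)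
        have hae0 : pdeg F u e0 ≤ s + 3 :=
          hpair u e0 (Ne.symm (hXelim e0 (Finset.mem_of_mem_erase he0Xc)).1)
        have hbE0 := hcouple E0 hE0
        by_cases hk3 : act.card = 3
        · -- all three pairs at c are active
          have hacteq : act = X.erase c := Finset.eq_of_subset_of_card_le
            (Finset.filter_subset _ _)
            (by rw [Finset.card_erase_of_mem hcX, hXc, hk3])
          have hXc' : (X.erase c).card = 3 := by rw [Finset.card_erase_of_mem hcX, hXc]
          -- for each e in X.erase c there is an active edge, giving an inequality
          have hineq : ∀ e ∈ X.erase c, ∑ x ∈ (X.erase c).erase e, pdeg F u x ≤ s + 7 := by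
            intro e he
            have heact : e ∈ act := by rw [hacteq]; exact he
            obtain ⟨Ee, hEe, heEe⟩ := (Finset.mem_filter.1 heact).2
            obtain ⟨e', he'Xc, he'Ee, hEeX⟩ := hsecond Ee hEe
            have hee' : e = e' := by
              have heEeX : e ∈ Ee ∩ X := heEe
              rw [hEeX] at heEeX
              rcases Finset.mem_insert.1 heEeX with h | h
              · exact absurd h (Finset.mem_erase.1 he).1
              · rwa [Finset.mem_singleton] at h
            subst hee'
            have hbEe := hcouple Ee hEe
            have hsdEe : X \ Ee = (X.erase c).erase e := by
              have h1 : X \ Ee = X \ (Ee ∩ X) := by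
                ext t
                simp only [Finset.mem_sdiff, Finset.mem_inter]
                tauto
              rw [h1, hEeX]
              ext t
              simp only [Finset.mem_sdiff, Finset.mem_erase, Finset.mem_insert,
                Finset.mem_singleton]
              tauto
            rwa [hsdEe] at hbEe
          -- sum the three inequalities
          have hptw : ∀ e ∈ X.erase c,
              ∑ x ∈ (X.erase c).erase e, pdeg F u x + pdeg F u e
                = ∑ x ∈ X.erase c, pdeg F u x := by
            intro e he
            exact Finset.sum_erase_add _ _ he
          have hsum2 : ∑ e ∈ X.erase c, (∑ x ∈ (X.erase c).erase e, pdeg F u x + pdeg F u e)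
              = 3 * ∑ x ∈ X.erase c, pdeg F u x := by
            rw [Finset.sum_congr rfl hptw, Finset.sum_const, hXc', smul_eq_mul]
          rw [Finset.sum_add_distrib] at hsum2
          have hsumineq : ∑ e ∈ X.erase c, ∑ x ∈ (X.erase c).erase e, pdeg F u x
              ≤ 3 * (s + 7) := by
            have := Finset.sum_le_card_nsmul (X.erase c)
              (fun e => ∑ x ∈ (X.erase c).erase e, pdeg F u x) (s + 7) hineq
            rw [hXc'] at this
            simpa using this
          have h2sum : 2 * ∑ x ∈ X.erase c, pdeg F u x ≤ 3 * (s + 7) := by omega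
          have hXtot : pdeg F u c + ∑ x ∈ X.erase c, pdeg F u x = ∑ x ∈ X, pdeg F u x :=
            Finset.add_sum_erase _ _ hcX
          omega
        · -- at most two active pairs
          have hactle2 : act.card ≤ 2 := by
            have h1 : 0 < act.card := Finset.card_pos.2 ⟨e0, he0act⟩
            omega
          have hXtot : ∑ x ∈ X, pdeg F u x ≤ 3 * s + 13 := by omega
          have hex2le : ex2.card ≤ 2 * (s + 3) := by
            calc ex2.card ≤ act.card * (s + 3) := hex2card
              _ ≤ 2 * (s + 3) := Nat.mul_le_mul_right _ hactle2
          omega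
      -- now the non-star situation yields a triangle
      obtain ⟨hE0F, huE0, hE0X2⟩ := hex2mem E0 hE0
      obtain ⟨p, q, hpq, hE0X⟩ := Finset.card_eq_two.1 hE0X2
      have hpE0 : p ∈ E0 ∧ p ∈ X := by
        have : p ∈ E0 ∩ X := by rw [hE0X]; simp
        exact Finset.mem_inter.1 this
      have hqE0 : q ∈ E0 ∧ q ∈ X := by
        have : q ∈ E0 ∩ X := by rw [hE0X]; simp
        exact Finset.mem_inter.1 this
      by_cases hstarp : ∀ E ∈ ex2, p ∈ E
      · exact absurd (hstarcase p hpE0.2 hstarp) (fun h => h)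
      push_neg at hstarp
      obtain ⟨E1, hE1, hpE1⟩ := hstarp
      obtain ⟨hE1F, huE1, hE1X2⟩ := hex2mem E1 hE1
      -- q ∈ E1
      have hqE1 : q ∈ E1 := by
        have hnd := hcaseA E0 hE0 E1 hE1
        obtain ⟨t, ht0, ht1⟩ := Finset.not_disjoint_iff.1 hnd
        have ht0' : t ∈ ({p, q} : Finset α) := by rw [← hE0X]; exact ht0
        rcases Finset.mem_insert.1 ht0' with rfl | ht0''
        · exact absurd (Finset.mem_inter.1 ht1).1 hpE1
        · rw [Finset.mem_singleton] at ht0''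
          subst ht0''
          exact (Finset.mem_inter.1 ht1).1
      have hqX : q ∈ X := hqE0.2
      have hqE1X : q ∈ E1 ∩ X := Finset.mem_inter.2 ⟨hqE1, hqX⟩
      have herase1 : ((E1 ∩ X).erase q).card = 1 := by
        rw [Finset.card_erase_of_mem hqE1X, hE1X2]
      obtain ⟨r, hr⟩ := Finset.card_eq_one.1 herase1
      have hrE1X : r ∈ (E1 ∩ X).erase q := by rw [hr]; simp
      have hrq : r ≠ q := (Finset.mem_erase.1 hrE1X).1
      have hrE1 : r ∈ E1 := (Finset.mem_inter.1 (Finset.mem_of_mem_erase hrE1X)).1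
      have hrX : r ∈ X := (Finset.mem_inter.1 (Finset.mem_of_mem_erase hrE1X)).2
      have hrp : r ≠ p := fun h => hpE1 (h ▸ hrE1)
      have hE1X : E1 ∩ X = {q, r} := by
        have hsub : ({q, r} : Finset α) ⊆ E1 ∩ X := by
          intro z hz
          rcases Finset.mem_insert.1 hz with rfl | hz
          · exact hqE1X
          · rw [Finset.mem_singleton] at hz
            subst hz
            exact Finset.mem_inter.2 ⟨hrE1, hrX⟩
        exact (Finset.eq_of_subset_of_card_le hsub
          (by rw [Finset.card_pair (Ne.symm hrq)]; omega)).symm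
      by_cases hstarq : ∀ E ∈ ex2, q ∈ E
      · exact absurd (hstarcase q hqX hstarq) (fun h => h)
      push_neg at hstarq
      obtain ⟨E2, hE2, hqE2⟩ := hstarq
      obtain ⟨hE2F, huE2, hE2X2⟩ := hex2mem E2 hE2
      have hpE2 : p ∈ E2 := by
        have hnd := hcaseA E0 hE0 E2 hE2
        obtain ⟨t, ht0, ht2⟩ := Finset.not_disjoint_iff.1 hnd
        have ht0' : t ∈ ({p, q} : Finset α) := by rw [← hE0X]; exact ht0
        rcases Finset.mem_insert.1 ht0' with rfl | ht0''
        · exact (Finset.mem_inter.1 ht2).1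
        · rw [Finset.mem_singleton] at ht0''
          subst ht0''
          exact absurd (Finset.mem_inter.1 ht2).1 hqE2
      have hrE2 : r ∈ E2 := by
        have hnd := hcaseA E1 hE1 E2 hE2
        obtain ⟨t, ht1, ht2⟩ := Finset.not_disjoint_iff.1 hnd
        have ht1' : t ∈ ({q, r} : Finset α) := by rw [← hE1X]; exact ht1
        rcases Finset.mem_insert.1 ht1' with rfl | ht1''
        · exact absurd (Finset.mem_inter.1 ht2).1 hqE2
        · rw [Finset.mem_singleton] at ht1''
          subst ht1''
          exact (Finset.mem_inter.1 ht2).1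
      have hE2X : E2 ∩ X = {p, r} := by
        have hsub : ({p, r} : Finset α) ⊆ E2 ∩ X := by
          intro z hz
          rcases Finset.mem_insert.1 hz with rfl | hz
          · exact Finset.mem_inter.2 ⟨hpE2, hpE0.2⟩
          · rw [Finset.mem_singleton] at hz
            subst hz
            exact Finset.mem_inter.2 ⟨hrE2, hrX⟩
        exact (Finset.eq_of_subset_of_card_le hsub
          (by rw [Finset.card_pair (Ne.symm hrp)]; omega)).symm
      -- the fourth element l of X
      have hpqrX : ({p, q, r} : Finset α) ⊆ X := by
        intro z hz
        simp only [Finset.mem_insert, Finset.mem_singleton] at hz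
        rcases hz with rfl | rfl | rfl
        · exact hpE0.2
        · exact hqX
        · exact hrX
      have hpqrcard : ({p, q, r} : Finset α).card = 3 := by
        rw [Finset.card_insert_of_notMem, Finset.card_insert_of_notMem,
          Finset.card_singleton]
        · simp [Ne.symm hrq]
        · simp [hpq, Ne.symm hrp]
      have hsdl : (X \ ({p, q, r} : Finset α)).card = 1 := by
        have h1 := Finset.card_inter_add_card_sdiff X ({p, q, r} : Finset α)
        have h2 : X ∩ ({p, q, r} : Finset α) = ({p, q, r} : Finset α) := by
          rw [Finset.inter_comm]
          exact Finset.inter_eq_left.2 hpqrX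
        rw [h2, hpqrcard, hXc] at h1
        omega
      obtain ⟨l, hl⟩ := Finset.card_eq_one.1 hsdl
      have hlmem : l ∈ X \ ({p, q, r} : Finset α) := by rw [hl]; simp
      have hlX : l ∈ X := (Finset.mem_sdiff.1 hlmem).1
      have hlnot : l ∉ ({p, q, r} : Finset α) := (Finset.mem_sdiff.1 hlmem).2
      have hlp : l ≠ p := fun h => hlnot (by rw [h]; simp)
      have hlq : l ≠ q := fun h => hlnot (by rw [h]; simp)
      have hlr : l ≠ r := fun h => hlnot (by rw [h]; simp)
      have hXeq4 : X = insert p (insert q (insert r ({l} : Finset α))) := by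
        have hsub : insert p (insert q (insert r ({l} : Finset α))) ⊆ X := by
          intro z hz
          simp only [Finset.mem_insert, Finset.mem_singleton] at hz
          rcases hz with rfl | rfl | rfl | rfl
          · exact hpE0.2
          · exact hqX
          · exact hrX
          · exact hlX
        have hcard4 : (insert p (insert q (insert r ({l} : Finset α)))).card = 4 := by
          rw [Finset.card_insert_of_notMem, Finset.card_insert_of_notMem,
            Finset.card_insert_of_notMem, Finset.card_singleton]
          · simp [Ne.symm hlr]
          · simp [Ne.symm hrq, Ne.symm hlq]
          · simp [hpq, Ne.symm hrp, Ne.symm hlp]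
        exact (Finset.eq_of_subset_of_card_le hsub (by rw [hcard4, hXc])).symm
      -- the three couple inequalities
      have hsdE : ∀ E : Finset α, E ∈ ex2 → ∀ a b : α, E ∩ X = {a, b} →
          X \ E = X \ ({a, b} : Finset α) := by
        intro E hE a b hEX
        have h1 : X \ E = X \ (E ∩ X) := by
          ext t
          simp only [Finset.mem_sdiff, Finset.mem_inter]
          tauto
        rw [h1, hEX]
      have hb0 := hcouple E0 hE0
      have hb1 := hcouple E1 hE1
      have hb2 := hcouple E2 hE2
      rw [hsdE E0 hE0 p q hE0X] at hb0
      rw [hsdE E1 hE1 q r hE1X] at hb1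
      rw [hsdE E2 hE2 p r hE2X] at hb2
      have hsd0 : X \ ({p, q} : Finset α) = ({r, l} : Finset α) := by
        rw [hXeq4]
        ext t
        simp only [Finset.mem_sdiff, Finset.mem_insert, Finset.mem_singleton]
        constructor
        · rintro ⟨h1, h2⟩
          push_neg at h2
          rcases h1 with h | h | h | h
          · exact absurd h h2.1
          · exact absurd h h2.2
          · exact Or.inl h
          · exact Or.inr h
        · rintro (h | h) <;> rw [h] <;> simp [hpq, hrp, hrq, hlp, hlq, hlr, Ne.symm hpq, Ne.symm hrp, Ne.symm hrq, Ne.symm hlp, Ne.symm hlq, Ne.symm hlr]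
      have hsd1 : X \ ({q, r} : Finset α) = ({p, l} : Finset α) := by
        rw [hXeq4]
        ext t
        simp only [Finset.mem_sdiff, Finset.mem_insert, Finset.mem_singleton]
        constructor
        · rintro ⟨h1, h2⟩
          push_neg at h2
          rcases h1 with h | h | h | h
          · exact Or.inl h
          · exact absurd h h2.1
          · exact absurd h h2.2
          · exact Or.inr h
        · rintro (h | h) <;> rw [h] <;> simp [hpq, hrp, hrq, hlp, hlq, hlr, Ne.symm hpq, Ne.symm hrp, Ne.symm hrq, Ne.symm hlp, Ne.symm hlq, Ne.symm hlr]
      have hsd2 : X \ ({p, r} : Finset α) = ({q, l} : Finset α) := by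
        rw [hXeq4]
        ext t
        simp only [Finset.mem_sdiff, Finset.mem_insert, Finset.mem_singleton]
        constructor
        · rintro ⟨h1, h2⟩
          push_neg at h2
          rcases h1 with h | h | h | h
          · exact absurd h h2.1
          · exact Or.inl h
          · exact absurd h h2.2
          · exact Or.inr h
        · rintro (h | h) <;> rw [h] <;> simp [hpq, hrp, hrq, hlp, hlq, hlr, Ne.symm hpq, Ne.symm hrp, Ne.symm hrq, Ne.symm hlp, Ne.symm hlq, Ne.symm hlr]
      rw [hsd0, Finset.sum_pair (Ne.symm hlr)] at hb0
      rw [hsd1, Finset.sum_pair (Ne.symm hlp)] at hb1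
      rw [hsd2, Finset.sum_pair (Ne.symm hlq)] at hb2
      -- total
      have hXsum : ∑ x ∈ X, pdeg F u x
          = pdeg F u p + (pdeg F u q + (pdeg F u r + pdeg F u l)) := by
        rw [hXeq4, Finset.sum_insert (by simp [hpq, Ne.symm hrp, Ne.symm hlp]),
          Finset.sum_insert (by simp [Ne.symm hrq, Ne.symm hlq]),
          Finset.sum_insert (by simp [Ne.symm hlr]), Finset.sum_singleton]
      have hal : s + 22 ≤ 3 * pdeg F u l := (hXelim l hlX).2
      omega
  · -- |X| = 5 : impossible
    have hsub : Fnu ⊆ X.powersetCard 3 := by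
      intro A hA
      have hA' := Finset.mem_filter.1 hA
      have h1 : (X \ A).card ≤ 2 := hXsd A hA'.1 hA'.2
      have h2 : (X ∩ A).card + (X \ A).card = X.card := Finset.card_inter_add_card_sdiff X A
      have h3 : 3 ≤ (X ∩ A).card := by omega
      have h4 : X ∩ A ⊆ A := Finset.inter_subset_right
      have h5 : (X ∩ A).card ≤ 3 := by
        calc (X ∩ A).card ≤ A.card := Finset.card_le_card h4
          _ = 3 := huniform A hA'.1
      have h6 : X ∩ A = A := Finset.eq_of_subset_of_card_le h4 (by rw [huniform A hA'.1]; omega)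
      refine Finset.mem_powersetCard.2 ⟨?_, huniform A hA'.1⟩
      rw [← h6]
      exact Finset.inter_subset_left
    have hcard : Fnu.card ≤ 10 := by
      calc Fnu.card ≤ (X.powersetCard 3).card := Finset.card_le_card hsub
        _ = X.card.choose 3 := Finset.card_powersetCard 3 X
        _ = 10 := by rw [hXc]; decide
    omega
end

section
/- For every integer s > 625, if a 3-uniform [1,s]-almost intersecting hypergraph F has exactly 6s+6 edges, then F is of the form M_f: there exist disjoint finite sets A and B with |A| = 4 and |B| ≥ s+1, and a function f from the 2-element subsets of A to the (s+1)-element subsets of B satisfying f(S) = f(A \ S) for every 2-element subset S of A, such that F = { S ∪ {x} : S ⊆ A, |S| = 2, x ∈ f(S) }. -/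
/-!
Call a pair `q` heavy when `2 · codeg q > s + 7`. Two distinct pairs missing an edge `D` have
codegrees summing to at most `disjointCount D + 7 ≤ s + 7`, so no edge misses two heavy pairs.

Double counting around two disjoint edges gives a vertex `a` of degree more than `5s/2`. Its major
neighbours `w` (those with `deg a ≤ s + 3 · codeg {a, w}`) give heavy pairs `{a, w}`; every edge
avoiding `a` contains one of them and misses at most one. Degree counting excludes one, two or
four major neighbours, and with three of them the pairs among them are heavy as well, because the
degree of `a` drops to about `3s`. So some 4-set `A` has all six pairs heavy.

Then every edge meets `A` in exactly two vertices, and the edges disjoint from `p ∪ {x}`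
(`p ⊆ A`, `x ∉ A`) are those through `A \ p` other than `(A \ p) ∪ {x}`. Hence every pair in `A`
has codegree at most `s + 1`; since the six codegrees add up to `|F| = 6s + 6`, all equal `s + 1`,
and then `(A \ p) ∪ {x}` must be an edge whenever `p ∪ {x}` is.
-/

open Finset

namespace SetFamily

variable {α : Type*} [DecidableEq α]

def codegree (F : Finset (Finset α)) (q : Finset α) : ℕ := #{E ∈ F | q ⊆ E}

def degree (F : Finset (Finset α)) (a : α) : ℕ := #{E ∈ F | a ∈ E}

def disjointCount (F : Finset (Finset α)) (E : Finset α) : ℕ := #{D ∈ F | Disjoint E D}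

def link (F : Finset (Finset α)) (q : Finset α) : Finset α :=
  {x ∈ F.biUnion id | x ∉ q ∧ insert x q ∈ F}

structure IsAlmostIntersecting (F : Finset (Finset α)) (k a b : ℕ) : Prop where
  card_eq : ∀ E ∈ F, #E = k
  le_disjointCount : ∀ E ∈ F, a ≤ disjointCount F E
  disjointCount_le : ∀ E ∈ F, disjointCount F E ≤ b

def IsHeavy (F : Finset (Finset α)) (s : ℕ) (q : Finset α) : Prop := s + 7 < 2 * codegree F q

def IsHeavyClique (F : Finset (Finset α)) (s : ℕ) (A : Finset α) : Prop :=
  ∀ x ∈ A, ∀ y ∈ A, x ≠ y → IsHeavy F s {x, y}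

def majorNeighbors (F : Finset (Finset α)) (s : ℕ) (a : α) : Finset α :=
  {w ∈ F.biUnion id | w ≠ a ∧ degree F a ≤ s + 3 * codegree F {a, w}}

lemma pair_ne_pair {x y z : α} (hyz : y ≠ z) : ({x, y} : Finset α) ≠ {x, z} := fun h => by
  have hy : y ∈ ({x, z} : Finset α) := h ▸ mem_insert_of_mem (mem_singleton_self y)
  have hz : z ∈ ({x, y} : Finset α) := h ▸ mem_insert_of_mem (mem_singleton_self z)
  simp only [mem_insert, mem_singleton] at hy hz
  exact hyz ((hy.resolve_right hyz).trans (hz.resolve_right hyz.symm).symm)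

lemma eq_insert_of_mem_sdiff {E q : Finset α} {x : α} (hE : #E = #q + 1) (hqE : q ⊆ E)
    (hx : x ∈ E \ q) : E = insert x q := by
  rw [mem_sdiff] at hx
  refine (eq_of_subset_of_card_le (insert_subset hx.1 hqE) ?_).symm
  rw [card_insert_of_notMem hx.2, hE]

lemma eq_union_of_card_eq_two {q₁ q₂ E : Finset α} (h₁ : #q₁ = 2) (h₂ : #q₂ = 2)
    (hne : q₁ ≠ q₂) (hE : #E = 3) (hq₁E : q₁ ⊆ E) (hq₂E : q₂ ⊆ E) : E = q₁ ∪ q₂ := by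
  refine (eq_of_subset_of_card_le (union_subset hq₁E hq₂E) ?_).symm
  have hlt : #(q₁ ∩ q₂) < 2 := by
    refine h₁ ▸ card_lt_card (ssubset_of_subset_of_ne inter_subset_left fun h => hne ?_)
    exact eq_of_subset_of_card_le (inter_eq_left.1 h) (by omega)
  have := card_union_add_card_inter q₁ q₂
  omega

variable {F : Finset (Finset α)} {s : ℕ}

lemma IsAlmostIntersecting.exists_disjoint {k b : ℕ} (hF : IsAlmostIntersecting F k 1 b)
    {E : Finset α} (hE : E ∈ F) : ∃ D ∈ F, Disjoint E D :=
  filter_nonempty_iff.1 (card_pos.1 (hF.le_disjointCount E hE))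

variable (F) in
lemma codegree_pair (u v : α) : codegree F {u, v} = #{E ∈ F | u ∈ E ∧ v ∈ E} := by
  simp only [codegree, insert_subset_iff, singleton_subset_iff]

lemma codegree_pos_iff {q : Finset α} : 0 < codegree F q ↔ ∃ E ∈ F, q ⊆ E := by
  simp [codegree, card_pos, Finset.Nonempty]

lemma mem_link {q : Finset α} {x : α} : x ∈ link F q ↔ x ∉ q ∧ insert x q ∈ F :=
  ⟨fun h => (mem_filter.1 h).2,
    fun h => mem_filter.2 ⟨mem_biUnion.2 ⟨_, h.2, mem_insert_self x q⟩, h⟩⟩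

lemma image_link {q : Finset α} (hu : ∀ E ∈ F, #E = #q + 1) :
    (link F q).image (insert · q) = {E ∈ F | q ⊆ E} := by
  ext E
  simp only [mem_image, mem_link, mem_filter]
  constructor
  · rintro ⟨x, ⟨-, hx⟩, rfl⟩
    exact ⟨hx, subset_insert x q⟩
  · rintro ⟨hE, hqE⟩
    obtain ⟨x, hx⟩ : (E \ q).Nonempty := by
      rw [← card_pos, card_sdiff_of_subset hqE, hu E hE]
      omega
    have hEx := eq_insert_of_mem_sdiff (hu E hE) hqE hx
    exact ⟨x, ⟨(mem_sdiff.1 hx).2, hEx ▸ hE⟩, hEx.symm⟩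

lemma card_link {q : Finset α} (hu : ∀ E ∈ F, #E = #q + 1) : #(link F q) = codegree F q := by
  rw [codegree, ← image_link hu, card_image_of_injOn]
  intro x hx y _ hxy
  have : x ∈ insert y q := by
    simp only at hxy
    exact hxy ▸ mem_insert_self x q
  exact (mem_insert.1 this).resolve_right (mem_link.1 hx).1

lemma card_filter_not_disjoint_le {q D : Finset α} (hu : ∀ E ∈ F, #E = #q + 1)
    (hqD : Disjoint q D) : #{E ∈ F | q ⊆ E ∧ ¬Disjoint D E} ≤ #D := by
  refine (card_le_card fun E hE => ?_).trans (card_image_le (f := (insert · q)))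
  obtain ⟨hE, hqE, hDE⟩ := by simpa only [mem_filter] using hE
  obtain ⟨x, hxD, hxE⟩ := not_disjoint_iff.1 hDE
  have hxq : x ∉ q := disjoint_right.1 hqD hxD
  exact mem_image.2 ⟨x, hxD, (eq_insert_of_mem_sdiff (hu E hE) hqE (mem_sdiff.2 ⟨hxE, hxq⟩)).symm⟩

lemma codegree_le_card_filter_add {q D : Finset α} (hu : ∀ E ∈ F, #E = #q + 1)
    (hqD : Disjoint q D) : codegree F q ≤ #{E ∈ F | q ⊆ E ∧ Disjoint D E} + #D := by
  have := card_filter_not_disjoint_le hu hqD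
  have hsplit := card_filter_add_card_filter_not (s := {E ∈ F | q ⊆ E}) (Disjoint D)
  simp only [filter_filter] at hsplit
  rw [codegree]
  omega

variable (F) in
lemma card_filter_disjoint_le_disjointCount (p : Finset α → Prop) [DecidablePred p]
    (D : Finset α) : #{E ∈ F | p E ∧ Disjoint D E} ≤ disjointCount F D :=
  card_le_card fun _ hE => by
    simp only [mem_filter] at hE ⊢
    exact ⟨hE.1, hE.2.2⟩

lemma codegree_le (hF : IsAlmostIntersecting F 3 1 s) {q : Finset α} (hq : #q = 2) :
    codegree F q ≤ s + 3 := by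
  by_cases hpos : 0 < codegree F q
  · obtain ⟨E, hE, hqE⟩ := codegree_pos_iff.1 hpos
    obtain ⟨D, hD, hED⟩ := hF.exists_disjoint hE
    have := codegree_le_card_filter_add (fun E hE => by rw [hF.card_eq E hE, hq])
      (disjoint_of_subset_left hqE hED)
    have := card_filter_disjoint_le_disjointCount F (q ⊆ ·) D
    have := hF.disjointCount_le D hD
    have := hF.card_eq D hD
    omega
  · omega

lemma codegree_add_codegree_le (hu : ∀ E ∈ F, #E = 3) {q₁ q₂ D : Finset α} (h₁ : #q₁ = 2)
    (h₂ : #q₂ = 2) (hne : q₁ ≠ q₂) (hD : #D = 3) (hq₁D : Disjoint q₁ D) (hq₂D : Disjoint q₂ D) :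
    codegree F q₁ + codegree F q₂ ≤ disjointCount F D + 7 := by
  set X : Finset (Finset α) := {E ∈ F | q₁ ⊆ E ∧ Disjoint D E}
  set Y : Finset (Finset α) := {E ∈ F | q₂ ⊆ E ∧ Disjoint D E}
  have hX : codegree F q₁ ≤ #X + #D :=
    codegree_le_card_filter_add (fun E hE => by rw [hu E hE, h₁]) hq₁D
  have hY : codegree F q₂ ≤ #Y + #D :=
    codegree_le_card_filter_add (fun E hE => by rw [hu E hE, h₂]) hq₂D
  have hXY : #(X ∩ Y) ≤ 1 := by
    refine card_le_one.2 fun E hE E' hE' => ?_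
    simp only [X, Y, mem_inter, mem_filter] at hE hE'
    rw [eq_union_of_card_eq_two h₁ h₂ hne (hu E hE.1.1) hE.1.2.1 hE.2.2.1,
      eq_union_of_card_eq_two h₁ h₂ hne (hu E' hE'.1.1) hE'.1.2.1 hE'.2.2.1]
  have hXuY : #(X ∪ Y) ≤ disjointCount F D := card_le_card fun E hE => by
    simp only [X, Y, mem_union, mem_filter] at hE
    exact mem_filter.2 (by tauto)
  have := card_union_add_card_inter X Y
  omega

lemma not_disjoint_of_isHeavy (hF : IsAlmostIntersecting F 3 1 s) {q₁ q₂ D : Finset α}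
    (h₁ : #q₁ = 2) (h₂ : #q₂ = 2) (hne : q₁ ≠ q₂) (hH₁ : IsHeavy F s q₁) (hH₂ : IsHeavy F s q₂)
    (hD : D ∈ F) (hq₁D : Disjoint q₁ D) : ¬Disjoint q₂ D := fun hq₂D => by
  have := codegree_add_codegree_le hF.card_eq h₁ h₂ hne (hF.card_eq D hD) hq₁D hq₂D
  have := hF.disjointCount_le D hD
  unfold IsHeavy at hH₁ hH₂
  omega

lemma card_sub_mul_codegree_sub_le (hF : IsAlmostIntersecting F 3 1 s) {q : Finset α}
    (hq : #q = 2) {Y : Finset (Finset α)} (hYF : Y ⊆ F) (hYq : ∀ D ∈ Y, Disjoint q D) :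
    (#Y - s) * (codegree F q - 3) ≤ 3 * s := by
  -- Each `D ∈ Y` is disjoint from all but at most three edges through `q`, and each edge
  -- through `q` is disjoint from at most `s` members of `Y`.
  have hcount : #Y * (codegree F q - 3) ≤ codegree F q * s := by
    refine card_mul_le_card_mul (fun D E => Disjoint D E) (fun D hD => ?_) (fun E hE => ?_)
    · have := codegree_le_card_filter_add (fun E hE => by rw [hF.card_eq E hE, hq]) (hYq D hD)
      rw [hF.card_eq D (hYF hD)] at this
      rw [bipartiteAbove, filter_filter]
      omega
    · refine (card_le_card fun D hD => ?_).trans (hF.disjointCount_le E (mem_filter.1 hE).1)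
      rw [mem_bipartiteBelow] at hD
      exact mem_filter.2 ⟨hYF hD.1, hD.2.symm⟩
  have : s * codegree F q ≤ s * (codegree F q - 3) + s * 3 := by
    rw [← Nat.mul_add]
    exact Nat.mul_le_mul_left s (by omega)
  rw [mul_comm (codegree F q)] at hcount
  rw [Nat.sub_mul]
  omega

variable (F) in
lemma degree_le_card_filter_add_sum (a : α) (D : Finset α) :
    degree F a ≤ #{E ∈ F | a ∈ E ∧ Disjoint D E} + ∑ w ∈ D, codegree F {a, w} := by
  have hcover : {E ∈ F | a ∈ E} ⊆
      {E ∈ F | a ∈ E ∧ Disjoint D E} ∪ D.biUnion fun w => {E ∈ F | {a, w} ⊆ E} := by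
    intro E hE
    rw [mem_filter] at hE
    by_cases hDE : Disjoint D E
    · exact mem_union_left _ (mem_filter.2 ⟨hE.1, hE.2, hDE⟩)
    · obtain ⟨w, hwD, hwE⟩ := not_disjoint_iff.1 hDE
      refine mem_union_right _ (mem_biUnion.2 ⟨w, hwD, mem_filter.2 ⟨hE.1, ?_⟩⟩)
      exact insert_subset hE.2 (singleton_subset_iff.2 hwE)
  exact (card_le_card hcover).trans ((card_union_le _ _).trans (add_le_add le_rfl card_biUnion_le))

variable (F) in
lemma degree_le_disjointCount_add_sum (a : α) (D : Finset α) :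
    degree F a ≤ disjointCount F D + ∑ w ∈ D, codegree F {a, w} :=
  (degree_le_card_filter_add_sum F a D).trans
    (add_le_add (card_filter_disjoint_le_disjointCount F (a ∈ ·) D) le_rfl)

lemma sum_codegree_le (hu : ∀ E ∈ F, #E = 3) {a : α} {Z : Finset α} (haZ : a ∉ Z) :
    ∑ w ∈ Z, codegree F {a, w} ≤ 2 * degree F a := by
  have hleft : ∀ w ∈ Z, codegree F {a, w} = #({E ∈ F | a ∈ E}.bipartiteAbove (· ∈ ·) w) := by
    intro w _
    rw [codegree_pair, bipartiteAbove, filter_filter]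
  rw [sum_congr rfl hleft, sum_card_bipartiteAbove_eq_sum_card_bipartiteBelow, degree, mul_comm,
    ← smul_eq_mul]
  refine sum_le_card_nsmul _ _ _ fun E hE => ?_
  rw [mem_filter] at hE
  calc #(Z.bipartiteBelow (· ∈ ·) E) ≤ #(E.erase a) := card_le_card fun w hw => by
        rw [mem_bipartiteBelow] at hw
        exact mem_erase.2 ⟨fun h => haZ (h ▸ hw.1), hw.2⟩
    _ = 2 := by rw [card_erase_of_mem hE.2, hu E hE.1]

lemma degree_le (hF : IsAlmostIntersecting F 3 1 s) (a : α) : degree F a ≤ 4 * s + 9 := by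
  obtain h | ⟨E, hE⟩ := ({E ∈ F | a ∈ E} : Finset (Finset α)).eq_empty_or_nonempty
  · simp [degree, h]
  rw [mem_filter] at hE
  obtain ⟨D, hD, hED⟩ := hF.exists_disjoint hE.1
  have haD : a ∉ D := disjoint_left.1 hED hE.2
  have hsum : ∑ w ∈ D, codegree F {a, w} ≤ #D • (s + 3) :=
    sum_le_card_nsmul _ _ _ fun w hw => codegree_le hF (card_pair fun h => haD (h ▸ hw))
  have := degree_le_disjointCount_add_sum F a D
  have := hF.disjointCount_le D hD
  rw [hF.card_eq D hD, smul_eq_mul] at hsum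
  omega

lemma degree_le_of_codegree (hF : IsAlmostIntersecting F 3 1 s) {a u v : α} (huv : u ≠ v)
    (k : ℕ) (h : 2 * degree F a + (k + 1) < (k + 1) * codegree F {u, v}) :
    degree F a ≤ s + k + codegree F {a, u} + codegree F {a, v} := by
  -- Averaging over the link of `{u, v}` gives an edge `{z, u, v}` with `codegree F {a, z} ≤ k`.
  have hZ : codegree F {u, v} ≤ #((link F {u, v}).erase a) + 1 := by
    have := pred_card_le_card_erase (s := link F {u, v}) (a := a)
    rw [card_link fun E hE => by rw [hF.card_eq E hE, card_pair huv]] at this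
    omega
  obtain ⟨z, hzZ, hz⟩ : ∃ z ∈ (link F {u, v}).erase a, codegree F {a, z} < k + 1 := by
    refine exists_lt_of_sum_lt ?_
    have := sum_codegree_le hF.card_eq (notMem_erase a (link F {u, v}))
    rw [sum_const, smul_eq_mul]
    nlinarith
  obtain ⟨hzuv, hD⟩ := mem_link.1 (mem_of_mem_erase hzZ)
  have := degree_le_disjointCount_add_sum F a (insert z {u, v})
  rw [sum_insert hzuv, sum_pair huv] at this
  have := hF.disjointCount_le _ hD
  omega

lemma degree_le_of_two_mul_codegree_ge (hF : IsAlmostIntersecting F 3 1 s) (hs : 100 < s)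
    {a u v : α} (hau : a ≠ u) (hav : a ≠ v) (huv : u ≠ v)
    (h : s ≤ 2 * codegree F {u, v} + 6) : degree F a ≤ 3 * s + 36 := by
  have := degree_le hF a
  have := codegree_le hF (card_pair hau)
  have := codegree_le hF (card_pair hav)
  have := degree_le_of_codegree hF (a := a) huv 30 (by omega)
  omega

lemma exists_card_le_codegree (hF : IsAlmostIntersecting F 3 1 s) (hne : F.Nonempty) :
    ∃ u v, u ≠ v ∧ #F ≤ 2 * s + 9 * codegree F {u, v} := by
  obtain ⟨E₁, hE₁⟩ := hne
  obtain ⟨E₂, hE₂, h₁₂⟩ := hF.exists_disjoint hE₁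
  set G : Finset (Finset α) := {C ∈ F | ¬Disjoint E₁ C ∧ ¬Disjoint E₂ C}
  have hFG : #F ≤ #G + disjointCount F E₁ + disjointCount F E₂ := by
    have hcover : F ⊆ G ∪ {C ∈ F | Disjoint E₁ C} ∪ {C ∈ F | Disjoint E₂ C} := fun C hC => by
      simp only [G, mem_union, mem_filter]
      tauto
    have := card_le_card hcover
    have := card_union_le (G ∪ {C ∈ F | Disjoint E₁ C}) {C ∈ F | Disjoint E₂ C}
    have := card_union_le G {C ∈ F | Disjoint E₁ C}
    unfold disjointCount
    omega
  have hG : #G ≤ ∑ p ∈ E₁ ×ˢ E₂, codegree F {p.1, p.2} := by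
    refine (card_le_card fun C hC => ?_).trans card_biUnion_le
    obtain ⟨hC, h₁, h₂⟩ := mem_filter.1 hC
    obtain ⟨x, hx₁, hxC⟩ := not_disjoint_iff.1 h₁
    obtain ⟨y, hy₂, hyC⟩ := not_disjoint_iff.1 h₂
    refine mem_biUnion.2 ⟨(x, y), mem_product.2 ⟨hx₁, hy₂⟩, mem_filter.2 ⟨hC, ?_⟩⟩
    exact insert_subset hxC (singleton_subset_iff.2 hyC)
  obtain ⟨p, hp, hpG⟩ : ∃ p ∈ E₁ ×ˢ E₂, #G ≤ 9 * codegree F {p.1, p.2} := by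
    obtain ⟨x, hx⟩ := card_pos.1 (show 0 < #E₁ by rw [hF.card_eq E₁ hE₁]; omega)
    obtain ⟨y, hy⟩ := card_pos.1 (show 0 < #E₂ by rw [hF.card_eq E₂ hE₂]; omega)
    refine exists_le_of_sum_le ⟨(x, y), mem_product.2 ⟨hx, hy⟩⟩ ?_
    rw [sum_const, card_product, hF.card_eq E₁ hE₁, hF.card_eq E₂ hE₂, ← mul_sum, smul_eq_mul]
    omega
  obtain ⟨hp₁, hp₂⟩ := mem_product.1 hp
  refine ⟨p.1, p.2, fun h => disjoint_left.1 h₁₂ hp₁ (h ▸ hp₂), ?_⟩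
  have := hF.disjointCount_le E₁ hE₁
  have := hF.disjointCount_le E₂ hE₂
  omega

variable (F) in
lemma card_add_codegree_le (u v : α) :
    #F + codegree F {u, v} ≤ degree F u + degree F v + #{D ∈ F | Disjoint {u, v} D} := by
  have hsplit := card_filter_add_card_filter_not (s := F) fun E => u ∈ E ∨ v ∈ E
  have hunion := card_union_add_card_inter {E ∈ F | u ∈ E} {E ∈ F | v ∈ E}
  rw [← filter_or, ← filter_and, ← codegree_pair] at hunion
  have : {E ∈ F | ¬(u ∈ E ∨ v ∈ E)} = {D ∈ F | Disjoint {u, v} D} := by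
    simp only [disjoint_insert_left, disjoint_singleton_left, not_or]
  rw [this] at hsplit
  unfold degree
  omega

variable (F) in
lemma card_le_degree_add (a b c : α) :
    #F ≤ degree F a + #{D ∈ F | Disjoint {a, b} D} + #{D ∈ F | Disjoint {a, c} D} +
      codegree F {b, c} := by
  have hcover : F ⊆ {E ∈ F | a ∈ E} ∪ {D ∈ F | Disjoint {a, b} D} ∪
      {D ∈ F | Disjoint {a, c} D} ∪ {E ∈ F | {b, c} ⊆ E} := fun E hE => by
    simp only [mem_union, mem_filter, disjoint_insert_left, disjoint_singleton_left,
      insert_subset_iff, singleton_subset_iff]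
    tauto
  refine (card_le_card hcover).trans ?_
  refine (card_union_le _ _).trans (add_le_add ((card_union_le _ _).trans ?_) le_rfl)
  exact add_le_add (card_union_le _ _) le_rfl

lemma card_filter_disjoint_lt (hF : IsAlmostIntersecting F 3 1 s) {a b : α} (hab : a ≠ b)
    (m : ℕ) (h : 3 * s < m * (codegree F {a, b} - 3)) : #{D ∈ F | Disjoint {a, b} D} < s + m := by
  by_contra! hY
  have : (#{D ∈ F | Disjoint {a, b} D} - s) * (codegree F {a, b} - 3) ≤ 3 * s :=
    card_sub_mul_codegree_sub_le hF (card_pair hab) (filter_subset _ F)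
      fun D hD => (mem_filter.1 hD).2
  have := Nat.mul_le_mul_right (codegree F {a, b} - 3) (Nat.le_sub_of_add_le' hY)
  omega

lemma exists_two_mul_degree_ge (hF : IsAlmostIntersecting F 3 1 s) (hcard : #F = 6 * s + 6)
    (hs : 50 < s) : ∃ a, 5 * s + 22 ≤ 2 * degree F a := by
  obtain ⟨u, v, huv, huvF⟩ := exists_card_le_codegree hF (card_pos.1 (by omega))
  have := card_filter_disjoint_lt hF huv 8 (by omega)
  have := card_add_codegree_le F u v
  rcases le_total (degree F u) (degree F v) with h | h
  · exact ⟨v, by omega⟩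
  · exact ⟨u, by omega⟩

lemma exists_notMem_of_degree_pos {a : α} (hF : IsAlmostIntersecting F 3 1 s)
    (hdeg : 0 < degree F a) : ∃ D ∈ F, a ∉ D := by
  obtain ⟨E, hE⟩ := card_pos.1 hdeg
  rw [mem_filter] at hE
  obtain ⟨D, hD, hED⟩ := hF.exists_disjoint hE.1
  exact ⟨D, hD, disjoint_left.1 hED hE.2⟩

section majorNeighbors

variable {a : α}

lemma ne_of_mem_majorNeighbors {w : α} (hw : w ∈ majorNeighbors F s a) : w ≠ a :=
  (mem_filter.1 hw).2.1

lemma degree_le_of_mem_majorNeighbors {w : α} (hw : w ∈ majorNeighbors F s a) :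
    degree F a ≤ s + 3 * codegree F {a, w} :=
  (mem_filter.1 hw).2.2

lemma isHeavy_of_mem_majorNeighbors (hdeg : 5 * s + 22 ≤ 2 * degree F a) {w : α}
    (hw : w ∈ majorNeighbors F s a) : IsHeavy F s {a, w} := by
  have := degree_le_of_mem_majorNeighbors hw
  unfold IsHeavy
  omega

lemma lt_degree_of_notMem_majorNeighbors (hdeg : 5 * s + 22 ≤ 2 * degree F a) {w : α}
    (hwa : w ≠ a) (hw : w ∉ majorNeighbors F s a) : s + 3 * codegree F {a, w} < degree F a := by
  by_contra! h
  obtain ⟨E, hE, hawE⟩ := codegree_pos_iff.1 (show 0 < codegree F {a, w} by omega)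
  exact hw (mem_filter.2 ⟨mem_biUnion.2 ⟨E, hE, hawE (by simp)⟩, hwa, h⟩)

lemma exists_mem_majorNeighbors (hF : IsAlmostIntersecting F 3 1 s) {D : Finset α} (hD : D ∈ F)
    (haD : a ∉ D) : ∃ w ∈ D, w ∈ majorNeighbors F s a := by
  obtain ⟨w, hwD, hw⟩ : ∃ w ∈ D, degree F a ≤ s + 3 * codegree F {a, w} := by
    refine exists_le_of_sum_le (card_pos.1 (by rw [hF.card_eq D hD]; omega)) ?_
    have := degree_le_disjointCount_add_sum F a D
    have := hF.disjointCount_le D hD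
    rw [sum_const, sum_add_distrib, sum_const, ← mul_sum, hF.card_eq D hD, smul_eq_mul,
      smul_eq_mul]
    omega
  exact ⟨w, hwD, mem_filter.2 ⟨mem_biUnion.2 ⟨D, hD, hwD⟩, fun h => haD (h ▸ hwD), hw⟩⟩

lemma mem_or_mem_of_mem_majorNeighbors (hF : IsAlmostIntersecting F 3 1 s)
    (hdeg : 5 * s + 22 ≤ 2 * degree F a) {D : Finset α} (hD : D ∈ F) (haD : a ∉ D) {x y : α}
    (hx : x ∈ majorNeighbors F s a) (hy : y ∈ majorNeighbors F s a) (hxy : x ≠ y) :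
    x ∈ D ∨ y ∈ D := by
  by_contra! h
  have hxa := ne_of_mem_majorNeighbors hx
  have hya := ne_of_mem_majorNeighbors hy
  exact not_disjoint_of_isHeavy hF (card_pair hxa.symm) (card_pair hya.symm) (pair_ne_pair hxy)
    (isHeavy_of_mem_majorNeighbors hdeg hx) (isHeavy_of_mem_majorNeighbors hdeg hy) hD
    (by simp [haD, h.1]) (by simp [haD, h.2])

lemma card_sdiff_majorNeighbors_le_one (hF : IsAlmostIntersecting F 3 1 s)
    (hdeg : 5 * s + 22 ≤ 2 * degree F a) {D : Finset α} (hD : D ∈ F) (haD : a ∉ D) :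
    #(majorNeighbors F s a \ D) ≤ 1 := by
  refine card_le_one.2 fun x hx y hy => not_not.1 fun hxy => ?_
  rw [mem_sdiff] at hx hy
  exact (mem_or_mem_of_mem_majorNeighbors hF hdeg hD haD hx.1 hy.1 hxy).elim hx.2 hy.2

lemma card_majorNeighbors_pos (hF : IsAlmostIntersecting F 3 1 s)
    (hdeg : 5 * s + 22 ≤ 2 * degree F a) : 0 < #(majorNeighbors F s a) := by
  obtain ⟨D, hD, haD⟩ := exists_notMem_of_degree_pos hF (show 0 < degree F a by omega)
  obtain ⟨w, -, hw⟩ := exists_mem_majorNeighbors hF hD haD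
  exact card_pos.2 ⟨w, hw⟩

lemma card_majorNeighbors_le_four (hF : IsAlmostIntersecting F 3 1 s)
    (hdeg : 5 * s + 22 ≤ 2 * degree F a) : #(majorNeighbors F s a) ≤ 4 := by
  obtain ⟨D, hD, haD⟩ := exists_notMem_of_degree_pos hF (show 0 < degree F a by omega)
  have := card_sdiff_majorNeighbors_le_one hF hdeg hD haD
  have := card_inter_add_card_sdiff (majorNeighbors F s a) D
  have := card_le_card (inter_subset_right (s₁ := majorNeighbors F s a) (s₂ := D))
  rw [hF.card_eq D hD] at this
  omega

lemma card_majorNeighbors_ne_one (hF : IsAlmostIntersecting F 3 1 s)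
    (hdeg : 5 * s + 22 ≤ 2 * degree F a) : #(majorNeighbors F s a) ≠ 1 := by
  intro h
  obtain ⟨b, hN⟩ := card_eq_one.1 h
  have hb : b ∈ majorNeighbors F s a := hN ▸ mem_singleton_self b
  have := isHeavy_of_mem_majorNeighbors hdeg hb
  obtain ⟨E, hE, habE⟩ := codegree_pos_iff.1 (show 0 < codegree F {a, b} by
    unfold IsHeavy at this; omega)
  obtain ⟨D, hD, hED⟩ := hF.exists_disjoint hE
  have haD : a ∉ D := disjoint_left.1 hED (habE (mem_insert_self a {b}))
  obtain ⟨w, hwD, hw⟩ := exists_mem_majorNeighbors hF hD haD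
  rw [hN, mem_singleton] at hw
  exact disjoint_left.1 hED (habE (mem_insert_of_mem (mem_singleton_self b))) (hw ▸ hwD)

lemma card_majorNeighbors_ne_four (hF : IsAlmostIntersecting F 3 1 s) (hcard : #F = 6 * s + 6)
    (hs : 3 < s) (hdeg : 5 * s + 22 ≤ 2 * degree F a) : #(majorNeighbors F s a) ≠ 4 := by
  intro h
  have hsub : {D ∈ F | a ∉ D} ⊆ (majorNeighbors F s a).powersetCard 3 := fun D hD => by
    obtain ⟨hD, haD⟩ := mem_filter.1 hD
    have := card_sdiff_majorNeighbors_le_one hF hdeg hD haD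
    have := card_inter_add_card_sdiff (majorNeighbors F s a) D
    have hDN : majorNeighbors F s a ∩ D = D :=
      eq_of_subset_of_card_le inter_subset_right (by rw [hF.card_eq D hD]; omega)
    exact mem_powersetCard.2 ⟨hDN ▸ inter_subset_left, hF.card_eq D hD⟩
  have hout : #{D ∈ F | a ∉ D} ≤ 4 := by simpa [h] using card_le_card hsub
  have hsplit : degree F a + #{D ∈ F | a ∉ D} = #F := card_filter_add_card_filter_not _
  have := degree_le hF a
  omega

lemma three_mul_le_degree_add (hF : IsAlmostIntersecting F 3 1 s) (hcard : #F = 6 * s + 6)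
    (hdeg : 5 * s + 22 ≤ 2 * degree F a) {b c : α} (hb : b ∈ majorNeighbors F s a)
    (hc : c ∈ majorNeighbors F s a) (hbc : b ≠ c) : 3 * s ≤ degree F a + 9 := by
  have := degree_le_of_mem_majorNeighbors hb
  have := degree_le_of_mem_majorNeighbors hc
  have := card_le_degree_add F a b c
  have := card_filter_disjoint_lt hF (ne_of_mem_majorNeighbors hb).symm 7 (by omega)
  have := card_filter_disjoint_lt hF (ne_of_mem_majorNeighbors hc).symm 7 (by omega)
  have := codegree_le hF (card_pair hbc)
  omega

lemma exists_mem_erase_codegree (hF : IsAlmostIntersecting F 3 1 s)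
    (hlow : 3 * s ≤ degree F a + 9) {D : Finset α} (hD : D ∈ F) {c : α} (hcD : c ∈ D)
    (hac : a ≠ c) : ∃ w ∈ D.erase c, s ≤ 2 * codegree F {a, w} + 12 := by
  have hsum := degree_le_disjointCount_add_sum F a D
  rw [← add_sum_erase D _ hcD] at hsum
  have := hF.disjointCount_le D hD
  have := codegree_le hF (card_pair hac)
  have hcard : #(D.erase c) = 2 := by rw [card_erase_of_mem hcD, hF.card_eq D hD]
  refine exists_le_of_sum_le (card_pos.1 (by omega)) ?_
  rw [sum_const, sum_add_distrib, ← mul_sum, sum_const, hcard, smul_eq_mul, smul_eq_mul]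
  omega

lemma card_filter_disjoint_le_codegree (hF : IsAlmostIntersecting F 3 1 s) (hs : 100 < s)
    (hlow : 3 * s ≤ degree F a + 9) {b c w : α} (hab : a ≠ b) (haw : a ≠ w) (hbw : b ≠ w)
    (hb : degree F a ≤ s + 3 * codegree F {a, b}) (hw : s ≤ 2 * codegree F {a, w} + 12)
    (hc : ∀ D ∈ F, Disjoint {a, b} D → c ∈ D) :
    #{D ∈ F | Disjoint {a, b} D} ≤ codegree F {c, w} := by
  refine card_le_card fun D hD => ?_
  obtain ⟨hD, habD⟩ := mem_filter.1 hD
  refine mem_filter.2 ⟨hD, insert_subset (hc D hD habD) (singleton_subset_iff.2 ?_)⟩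
  by_contra hwD
  have := codegree_add_codegree_le hF.card_eq (card_pair hab) (card_pair haw) (pair_ne_pair hbw)
    (hF.card_eq D hD) habD (by simp_all)
  have := hF.disjointCount_le D hD
  omega

lemma card_majorNeighbors_ne_two (hF : IsAlmostIntersecting F 3 1 s) (hcard : #F = 6 * s + 6)
    (hs : 100 < s) (hdeg : 5 * s + 22 ≤ 2 * degree F a) : #(majorNeighbors F s a) ≠ 2 := by
  -- A vertex `w` of an edge avoiding `a` and `b` behaves like a third major neighbour: every edge
  -- avoiding `{a, b}` contains `{c, w}` and every edge avoiding `{a, c}` contains `{b, w}`, which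
  -- makes both pairs heavy; yet `w` is not major, so some edge through `a` misses `b`, `c`, `w`.
  intro h
  obtain ⟨b, c, hbc, hN⟩ := card_eq_two.1 h
  have hb : b ∈ majorNeighbors F s a := by simp [hN]
  have hc : c ∈ majorNeighbors F s a := by simp [hN]
  have hab := (ne_of_mem_majorNeighbors hb).symm
  have hac := (ne_of_mem_majorNeighbors hc).symm
  have hlow := three_mul_le_degree_add hF hcard hdeg hb hc hbc
  have hmeet : ∀ D ∈ F, a ∉ D → b ∈ D ∨ c ∈ D := fun D hD haD => by
    obtain ⟨w, hwD, hw⟩ := exists_mem_majorNeighbors hF hD haD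
    rw [hN, mem_insert, mem_singleton] at hw
    rcases hw with rfl | rfl
    exacts [Or.inl hwD, Or.inr hwD]
  obtain ⟨E, hE, habE⟩ := codegree_pos_iff.1
    (show 0 < codegree F {a, b} by have := degree_le_of_mem_majorNeighbors hb; omega)
  obtain ⟨D₀, hD₀, hED₀⟩ := hF.exists_disjoint hE
  have habD₀ : a ∉ D₀ ∧ b ∉ D₀ := by simpa using disjoint_of_subset_left habE hED₀
  obtain ⟨w, hwD₀, hw⟩ := exists_mem_erase_codegree hF hlow hD₀
    ((hmeet D₀ hD₀ habD₀.1).resolve_left habD₀.2) hac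
  have hcw : c ≠ w := (ne_of_mem_erase hwD₀).symm
  have haw : a ≠ w := fun h => habD₀.1 (h ▸ mem_of_mem_erase hwD₀)
  have hbw : b ≠ w := fun h => habD₀.2 (h ▸ mem_of_mem_erase hwD₀)
  have hMc := card_filter_disjoint_le_codegree hF hs hlow hab haw hbw
    (degree_le_of_mem_majorNeighbors hb) hw fun D hD h => by
      simp only [disjoint_insert_left, disjoint_singleton_left] at h
      exact (hmeet D hD h.1).resolve_left h.2
  have hMb := card_filter_disjoint_le_codegree hF hs hlow hac haw hcw
    (degree_le_of_mem_majorNeighbors hc) hw fun D hD h => by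
      simp only [disjoint_insert_left, disjoint_singleton_left] at h
      exact (hmeet D hD h.1).resolve_right h.2
  have := card_le_degree_add F a b c
  have := degree_le hF a
  have := codegree_le hF (card_pair hbc)
  have hup : degree F a ≤ 3 * s + 36 := by
    rcases le_total (codegree F {b, w}) (codegree F {c, w}) with h | h
    · exact degree_le_of_two_mul_codegree_ge hF hs hac haw hcw (by omega)
    · exact degree_le_of_two_mul_codegree_ge hF hs hab haw hbw (by omega)
  have := codegree_le hF (card_pair hab)
  have := codegree_le hF (card_pair hac)
  have := codegree_le hF (card_pair hbw)
  have := codegree_le hF (card_pair hcw)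
  have hwdeg := lt_degree_of_notMem_majorNeighbors hdeg haw.symm (by simp [hN, hbw.symm, hcw.symm])
  obtain ⟨E₀, hE₀⟩ : ({E ∈ F | a ∈ E ∧ Disjoint {b, c, w} E} : Finset (Finset α)).Nonempty := by
    have := degree_le_card_filter_add_sum F a {b, c, w}
    rw [sum_insert (by simp [hbc, hbw]), sum_pair hcw] at this
    exact card_pos.1 (by omega)
  obtain ⟨hE₀, -, hE₀w⟩ := mem_filter.1 hE₀
  simp only [disjoint_insert_left, disjoint_singleton_left] at hE₀w
  refine not_disjoint_of_isHeavy hF (card_pair hbw) (card_pair hcw)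
    (by rw [pair_comm b, pair_comm c]; exact pair_ne_pair hbc) ?_ ?_ hE₀
    (by simp [hE₀w]) (by simp [hE₀w]) <;>
  · unfold IsHeavy
    omega

lemma card_filter_notMem_le (hF : IsAlmostIntersecting F 3 1 s)
    (hdeg : 5 * s + 22 ≤ 2 * degree F a) {b c d : α} (hbc : b ≠ c) (hbd : b ≠ d) (hcd : c ≠ d)
    (hN : majorNeighbors F s a = {b, c, d}) :
    #{D ∈ F | a ∉ D} ≤ codegree F {b, c} + codegree F {b, d} + codegree F {c, d} := by
  have hcover : {D ∈ F | a ∉ D} ⊆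
      {E ∈ F | {b, c} ⊆ E} ∪ {E ∈ F | {b, d} ⊆ E} ∪ {E ∈ F | {c, d} ⊆ E} := fun D hD => by
    obtain ⟨hD, haD⟩ := mem_filter.1 hD
    have hmiss {u v : α} (hu : u ∈ ({b, c, d} : Finset α)) (hv : v ∈ ({b, c, d} : Finset α))
        (huv : u ≠ v) : u ∈ D ∨ v ∈ D :=
      mem_or_mem_of_mem_majorNeighbors hF hdeg hD haD (hN ▸ hu) (hN ▸ hv) huv
    have := hmiss (by simp) (by simp) hbc
    have := hmiss (by simp) (by simp) hbd
    have := hmiss (by simp) (by simp) hcd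
    simp only [mem_union, mem_filter, insert_subset_iff, singleton_subset_iff, hD, true_and]
    tauto
  exact (card_le_card hcover).trans
    ((card_union_le _ _).trans (add_le_add (card_union_le _ _) le_rfl))

lemma isHeavyClique_majorNeighbors (hF : IsAlmostIntersecting F 3 1 s) (hcard : #F = 6 * s + 6)
    (hs : 100 < s) (hdeg : 5 * s + 22 ≤ 2 * degree F a) (h : #(majorNeighbors F s a) = 3) :
    IsHeavyClique F s (majorNeighbors F s a) := by
  obtain ⟨b, c, d, hbc, hbd, hcd, hN⟩ := card_eq_three.1 h
  have hmem : b ∈ majorNeighbors F s a ∧ c ∈ majorNeighbors F s a ∧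
      d ∈ majorNeighbors F s a := by simp [hN]
  have hab := (ne_of_mem_majorNeighbors hmem.1).symm
  have hac := (ne_of_mem_majorNeighbors hmem.2.1).symm
  have had := (ne_of_mem_majorNeighbors hmem.2.2).symm
  have hout := card_filter_notMem_le hF hdeg hbc hbd hcd hN
  have hsplit : degree F a + #{D ∈ F | a ∉ D} = #F := card_filter_add_card_filter_not _
  have := degree_le hF a
  have := codegree_le hF (card_pair hbc)
  have := codegree_le hF (card_pair hbd)
  have := codegree_le hF (card_pair hcd)
  have hup : degree F a ≤ 3 * s + 36 := by
    rcases (by omega : s ≤ 2 * codegree F {b, c} + 6 ∨ s ≤ 2 * codegree F {b, d} + 6 ∨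
        s ≤ 2 * codegree F {c, d} + 6) with h | h | h
    · exact degree_le_of_two_mul_codegree_ge hF hs hab hac hbc h
    · exact degree_le_of_two_mul_codegree_ge hF hs hab had hbd h
    · exact degree_le_of_two_mul_codegree_ge hF hs hac had hcd h
  have hheavy : IsHeavy F s {b, c} ∧ IsHeavy F s {b, d} ∧ IsHeavy F s {c, d} := by
    unfold IsHeavy
    omega
  intro x hx y hy hxy
  rw [hN] at hx hy
  simp only [mem_insert, mem_singleton] at hx hy
  rcases hx with rfl | rfl | rfl <;> rcases hy with rfl | rfl | rfl <;>
    first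
      | exact absurd rfl hxy
      | tauto
      | (rw [pair_comm]; tauto)

lemma exists_isHeavyClique (hF : IsAlmostIntersecting F 3 1 s) (hcard : #F = 6 * s + 6)
    (hs : 100 < s) : ∃ A : Finset α, #A = 4 ∧ IsHeavyClique F s A := by
  obtain ⟨a, hdeg⟩ := exists_two_mul_degree_ge hF hcard (by omega)
  have h3 : #(majorNeighbors F s a) = 3 := by
    have := card_majorNeighbors_pos hF hdeg
    have := card_majorNeighbors_le_four hF hdeg
    have := card_majorNeighbors_ne_one hF hdeg
    have := card_majorNeighbors_ne_two hF hcard hs hdeg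
    have := card_majorNeighbors_ne_four hF hcard (by omega) hdeg
    omega
  have haN : a ∉ majorNeighbors F s a := fun h => ne_of_mem_majorNeighbors h rfl
  refine ⟨insert a (majorNeighbors F s a), by rw [card_insert_of_notMem haN, h3], ?_⟩
  intro x hx y hy hxy
  rcases mem_insert.1 hx with rfl | hx <;> rcases mem_insert.1 hy with rfl | hy
  · exact absurd rfl hxy
  · exact isHeavy_of_mem_majorNeighbors hdeg hy
  · rw [pair_comm]
    exact isHeavy_of_mem_majorNeighbors hdeg hx
  · exact isHeavyClique_majorNeighbors hF hcard hs hdeg h3 x hx y hy hxy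

end majorNeighbors

section clique

variable {A : Finset α}

lemma card_sdiff_le_two (hF : IsAlmostIntersecting F 3 1 s) (hA : IsHeavyClique F s A)
    {D : Finset α} (hD : D ∈ F) : #(A \ D) ≤ 2 := by
  by_contra! h
  obtain ⟨x, y, z, hx, hy, hz, hxy, hxz, hyz⟩ := two_lt_card_iff.1 h
  simp only [mem_sdiff] at hx hy hz
  exact not_disjoint_of_isHeavy hF (card_pair hxy) (card_pair hxz) (pair_ne_pair hyz)
    (hA x hx.1 y hy.1 hxy) (hA x hx.1 z hz.1 hxz) hD (by simp [hx.2, hy.2]) (by simp [hx.2, hz.2])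

lemma card_inter_eq_two (hF : IsAlmostIntersecting F 3 1 s) (hA4 : #A = 4)
    (hA : IsHeavyClique F s A) {E : Finset α} (hE : E ∈ F) : #(E ∩ A) = 2 := by
  obtain ⟨D, hD, hED⟩ := hF.exists_disjoint hE
  have hsub : A ∩ E ⊆ A \ D := fun x hx =>
    mem_sdiff.2 ⟨(mem_inter.1 hx).1, disjoint_left.1 hED (mem_inter.1 hx).2⟩
  have := card_le_card hsub
  have := card_sdiff_le_two hF hA hD
  have := card_sdiff_le_two hF hA hE
  have := card_inter_add_card_sdiff A E
  rw [inter_comm]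
  omega

lemma exists_sdiff_eq_singleton (hF : IsAlmostIntersecting F 3 1 s) (hA4 : #A = 4)
    (hA : IsHeavyClique F s A) {E : Finset α} (hE : E ∈ F) : ∃ x, E \ A = {x} := by
  have := card_inter_add_card_sdiff E A
  rw [card_inter_eq_two hF hA4 hA hE, hF.card_eq E hE] at this
  exact card_eq_one.1 (by omega)

lemma disjoint_of_sdiff_subset (hF : IsAlmostIntersecting F 3 1 s) (hA4 : #A = 4)
    (hA : IsHeavyClique F s A) {E D : Finset α} (hE : E ∈ F) (hD : D ∈ F) (hAD : A \ E ⊆ D)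
    (hne : D ≠ E \ A ∪ A \ E) : Disjoint E D := by
  have hDA : D ∩ A = A \ E := by
    refine (eq_of_subset_of_card_le (fun x hx => mem_inter.2 ⟨hAD hx, (mem_sdiff.1 hx).1⟩) ?_).symm
    have := card_inter_add_card_sdiff A E
    rw [inter_comm, card_inter_eq_two hF hA4 hA hE] at this
    rw [card_inter_eq_two hF hA4 hA hD]
    omega
  obtain ⟨x, hx⟩ := exists_sdiff_eq_singleton hF hA4 hA hE
  obtain ⟨y, hy⟩ := exists_sdiff_eq_singleton hF hA4 hA hD
  have hxy : x ≠ y := by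
    rintro rfl
    exact hne (by rw [← sdiff_union_inter D A, hx, hy, hDA])
  refine disjoint_left.2 fun z hzE hzD => ?_
  by_cases hzA : z ∈ A
  · have : z ∈ D ∩ A := mem_inter.2 ⟨hzD, hzA⟩
    rw [hDA] at this
    exact (mem_sdiff.1 this).2 hzE
  · have hzx : z ∈ E \ A := mem_sdiff.2 ⟨hzE, hzA⟩
    have hzy : z ∈ D \ A := mem_sdiff.2 ⟨hzD, hzA⟩
    rw [hx, mem_singleton] at hzx
    rw [hy, mem_singleton] at hzy
    exact hxy (hzx ▸ hzy)

lemma codegree_sdiff_le (hF : IsAlmostIntersecting F 3 1 s) (hA4 : #A = 4)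
    (hA : IsHeavyClique F s A) {E : Finset α} (hE : E ∈ F) :
    codegree F (A \ E) ≤ disjointCount F E + if E \ A ∪ A \ E ∈ F then 1 else 0 := by
  have hsub : {D ∈ F | A \ E ⊆ D} ⊆ insert (E \ A ∪ A \ E) {D ∈ F | Disjoint E D} :=
    fun D hD => by
      obtain ⟨hD, hAD⟩ := mem_filter.1 hD
      by_cases hne : D = E \ A ∪ A \ E
      · exact hne ▸ mem_insert_self _ _
      · exact mem_insert_of_mem
          (mem_filter.2 ⟨hD, disjoint_of_sdiff_subset hF hA4 hA hE hD hAD hne⟩)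
  split_ifs with hmem
  · exact (card_le_card hsub).trans (card_insert_le _ _)
  · rw [subset_insert_iff_of_notMem fun h => hmem (mem_filter.1 h).1] at hsub
    exact card_le_card hsub

lemma isHeavy_of_mem_powersetCard (hA : IsHeavyClique F s A) {p : Finset α}
    (hp : p ∈ A.powersetCard 2) : IsHeavy F s p := by
  obtain ⟨hpA, hp2⟩ := mem_powersetCard.1 hp
  obtain ⟨x, y, hxy, rfl⟩ := card_eq_two.1 hp2
  exact hA x (hpA (mem_insert_self x {y})) y (hpA (mem_insert_of_mem (mem_singleton_self y))) hxy

lemma sdiff_mem_powersetCard (hA4 : #A = 4) {p : Finset α} (hp : p ∈ A.powersetCard 2) :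
    A \ p ∈ A.powersetCard 2 := by
  obtain ⟨hpA, hp2⟩ := mem_powersetCard.1 hp
  exact mem_powersetCard.2 ⟨sdiff_subset, by rw [card_sdiff_of_subset hpA, hA4, hp2]⟩

lemma inter_eq_of_subset (hF : IsAlmostIntersecting F 3 1 s) (hA4 : #A = 4)
    (hA : IsHeavyClique F s A) {E p : Finset α} (hE : E ∈ F) (hp : p ∈ A.powersetCard 2)
    (hpE : p ⊆ E) : E ∩ A = p := by
  obtain ⟨hpA, hp2⟩ := mem_powersetCard.1 hp
  refine (eq_of_subset_of_card_le (subset_inter hpE hpA) ?_).symm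
  rw [card_inter_eq_two hF hA4 hA hE, hp2]

lemma codegree_eq (hF : IsAlmostIntersecting F 3 1 s) (hcard : #F = 6 * s + 6) (hA4 : #A = 4)
    (hA : IsHeavyClique F s A) {p : Finset α} (hp : p ∈ A.powersetCard 2) :
    codegree F p = s + 1 := by
  have hle : ∀ q ∈ A.powersetCard 2, codegree F q ≤ s + 1 := fun q hq => by
    have hq' := sdiff_mem_powersetCard hA4 hq
    have := isHeavy_of_mem_powersetCard hA hq'
    obtain ⟨E, hE, hqE⟩ := codegree_pos_iff.1 (show 0 < codegree F (A \ q) by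
      unfold IsHeavy at this; omega)
    have hAE : A \ E = q := by
      rw [← sdiff_inter_self_right A E, inter_eq_of_subset hF hA4 hA hE hq' hqE,
        Finset.sdiff_sdiff_eq_self (mem_powersetCard.1 hq).1]
    have hsdiff := codegree_sdiff_le hF hA4 hA hE
    rw [hAE] at hsdiff
    have := hF.disjointCount_le E hE
    split_ifs at hsdiff <;> omega
  have hsum : ∑ p ∈ A.powersetCard 2, codegree F p = #F := by
    rw [card_eq_sum_card_fiberwise (f := (· ∩ A)) fun E hE =>
      mem_powersetCard.2 ⟨inter_subset_right, card_inter_eq_two hF hA4 hA hE⟩]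
    refine sum_congr rfl fun q hq => congrArg card (filter_congr fun E hE => ?_)
    exact ⟨fun h => inter_eq_of_subset hF hA4 hA hE hq h, fun h => h ▸ inter_subset_left⟩
  by_contra hne
  have := sum_lt_sum hle ⟨p, hp, lt_of_le_of_ne (hle p hp) hne⟩
  rw [hsum, sum_const, card_powersetCard, hA4, show Nat.choose 4 2 = 6 by rfl, smul_eq_mul]
    at this
  omega

lemma sdiff_union_sdiff_mem (hF : IsAlmostIntersecting F 3 1 s) (hcard : #F = 6 * s + 6)
    (hA4 : #A = 4) (hA : IsHeavyClique F s A) {E : Finset α} (hE : E ∈ F) :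
    E \ A ∪ A \ E ∈ F := by
  have hAE : A \ E ∈ A.powersetCard 2 := by
    have := card_inter_add_card_sdiff A E
    rw [inter_comm, card_inter_eq_two hF hA4 hA hE] at this
    exact mem_powersetCard.2 ⟨sdiff_subset, by omega⟩
  have hsdiff := codegree_sdiff_le hF hA4 hA hE
  rw [codegree_eq hF hcard hA4 hA hAE] at hsdiff
  have := hF.disjointCount_le E hE
  by_contra hmem
  rw [if_neg hmem] at hsdiff
  omega

lemma notMem_of_mem_link (hF : IsAlmostIntersecting F 3 1 s) (hA4 : #A = 4)
    (hA : IsHeavyClique F s A) {p : Finset α} (hp : p ∈ A.powersetCard 2) {x : α}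
    (hx : x ∈ link F p) : x ∉ A := fun hxA => by
  obtain ⟨hxp, hE⟩ := mem_link.1 hx
  obtain ⟨hpA, hp2⟩ := mem_powersetCard.1 hp
  have := card_inter_eq_two hF hA4 hA hE
  rw [inter_eq_left.2 (insert_subset hxA hpA), card_insert_of_notMem hxp, hp2] at this
  omega

lemma link_subset_link_sdiff (hF : IsAlmostIntersecting F 3 1 s) (hcard : #F = 6 * s + 6)
    (hA4 : #A = 4) (hA : IsHeavyClique F s A) {p : Finset α} (hp : p ∈ A.powersetCard 2) :
    link F p ⊆ link F (A \ p) := fun x hx => by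
  have hxA := notMem_of_mem_link hF hA4 hA hp hx
  have hE := (mem_link.1 hx).2
  have hEA : insert x p \ A = {x} := by
    rw [insert_sdiff_of_notMem _ hxA, sdiff_eq_empty_iff_subset.2 (mem_powersetCard.1 hp).1]
    rfl
  have := sdiff_union_sdiff_mem hF hcard hA4 hA hE
  rw [hEA, sdiff_insert_of_notMem hxA, ← insert_eq] at this
  exact mem_link.2 ⟨fun h => hxA (mem_sdiff.1 h).1, this⟩

lemma link_sdiff (hF : IsAlmostIntersecting F 3 1 s) (hcard : #F = 6 * s + 6) (hA4 : #A = 4)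
    (hA : IsHeavyClique F s A) {p : Finset α} (hp : p ∈ A.powersetCard 2) :
    link F (A \ p) = link F p := by
  have h := link_subset_link_sdiff hF hcard hA4 hA (sdiff_mem_powersetCard hA4 hp)
  rw [Finset.sdiff_sdiff_eq_self (mem_powersetCard.1 hp).1] at h
  exact h.antisymm (link_subset_link_sdiff hF hcard hA4 hA hp)

lemma eq_biUnion_image_link (hF : IsAlmostIntersecting F 3 1 s) (hA4 : #A = 4)
    (hA : IsHeavyClique F s A) :
    F = (A.powersetCard 2).biUnion fun p => (link F p).image (insert · p) := by
  ext E
  simp only [mem_biUnion, mem_image, mem_link]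
  constructor
  · intro hE
    obtain ⟨x, hx⟩ := exists_sdiff_eq_singleton hF hA4 hA hE
    have hxE : x ∈ E \ A := hx ▸ mem_singleton_self x
    have hEx : insert x (E ∩ A) = E := by
      rw [insert_eq, ← hx, sdiff_union_inter]
    refine ⟨E ∩ A, mem_powersetCard.2 ⟨inter_subset_right, card_inter_eq_two hF hA4 hA hE⟩, x,
      ⟨fun h => (mem_sdiff.1 hxE).2 (mem_inter.1 h).2, hEx.symm ▸ hE⟩, hEx⟩
  · rintro ⟨p, -, x, ⟨-, hE⟩, rfl⟩
    exact hE

end clique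

end SetFamily

open SetFamily

/-- For every `s > 625`, if a 3-uniform `[1,s]`-almost intersecting
hypergraph has exactly `6s+6` edges, then it is of the form `M_f`. -/
theorem stmt_15 {α : Type*} [DecidableEq α] (s : ℕ) (hs : 625 < s)
    (F : Finset (Finset α))
    (huniform : ∀ A ∈ F, A.card = 3)
    (hai : ∀ A ∈ F, 1 ≤ (F.filter fun B => Disjoint A B).card ∧
      (F.filter fun B => Disjoint A B).card ≤ s)
    (hcard : F.card = 6 * s + 6) :
    ∃ (A B : Finset α) (f : Finset α → Finset α),
      Disjoint A B ∧ A.card = 4 ∧ s + 1 ≤ B.card ∧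
      (∀ S ∈ A.powersetCard 2, f S ⊆ B ∧ (f S).card = s + 1 ∧ f S = f (A \ S)) ∧
      F = (A.powersetCard 2).biUnion fun S => (f S).image fun x => insert x S := by
  have hF : IsAlmostIntersecting F 3 1 s :=
    ⟨huniform, fun E hE => (hai E hE).1, fun E hE => (hai E hE).2⟩
  obtain ⟨A, hA4, hA⟩ := exists_isHeavyClique hF hcard (by omega)
  have hlink : ∀ S ∈ A.powersetCard 2, #(link F S) = s + 1 := fun S hS => by
    rw [card_link fun E hE => by rw [hF.card_eq E hE, (mem_powersetCard.1 hS).2],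
      codegree_eq hF hcard hA4 hA hS]
  obtain ⟨S₀, hS₀⟩ : (A.powersetCard 2).Nonempty := powersetCard_nonempty.2 (by omega)
  refine ⟨A, (A.powersetCard 2).biUnion (link F), link F, ?_, hA4, ?_, fun S hS =>
    ⟨subset_biUnion_of_mem _ hS, hlink S hS, (link_sdiff hF hcard hA4 hA hS).symm⟩,
    eq_biUnion_image_link hF hA4 hA⟩
  · exact (disjoint_biUnion_right _ _ _).2 fun S hS =>
      disjoint_right.2 fun x hx => notMem_of_mem_link hF hA4 hA hS hx
  · exact (hlink S₀ hS₀).symm.le.trans (card_le_card (subset_biUnion_of_mem _ hS₀))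
end

section
/- Let s > 625 and let F be a 3-uniform [0,s]-almost intersecting hypergraph such that for every edge e ∈ F and every two vertices x, y ∈ e, there is an edge of F disjoint from {x,y}. If F has exactly 6s+10 edges, then there exist disjoint finite sets A and B with |A| = 4 and |B| ≥ s+1, and a function f from the 2-element subsets of A to the (s+1)-element subsets of B satisfying f(S) = f(A \ S) for every 2-element subset S of A, such that F = { S ∪ {x} : S ⊆ A, |S| = 2, x ∈ f(S) } together with all four 3-element subsets of A. -/
/-!
Every edge meets all but at most `s` edges, so `|F| ≤ s + ∑_{v ∈ e} deg v` for each edge `e`, and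
likewise `deg v ≤ s + ∑_{w ∈ g} codeg(v, w)` for each edge `g`; with `codeg ≤ s + 3` this yields
a vertex `x` with `2 deg x ≥ 5s + 24`. Call `u` heavy if `deg x ≤ s + 3 codeg(x, u)`. Every edge
avoiding `x` contains a heavy vertex and misses at most one, so there are one, two or three heavy
vertices. One is excluded by the pair-avoidance hypothesis. Two, `w₁` and `w₂`, force a vertex `a`
lying in every edge that avoids `x` and one of the `wᵢ`; counting the edges through `x` that miss
both `wᵢ` then leaves fewer than `6s + 10` edges. So there are three, and `A = {x} ∪ heavy` meets
every edge in at least two points. An edge `(A \ p) ∪ {y}` is disjoint from every edge `p ∪ {z}`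
with `z ≠ y`, so at most `s + 1` vertices `z ∉ A` complete a pair `p ⊆ A` to an edge. As
`6s + 10 ≤ 6 (s + 1) + 4`, equality holds throughout, and the same disjointness shows that `p` and
`A \ p` are completed by the same vertices.
-/

namespace AlmostIntersecting

open Finset

variable {α : Type*} [DecidableEq α] {F G : Finset (Finset α)} {s : ℕ} {e g : Finset α}
  {a b b' u v w₁ w₂ x y z : α}

theorem exists_mem_le_add_card_mul {ι : Type*} {t : Finset ι} (ht : t.Nonempty) {f : ι → ℕ}
    {m n : ℕ} (h : m ≤ n + ∑ i ∈ t, f i) : ∃ i ∈ t, m ≤ n + #t * f i := by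
  refine exists_le_of_sum_le ht ?_
  rw [sum_const, smul_eq_mul, sum_add_distrib, sum_const, smul_eq_mul, ← mul_sum, ← mul_add]
  exact Nat.mul_le_mul_left _ h

theorem card_le_of_subset_union_union {ι : Type*} [DecidableEq ι] {t a b c : Finset ι}
    (h : t ⊆ a ∪ b ∪ c) : #t ≤ #a + #b + #c :=
  (card_le_card h).trans <| (card_union_le _ _).trans <| Nat.add_le_add_right (card_union_le _ _) _

theorem exists_eq_triple (he : #e = 3) (hu : u ∈ e) (hv : v ∈ e) (huv : u ≠ v) :
    ∃ y, y ≠ u ∧ y ≠ v ∧ e = {u, v, y} := by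
  obtain ⟨y, hy⟩ := card_eq_one.1 <| show #((e.erase u).erase v) = 1 by
    rw [card_erase_of_mem (mem_erase.2 ⟨huv.symm, hv⟩), card_erase_of_mem hu, he]
  have hy' : y ∈ (e.erase u).erase v := hy ▸ mem_singleton_self y
  simp only [mem_erase] at hy'
  refine ⟨y, hy'.2.1, hy'.1, (eq_of_subset_of_card_le ?_ ?_).symm⟩
  · simp [insert_subset_iff, hu, hv, hy'.2.2]
  · rw [he, card_eq_three.2 ⟨u, v, y, huv, hy'.2.1.symm, hy'.1.symm, rfl⟩]

theorem sum_le_add_mul_of_le {ι : Type*} [DecidableEq ι] {t : Finset ι} {f : ι → ℕ} {c : ℕ}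
    (hf : ∀ i ∈ t, f i ≤ c) {j : ι} (hj : j ∈ t) : ∑ i ∈ t, f i ≤ f j + (#t - 1) * c := by
  rw [← add_sum_erase t f hj, ← card_erase_of_mem hj, ← smul_eq_mul]
  exact Nat.add_le_add_left (sum_le_card_nsmul _ _ _ fun i hi => hf i (mem_of_mem_erase hi)) _

def degree (F : Finset (Finset α)) (v : α) : ℕ := #{e ∈ F | v ∈ e}

def codegree (F : Finset (Finset α)) (x y : α) : ℕ := #{e ∈ F | x ∈ e ∧ y ∈ e}

def missDegree (F : Finset (Finset α)) (x y : α) : ℕ := #{e ∈ F | x ∉ e ∧ y ∉ e}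

def IsAlmostIntersecting (s : ℕ) (F : Finset (Finset α)) : Prop :=
  ∀ e ∈ F, #{f ∈ F | Disjoint e f} ≤ s

structure IsAdmissible (s : ℕ) (F : Finset (Finset α)) : Prop where
  sized : (F : Set (Finset α)).Sized 3
  almostIntersecting : IsAlmostIntersecting s F
  pairsAvoidable : ∀ e ∈ F, ∀ x ∈ e, ∀ y ∈ e, x ≠ y → ∃ g ∈ F, x ∉ g ∧ y ∉ g

theorem codegree_comm (F : Finset (Finset α)) (x y : α) : codegree F x y = codegree F y x := by
  simp only [codegree, and_comm]

theorem degree_filter_mem (F : Finset (Finset α)) (x y : α) :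
    degree {e ∈ F | x ∈ e} y = codegree F x y := by
  rw [degree, codegree, filter_filter]

theorem exists_mem_of_codegree_pos (h : 0 < codegree F x y) : ∃ e ∈ F, x ∈ e ∧ y ∈ e := by
  obtain ⟨e, he⟩ := card_pos.1 h
  exact ⟨e, (mem_filter.1 he).1, (mem_filter.1 he).2⟩

theorem card_add_codegree (F : Finset (Finset α)) (x y : α) :
    #F + codegree F x y = degree F x + degree F y + missDegree F x y := by
  simp only [degree, codegree, missDegree, card_filter]
  rw [card_eq_sum_ones, ← sum_add_distrib, ← sum_add_distrib, ← sum_add_distrib]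
  refine sum_congr rfl fun e _ => ?_
  by_cases x ∈ e <;> by_cases y ∈ e <;> simp [*]

theorem degree_add_card_filter_notMem (F : Finset (Finset α)) (x : α) :
    degree F x + #{e ∈ F | x ∉ e} = #F :=
  card_filter_add_card_filter_not _

theorem card_le_card_filter_disjoint_add_sum_degree (G : Finset (Finset α)) (e : Finset α) :
    #G ≤ #{f ∈ G | Disjoint e f} + ∑ v ∈ e, degree G v := by
  rw [← card_filter_add_card_filter_not (s := G) (Disjoint e)]
  gcongr
  refine (card_le_card fun f hf => ?_).trans card_biUnion_le
  obtain ⟨hfG, hef⟩ := mem_filter.1 hf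
  obtain ⟨v, hve, hvf⟩ := not_disjoint_iff.1 hef
  exact mem_biUnion.2 ⟨v, hve, mem_filter.2 ⟨hfG, hvf⟩⟩

theorem IsAlmostIntersecting.card_le_add_sum_degree (hF : IsAlmostIntersecting s F) (hGF : G ⊆ F)
    (he : e ∈ F) : #G ≤ s + ∑ v ∈ e, degree G v :=
  (card_le_card_filter_disjoint_add_sum_degree G e).trans <|
    Nat.add_le_add_right ((card_le_card (filter_subset_filter _ hGF)).trans (hF e he)) _

theorem IsAlmostIntersecting.degree_le_add_sum_codegree (hF : IsAlmostIntersecting s F)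
    (hg : g ∈ F) (v : α) : degree F v ≤ s + ∑ w ∈ g, codegree F v w := by
  have h := hF.card_le_add_sum_degree (filter_subset (v ∈ ·) F) hg
  simp only [degree_filter_mem] at h
  exact h

theorem card_filter_mem_mem_mem_le_one (hF : (F : Set (Finset α)).Sized 3) (hxy : x ≠ y)
    (hxz : x ≠ z) (hyz : y ≠ z) : #{e ∈ F | x ∈ e ∧ y ∈ e ∧ z ∈ e} ≤ 1 := by
  have hxyz : #{x, y, z} = 3 := card_eq_three.2 ⟨x, y, z, hxy, hxz, hyz, rfl⟩
  have key : ∀ f ∈ ({e ∈ F | x ∈ e ∧ y ∈ e ∧ z ∈ e} : Finset _), f = {x, y, z} := fun f hf => by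
    obtain ⟨hfF, hx, hy, hz⟩ := mem_filter.1 hf
    refine (eq_of_subset_of_card_le ?_ (by rw [hF hfF, hxyz])).symm
    simp [insert_subset_iff, hx, hy, hz]
  exact card_le_one.2 fun e he f hf => (key e he).trans (key f hf).symm

theorem codegree_le_three_add (hF : (F : Set (Finset α)).Sized 3) (hg : g ∈ F) (hxy : x ≠ y)
    (hx : x ∉ g) (hy : y ∉ g) :
    codegree F x y ≤ 3 + #{f ∈ F | x ∈ f ∧ y ∈ f ∧ Disjoint g f} := by
  have h := card_le_card_filter_disjoint_add_sum_degree {f ∈ F | x ∈ f ∧ y ∈ f} g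
  have hdeg : ∀ z ∈ g, degree {f ∈ F | x ∈ f ∧ y ∈ f} z ≤ 1 := fun z hz => by
    rw [degree, filter_filter]
    simpa only [and_assoc] using card_filter_mem_mem_mem_le_one hF hxy
      (ne_of_mem_of_not_mem hz hx).symm (ne_of_mem_of_not_mem hz hy).symm
  have hsum : ∑ z ∈ g, degree {f ∈ F | x ∈ f ∧ y ∈ f} z ≤ #g • 1 := sum_le_card_nsmul g _ 1 hdeg
  rw [hF hg, smul_eq_mul, mul_one] at hsum
  rw [filter_filter] at h
  simp only [and_assoc] at h
  unfold codegree
  omega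

theorem IsAdmissible.codegree_le (hF : IsAdmissible s F) (hxy : x ≠ y) :
    codegree F x y ≤ s + 3 := by
  rcases (codegree F x y).eq_zero_or_pos with h | h
  · omega
  obtain ⟨e, he, hx, hy⟩ := exists_mem_of_codegree_pos h
  obtain ⟨g, hg, hxg, hyg⟩ := hF.pairsAvoidable e he x hx y hy hxy
  refine (codegree_le_three_add hF.sized hg hxy hxg hyg).trans ?_
  rw [add_comm]
  gcongr
  refine (card_le_card fun f hf => ?_).trans (hF.almostIntersecting g hg)
  simp only [mem_filter] at hf ⊢
  exact ⟨hf.1, hf.2.2.2⟩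

theorem IsAdmissible.exists_notMem (hF : IsAdmissible s F) (he : e ∈ F) (hv : v ∈ e) :
    ∃ g ∈ F, v ∉ g := by
  obtain ⟨y, hy, hyv⟩ := exists_mem_ne (by rw [hF.sized he]; omega) v
  obtain ⟨g, hg, hvg, -⟩ := hF.pairsAvoidable e he v hv y hy hyv.symm
  exact ⟨g, hg, hvg⟩

theorem IsAdmissible.degree_le (hF : IsAdmissible s F) (v : α) : degree F v ≤ 4 * s + 9 := by
  rcases (degree F v).eq_zero_or_pos with h | h
  · omega
  obtain ⟨e, he⟩ := card_pos.1 h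
  obtain ⟨g, hg, hvg⟩ := hF.exists_notMem (mem_filter.1 he).1 (mem_filter.1 he).2
  have hcod : ∑ w ∈ g, codegree F v w ≤ #g • (s + 3) := sum_le_card_nsmul g _ _ fun w hw =>
    hF.codegree_le (ne_of_mem_of_not_mem hw hvg).symm
  have := hF.almostIntersecting.degree_le_add_sum_codegree hg v
  rw [hF.sized hg, smul_eq_mul] at hcod
  omega

theorem missDegree_mul_codegree_le (hF3 : (F : Set (Finset α)).Sized 3)
    (hF : IsAlmostIntersecting s F) (hxy : x ≠ y) :
    missDegree F x y * codegree F x y ≤ 3 * missDegree F x y + codegree F x y * s := by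
  set M := ({g ∈ F | x ∉ g ∧ y ∉ g} : Finset _)
  set L := ({f ∈ F | x ∈ f ∧ y ∈ f} : Finset _)
  -- double count the disjoint pairs `(g, f) ∈ M × L`
  have hM : ∀ g ∈ M, codegree F x y ≤ 3 + #(L.bipartiteAbove Disjoint g) := fun g hg => by
    obtain ⟨hgF, hxg, hyg⟩ := mem_filter.1 hg
    simpa only [bipartiteAbove, L, filter_filter, and_assoc] using
      codegree_le_three_add hF3 hgF hxy hxg hyg
  have hL : ∀ f ∈ L, #(M.bipartiteBelow Disjoint f) ≤ s := fun f hf => by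
    refine (card_le_card fun g hg => ?_).trans (hF f (mem_filter.1 hf).1)
    simp only [bipartiteBelow, M, mem_filter] at hg ⊢
    exact ⟨hg.1.1, hg.2.symm⟩
  have h1 := sum_le_sum hM
  have h2 : ∑ f ∈ L, #(M.bipartiteBelow Disjoint f) ≤ #L • s := sum_le_card_nsmul L _ s hL
  rw [← sum_card_bipartiteAbove_eq_sum_card_bipartiteBelow] at h2
  simp only [sum_add_distrib, sum_const, smul_eq_mul] at h1 h2
  change #M * codegree F x y ≤ 3 * #M + #L * s
  linarith

theorem missDegree_le_of_lt (hF3 : (F : Set (Finset α)).Sized 3) (hF : IsAlmostIntersecting s F)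
    (hxy : x ≠ y) {k : ℕ} (h : 3 * (s + k + 1) < (k + 1) * codegree F x y) :
    missDegree F x y ≤ s + k := by
  have key := missDegree_mul_codegree_le hF3 hF hxy
  by_contra! hlt
  have hc : 3 ≤ codegree F x y := by nlinarith
  nlinarith [Nat.mul_le_mul (Nat.succ_le_of_lt hlt) hc]

theorem codegree_add_codegree_le (hF3 : (F : Set (Finset α)).Sized 3)
    (hF : IsAlmostIntersecting s F) (hzb : z ≠ b) (hzb' : z ≠ b') (hbb' : b ≠ b') (he : e ∈ F)
    (hz : z ∉ e) (hb : b ∉ e) (hb' : b' ∉ e) : codegree F z b + codegree F z b' ≤ s + 7 := by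
  have h := codegree_le_three_add hF3 he hzb hz hb
  have h' := codegree_le_three_add hF3 he hzb' hz hb'
  set S := ({f ∈ F | z ∈ f ∧ b ∈ f ∧ Disjoint e f} : Finset _)
  set S' := ({f ∈ F | z ∈ f ∧ b' ∈ f ∧ Disjoint e f} : Finset _)
  have hunion : #(S ∪ S') ≤ s := by
    refine (card_le_card fun f hf => ?_).trans (hF e he)
    simp only [S, S', mem_union, mem_filter] at hf ⊢
    rcases hf with hf | hf <;> exact ⟨hf.1, hf.2.2.2⟩
  -- an edge in both `S` and `S'` contains `z, b, b'`
  have hinter : #(S ∩ S') ≤ 1 := by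
    refine (card_le_card fun f hf => ?_).trans (card_filter_mem_mem_mem_le_one hF3 hzb hzb' hbb')
    simp only [S, S', mem_inter, mem_filter] at hf ⊢
    exact ⟨hf.1.1, hf.1.2.1, hf.1.2.2.1, hf.2.2.2.1⟩
  have := card_union_add_card_inter S S'
  omega

theorem IsAdmissible.two_mul_add_one_le_card_filter_notMem (hF : IsAdmissible s F)
    (hcard : #F = 6 * s + 10) (x : α) : 2 * s + 1 ≤ #{e ∈ F | x ∉ e} := by
  have := hF.degree_le x
  have := degree_add_card_filter_notMem F x
  omega

theorem IsAdmissible.exists_le_two_mul_degree (hF : IsAdmissible s F) (hcard : #F = 6 * s + 10)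
    (hs : 625 < s) : ∃ x, 5 * s + 24 ≤ 2 * degree F x := by
  obtain ⟨e, he⟩ : F.Nonempty := card_pos.1 (by omega)
  obtain ⟨x, hxe, hx⟩ := exists_mem_le_add_card_mul (card_pos.1 (by rw [hF.sized he]; omega))
    (hF.almostIntersecting.card_le_add_sum_degree subset_rfl he)
  obtain ⟨g, hg, hxg⟩ := hF.exists_notMem he hxe
  obtain ⟨w, hwg, hw⟩ := exists_mem_le_add_card_mul (card_pos.1 (by rw [hF.sized hg]; omega))
    (hF.almostIntersecting.degree_le_add_sum_codegree hg x)
  rw [hF.sized he] at hx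
  rw [hF.sized hg] at hw
  -- `3 deg x ≥ 5s + 10` and `9 codeg(x, w) ≥ 2s + 10`, so few edges miss both `x` and `w`
  have hmiss := missDegree_le_of_lt (k := 14) hF.sized hF.almostIntersecting
    (ne_of_mem_of_not_mem hwg hxg).symm (by omega)
  have := card_add_codegree F x w
  by_contra! h
  have := h x
  have := h w
  omega

/-- The vertices `u` that the pigeonhole principle can extract from
`degree F x ≤ s + ∑ w ∈ g, codegree F x w` for an edge `g` avoiding `x`. -/
def heavySet (s : ℕ) (F : Finset (Finset α)) (x : α) : Finset α :=
  {u ∈ F.biUnion id | u ≠ x ∧ degree F x ≤ s + 3 * codegree F x u}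

theorem mem_heavySet (h : s < degree F x) :
    u ∈ heavySet s F x ↔ u ≠ x ∧ degree F x ≤ s + 3 * codegree F x u := by
  refine ⟨fun hu => (mem_filter.1 hu).2, fun hu => mem_filter.2 ⟨?_, hu⟩⟩
  obtain ⟨e, he, -, hue⟩ := exists_mem_of_codegree_pos (show 0 < codegree F x u by omega)
  exact mem_biUnion.2 ⟨e, he, hue⟩

theorem exists_mem_heavySet (hF3 : (F : Set (Finset α)).Sized 3) (hF : IsAlmostIntersecting s F)
    (hg : g ∈ F) (hxg : x ∉ g) : ∃ u ∈ g, u ∈ heavySet s F x := by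
  obtain ⟨u, hug, hu⟩ := exists_mem_le_add_card_mul (card_pos.1 (by rw [hF3 hg]; omega))
    (hF.degree_le_add_sum_codegree hg x)
  rw [hF3 hg] at hu
  exact ⟨u, hug, mem_filter.2 ⟨mem_biUnion.2 ⟨g, hg, hug⟩, ne_of_mem_of_not_mem hug hxg, hu⟩⟩

theorem mem_or_mem_of_mem_heavySet (hF3 : (F : Set (Finset α)).Sized 3)
    (hF : IsAlmostIntersecting s F) (hx : 5 * s + 24 ≤ 2 * degree F x) (hg : g ∈ F) (hxg : x ∉ g)
    (hu : u ∈ heavySet s F x) (hv : v ∈ heavySet s F x) (huv : u ≠ v) : u ∈ g ∨ v ∈ g := by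
  rw [mem_heavySet (by omega)] at hu hv
  by_contra! h
  have := codegree_add_codegree_le hF3 hF hu.1.symm hv.1.symm huv hg hxg h.1 h.2
  omega

theorem card_sdiff_heavySet_le_one (hF3 : (F : Set (Finset α)).Sized 3)
    (hF : IsAlmostIntersecting s F) (hx : 5 * s + 24 ≤ 2 * degree F x) (hg : g ∈ F)
    (hxg : x ∉ g) : #(heavySet s F x \ g) ≤ 1 :=
  card_le_one.2 fun u hu v hv => by
    by_contra huv
    rw [mem_sdiff] at hu hv
    rcases mem_or_mem_of_mem_heavySet hF3 hF hx hg hxg hu.1 hv.1 huv with h | h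
    exacts [hu.2 h, hv.2 h]

theorem IsAdmissible.heavySet_nonempty (hF : IsAdmissible s F) (hcard : #F = 6 * s + 10)
    (x : α) : (heavySet s F x).Nonempty := by
  obtain ⟨g, hg⟩ := card_pos.1 <|
    Nat.lt_of_lt_of_le (by omega) (hF.two_mul_add_one_le_card_filter_notMem hcard x)
  obtain ⟨u, -, hu⟩ := exists_mem_heavySet hF.sized hF.almostIntersecting
    (mem_filter.1 hg).1 (mem_filter.1 hg).2
  exact ⟨u, hu⟩

theorem IsAdmissible.card_heavySet_le_three (hF : IsAdmissible s F) (hcard : #F = 6 * s + 10)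
    (hs : 625 < s) (hx : 5 * s + 24 ≤ 2 * degree F x) : #(heavySet s F x) ≤ 3 := by
  by_contra! h
  obtain ⟨W, hW, hW4⟩ := exists_subset_card_eq (n := 4) h
  have hsub : {e ∈ F | x ∉ e} ⊆ W.powersetCard 3 := fun e he => by
    obtain ⟨heF, hxe⟩ := mem_filter.1 he
    have h1 := (card_le_card (sdiff_subset_sdiff hW subset_rfl)).trans
      (card_sdiff_heavySet_le_one hF.sized hF.almostIntersecting hx heF hxe)
    have h2 := card_sdiff_add_card_inter W e
    have : e ∩ W = e :=
      eq_of_subset_of_card_le inter_subset_left (by rw [inter_comm, hF.sized heF]; omega)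
    exact mem_powersetCard.2 ⟨inter_eq_left.1 this, hF.sized heF⟩
  have h1 := card_le_card hsub
  have h2 := hF.two_mul_add_one_le_card_filter_notMem hcard x
  rw [card_powersetCard, hW4, show Nat.choose 4 3 = 4 from rfl] at h1
  omega

theorem IsAdmissible.heavySet_ne_singleton (hF : IsAdmissible s F) (hx : s < degree F x)
    (w : α) : heavySet s F x ≠ {w} := by
  intro hW
  have hw := (mem_heavySet hx).1 (hW ▸ mem_singleton_self w)
  obtain ⟨e, he, hxe, hwe⟩ := exists_mem_of_codegree_pos (show 0 < codegree F x w by omega)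
  obtain ⟨g, hg, hxg, hwg⟩ := hF.pairsAvoidable e he x hxe w hwe hw.1.symm
  obtain ⟨u, hug, hu⟩ := exists_mem_heavySet hF.sized hF.almostIntersecting hg hxg
  rw [hW, mem_singleton] at hu
  exact hwg (hu ▸ hug)

theorem IsAdmissible.exists_mem_heavySet_of_card_eq_three (hF : IsAdmissible s F)
    (hcard : #F = 6 * s + 10) (hs : 625 < s) (hx : 5 * s + 24 ≤ 2 * degree F x)
    (hW : #(heavySet s F x) = 3) (he : e ∈ F) : ∃ w ∈ e, w ∈ heavySet s F x := by
  by_contra! h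
  obtain ⟨w₁, w₂, w₃, h12, h13, h23, hW⟩ := card_eq_three.1 hW
  have hw : w₁ ∈ heavySet s F x ∧ w₂ ∈ heavySet s F x ∧ w₃ ∈ heavySet s F x := by simp [hW]
  have hwe : w₁ ∉ e ∧ w₂ ∉ e ∧ w₃ ∉ e :=
    ⟨fun h' => h _ h' hw.1, fun h' => h _ h' hw.2.1, fun h' => h _ h' hw.2.2⟩
  have c1 := codegree_add_codegree_le hF.sized hF.almostIntersecting h12 h13 h23 he
    hwe.1 hwe.2.1 hwe.2.2
  have c2 := codegree_add_codegree_le hF.sized hF.almostIntersecting h12.symm h23 h13 he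
    hwe.2.1 hwe.1 hwe.2.2
  have c3 := codegree_add_codegree_le hF.sized hF.almostIntersecting h13.symm h23.symm h12 he
    hwe.2.2 hwe.1 hwe.2.1
  rw [codegree_comm F w₂ w₁] at c2
  rw [codegree_comm F w₃ w₁, codegree_comm F w₃ w₂] at c3
  -- every edge avoiding `x` contains two of the `wᵢ`
  have hcover : #{g ∈ F | x ∉ g} ≤ codegree F w₁ w₂ + codegree F w₁ w₃ + codegree F w₂ w₃ :=
    card_le_of_subset_union_union fun g hg => by
      obtain ⟨hgF, hxg⟩ := mem_filter.1 hg
      have key {u v} := mem_or_mem_of_mem_heavySet (u := u) (v := v) hF.sized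
        hF.almostIntersecting hx hgF hxg
      have := key hw.1 hw.2.1 h12
      have := key hw.1 hw.2.2 h13
      have := key hw.2.1 hw.2.2 h23
      simp only [mem_union, mem_filter]
      tauto
  have := hF.two_mul_add_one_le_card_filter_notMem hcard x
  omega

theorem IsAdmissible.two_le_card_inter_insert_heavySet (hF : IsAdmissible s F)
    (hcard : #F = 6 * s + 10) (hs : 625 < s) (hx : 5 * s + 24 ≤ 2 * degree F x)
    (hW : #(heavySet s F x) = 3) (he : e ∈ F) : 2 ≤ #(e ∩ insert x (heavySet s F x)) := by
  by_cases hxe : x ∈ e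
  · obtain ⟨w, hwe, hwW⟩ := hF.exists_mem_heavySet_of_card_eq_three hcard hs hx hW he
    have hwx := ((mem_heavySet (by omega)).1 hwW).1
    calc 2 = #{x, w} := (card_pair hwx.symm).symm
      _ ≤ _ := card_le_card (by simp [insert_subset_iff, hxe, hwe, hwW])
  · have h1 := card_sdiff_heavySet_le_one hF.sized hF.almostIntersecting hx he hxe
    have h2 := card_sdiff_add_card_inter (heavySet s F x) e
    calc 2 ≤ #(heavySet s F x ∩ e) := by omega
      _ ≤ _ := card_le_card (by rw [inter_comm]; exact inter_subset_inter_left (subset_insert _ _))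

theorem degree_le_codegree_add_codegree_add_card (F : Finset (Finset α)) (x w₁ w₂ : α) :
    degree F x ≤ codegree F x w₁ + codegree F x w₂ + #{e ∈ F | x ∈ e ∧ w₁ ∉ e ∧ w₂ ∉ e} :=
  card_le_of_subset_union_union fun e he => by
    obtain ⟨heF, hxe⟩ := mem_filter.1 he
    simp only [mem_union, mem_filter]
    tauto

/-- What `heavySet s F x = {w₁, w₂}` says, in a form symmetric in `w₁` and `w₂`. -/
structure HeavyPair (s : ℕ) (F : Finset (Finset α)) (x w₁ w₂ : α) : Prop where
  ne_left : w₁ ≠ x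
  ne_right : w₂ ≠ x
  ne : w₁ ≠ w₂
  heavy_left : degree F x ≤ s + 3 * codegree F x w₁
  heavy_right : degree F x ≤ s + 3 * codegree F x w₂
  cover : ∀ g ∈ F, x ∉ g → w₁ ∈ g ∨ w₂ ∈ g
  light : ∀ u, u ≠ x → u ≠ w₁ → u ≠ w₂ → s + 3 * codegree F x u < degree F x

theorem heavyPair_of_heavySet_eq (hF3 : (F : Set (Finset α)).Sized 3)
    (hF : IsAlmostIntersecting s F) (hx : s < degree F x) (hne : w₁ ≠ w₂)
    (hW : heavySet s F x = {w₁, w₂}) : HeavyPair s F x w₁ w₂ := by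
  have hmem : ∀ u, u ∈ heavySet s F x ↔ u = w₁ ∨ u = w₂ := by simp [hW]
  have h₁ := (mem_heavySet hx).1 ((hmem w₁).2 (Or.inl rfl))
  have h₂ := (mem_heavySet hx).1 ((hmem w₂).2 (Or.inr rfl))
  refine ⟨h₁.1, h₂.1, hne, h₁.2, h₂.2, fun g hg hxg => ?_, fun u hux hu₁ hu₂ => ?_⟩
  · obtain ⟨u, hug, hu⟩ := exists_mem_heavySet hF3 hF hg hxg
    rcases (hmem u).1 hu with rfl | rfl
    exacts [Or.inl hug, Or.inr hug]
  · by_contra! h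
    rcases (hmem u).1 ((mem_heavySet hx).2 ⟨hux, h⟩) with rfl | rfl
    exacts [hu₁ rfl, hu₂ rfl]

namespace HeavyPair

theorem symm (h : HeavyPair s F x w₁ w₂) : HeavyPair s F x w₂ w₁ :=
  ⟨h.ne_right, h.ne_left, h.ne.symm, h.heavy_right, h.heavy_left,
    fun g hg hxg => (h.cover g hg hxg).symm, fun u hux hu₂ hu₁ => h.light u hux hu₁ hu₂⟩

theorem card_le (h : HeavyPair s F x w₁ w₂) :
    #F ≤ degree F x + missDegree F x w₂ + missDegree F x w₁ + codegree F w₁ w₂ := by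
  have hsub : #{e ∈ F | x ∉ e} ≤ missDegree F x w₂ + missDegree F x w₁ + codegree F w₁ w₂ :=
    card_le_of_subset_union_union fun e he => by
      obtain ⟨heF, hxe⟩ := mem_filter.1 he
      have := h.cover e heF hxe
      simp only [mem_union, mem_filter]
      tauto
  have := degree_add_card_filter_notMem F x
  omega

theorem missDegree_le (hF3 : (F : Set (Finset α)).Sized 3) (hF : IsAlmostIntersecting s F)
    (hx : 5 * s + 24 ≤ 2 * degree F x) (h : HeavyPair s F x w₁ w₂) :
    missDegree F x w₂ ≤ s + 6 :=
  missDegree_le_of_lt (k := 6) hF3 hF h.ne_right.symm (by have := h.heavy_right; omega)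

theorem three_mul_le_degree (hF : IsAdmissible s F) (hcard : #F = 6 * s + 10)
    (hx : 5 * s + 24 ≤ 2 * degree F x) (h : HeavyPair s F x w₁ w₂) : 3 * s ≤ degree F x + 5 := by
  have := h.card_le
  have := h.missDegree_le hF.sized hF.almostIntersecting hx
  have := h.symm.missDegree_le hF.sized hF.almostIntersecting hx
  have := hF.codegree_le h.ne
  omega

theorem mem_of_le_three_mul_codegree (hF : IsAdmissible s F) (hcard : #F = 6 * s + 10)
    (hx : 5 * s + 24 ≤ 2 * degree F x) (h : HeavyPair s F x w₁ w₂) (hux : u ≠ x) (huw₂ : u ≠ w₂)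
    (hu : s + 29 ≤ 3 * codegree F x u) (hg : g ∈ F) (hxg : x ∉ g) (hw₂g : w₂ ∉ g) : u ∈ g := by
  by_contra hug
  have := codegree_add_codegree_le hF.sized hF.almostIntersecting h.ne_right.symm hux.symm
    huw₂.symm hg hxg hw₂g hug
  have := h.heavy_right
  have := h.three_mul_le_degree hF hcard hx
  omega

theorem exists_avoid (hF : IsAdmissible s F) (hx : s < degree F x) (h : HeavyPair s F x w₁ w₂) :
    ∃ g ∈ F, x ∉ g ∧ w₂ ∉ g := by
  obtain ⟨e, he, hxe, hwe⟩ :=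
    exists_mem_of_codegree_pos (show 0 < codegree F x w₂ by have := h.heavy_right; omega)
  exact hF.pairsAvoidable e he x hxe w₂ hwe h.ne_right.symm

theorem exists_mem_le_three_mul_codegree (hF : IsAdmissible s F) (hcard : #F = 6 * s + 10)
    (hs : 625 < s) (hx : 5 * s + 24 ≤ 2 * degree F x) (h : HeavyPair s F x w₁ w₂) (hg : g ∈ F)
    (hxg : x ∉ g) (hw₂g : w₂ ∉ g) : ∃ a ∈ g, a ≠ w₁ ∧ s + 29 ≤ 3 * codegree F x a := by
  have hw₁g := (h.cover g hg hxg).resolve_right hw₂g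
  have hsum := hF.almostIntersecting.degree_le_add_sum_codegree hg x
  rw [← add_sum_erase g _ hw₁g, ← add_assoc] at hsum
  have hcard₂ : #(g.erase w₁) = 2 := by rw [card_erase_of_mem hw₁g, hF.sized hg]
  obtain ⟨a, ha, hle⟩ := exists_mem_le_add_card_mul (card_pos.1 (by omega)) hsum
  rw [hcard₂] at hle
  have := hF.codegree_le h.ne_left.symm
  have := h.three_mul_le_degree hF hcard hx
  exact ⟨a, mem_of_mem_erase ha, ne_of_mem_erase ha, by omega⟩

theorem codegree_left_add_codegree_right_le (hF : IsAdmissible s F)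
    (hx : 5 * s + 24 ≤ 2 * degree F x) (h : HeavyPair s F x w₁ w₂) (hax : a ≠ x) (ha₁ : a ≠ w₁)
    (ha₂ : a ≠ w₂) : codegree F a w₁ + codegree F a w₂ ≤ s + 7 := by
  by_contra! hlt
  -- otherwise every edge through `x` missing `w₁, w₂` contains `a`
  have hT : #{e ∈ F | x ∈ e ∧ w₁ ∉ e ∧ w₂ ∉ e} ≤ codegree F x a := card_le_card fun e he => by
    obtain ⟨heF, hxe, h₁, h₂⟩ := mem_filter.1 he
    refine mem_filter.2 ⟨heF, hxe, not_not.1 fun hae => ?_⟩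
    have := codegree_add_codegree_le hF.sized hF.almostIntersecting ha₁ ha₂ h.ne heF hae h₁ h₂
    omega
  have := degree_le_codegree_add_codegree_add_card F x w₁ w₂
  have := h.light a hax ha₁ ha₂
  have := hF.codegree_le h.ne_left.symm
  have := hF.codegree_le h.ne_right.symm
  omega

theorem missDegree_le_codegree (hF : IsAdmissible s F) (hcard : #F = 6 * s + 10)
    (hx : 5 * s + 24 ≤ 2 * degree F x) (h : HeavyPair s F x w₁ w₂) (hax : a ≠ x) (ha₂ : a ≠ w₂)
    (ha : s + 29 ≤ 3 * codegree F x a) : missDegree F x w₂ ≤ codegree F a w₁ :=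
  card_le_card fun g hg => by
    obtain ⟨hgF, hxg, hw₂g⟩ := mem_filter.1 hg
    exact mem_filter.2 ⟨hgF, h.mem_of_le_three_mul_codegree hF hcard hx hax ha₂ ha hgF hxg hw₂g,
      (h.cover g hgF hxg).resolve_right hw₂g⟩

theorem four_mul_le_degree (hF : IsAdmissible s F) (hcard : #F = 6 * s + 10)
    (hx : 5 * s + 24 ≤ 2 * degree F x) (h : HeavyPair s F x w₁ w₂) (hax : a ≠ x) (ha₁ : a ≠ w₁)
    (ha₂ : a ≠ w₂) (ha : s + 29 ≤ 3 * codegree F x a) : 4 * s ≤ degree F x := by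
  have := h.missDegree_le_codegree hF hcard hx hax ha₂ ha
  have := h.symm.missDegree_le_codegree hF hcard hx hax ha₁ ha
  have := h.codegree_left_add_codegree_right_le hF hx hax ha₁ ha₂
  have := h.card_le
  have := hF.codegree_le h.ne
  omega

theorem eq_of_le_three_mul_codegree (hF : IsAdmissible s F) (hcard : #F = 6 * s + 10) (hs : 625 < s)
    (hx : 5 * s + 24 ≤ 2 * degree F x) (h : HeavyPair s F x w₁ w₂) (hax : a ≠ x) (ha₁ : a ≠ w₁)
    (ha₂ : a ≠ w₂) (ha : s + 29 ≤ 3 * codegree F x a) (hbx : b ≠ x) (hb₁ : b ≠ w₁)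
    (hb₂ : b ≠ w₂) (hb : s + 29 ≤ 3 * codegree F x b) : a = b := by
  by_contra hab
  -- `a` and `b` would lie in every edge avoiding `x` and `w₂`, which would then be `{w₁, a, b}`
  have key : ∀ {w₁ w₂}, HeavyPair s F x w₁ w₂ → a ≠ w₁ → b ≠ w₁ → a ≠ w₂ → b ≠ w₂ →
      missDegree F x w₂ ≤ 1 := fun {w₁ w₂} h ha₁ hb₁ ha₂ hb₂ =>
    (card_le_card fun g hg => by
      obtain ⟨hgF, hxg, hw₂g⟩ := mem_filter.1 hg
      exact mem_filter.2 ⟨hgF, (h.cover g hgF hxg).resolve_right hw₂g,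
        h.mem_of_le_three_mul_codegree hF hcard hx hax ha₂ ha hgF hxg hw₂g,
        h.mem_of_le_three_mul_codegree hF hcard hx hbx hb₂ hb hgF hxg hw₂g⟩).trans
    (card_filter_mem_mem_mem_le_one hF.sized ha₁.symm hb₁.symm hab)
  have := key h ha₁ hb₁ ha₂ hb₂
  have := key h.symm ha₂ hb₂ ha₁ hb₁
  have := h.card_le
  have := hF.codegree_le h.ne
  have := hF.degree_le x
  omega

theorem exists_mem_le_four_mul_codegree (hF : IsAdmissible s F) (hcard : #F = 6 * s + 10)
    (h : HeavyPair s F x w₁ w₂) (he : e ∈ F) (hxe : x ∈ e) :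
    ∃ z ∈ e, z ≠ x ∧ (s + 1 ≤ 4 * codegree F z w₁ ∨ s + 1 ≤ 4 * codegree F z w₂) := by
  have hG := hF.almostIntersecting.card_le_add_sum_degree (filter_subset (x ∉ ·) F) he
  have hGx : degree {g ∈ F | x ∉ g} x = 0 := card_eq_zero.2 <| filter_eq_empty_iff.2 fun g hg =>
    (mem_filter.1 hg).2
  have hGz : ∀ z, degree {g ∈ F | x ∉ g} z ≤ codegree F z w₁ + codegree F z w₂ := fun z =>
    (card_le_card fun g hg => by
      obtain ⟨⟨hgF, hxg⟩, hzg⟩ := mem_filter.1 hg |>.imp_left mem_filter.1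
      rcases h.cover g hgF hxg with hw | hw
      exacts [mem_union_left _ (mem_filter.2 ⟨hgF, hzg, hw⟩),
        mem_union_right _ (mem_filter.2 ⟨hgF, hzg, hw⟩)]).trans (card_union_le _ _)
  rw [← add_sum_erase e _ hxe, hGx, zero_add] at hG
  have hsum := hG.trans (Nat.add_le_add_left (sum_le_sum fun z _ => hGz z) s)
  have := hF.two_mul_add_one_le_card_filter_notMem hcard x
  have hcard₂ : #(e.erase x) = 2 := by rw [card_erase_of_mem hxe, hF.sized he]
  have hsum' : s + 1 ≤ 0 + ∑ z ∈ e.erase x, (codegree F z w₁ + codegree F z w₂) := by omega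
  obtain ⟨z, hz, hle⟩ := exists_mem_le_add_card_mul (card_pos.1 (by omega)) hsum'
  rw [hcard₂] at hle
  exact ⟨z, mem_of_mem_erase hz, ne_of_mem_erase hz, by omega⟩

theorem mem_of_le_four_mul_codegree (hF3 : (F : Set (Finset α)).Sized 3)
    (hF : IsAlmostIntersecting s F) (hs : 625 < s) (h : HeavyPair s F x w₁ w₂)
    (hx : 4 * s ≤ degree F x) (hzx : z ≠ x) (hz₁ : z ≠ w₁) (hz : s + 1 ≤ 4 * codegree F z w₁)
    (hg : g ∈ F) (hxg : x ∉ g) (hw₁g : w₁ ∉ g) : z ∈ g := by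
  by_contra hzg
  have := codegree_add_codegree_le hF3 hF h.ne_left hz₁.symm hzx.symm hg hw₁g hxg hzg
  rw [codegree_comm F w₁ x, codegree_comm F w₁ z] at this
  have := h.heavy_left
  omega

theorem card_filter_le_codegree_add (hF : IsAdmissible s F) (hcard : #F = 6 * s + 10)
    (hs : 625 < s) (h : HeavyPair s F x w₁ w₂) (hx : 4 * s ≤ degree F x) (hg₁ : {w₁, a, y} ∈ F)
    (hxg₁ : x ∉ ({w₁, a, y} : Finset α)) (hw₂g₁ : w₂ ∉ ({w₁, a, y} : Finset α))
    (hg₂ : {w₂, a, z} ∈ F) (hxg₂ : x ∉ ({w₂, a, z} : Finset α))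
    (hw₁g₂ : w₁ ∉ ({w₂, a, z} : Finset α)) :
    #{e ∈ F | x ∈ e ∧ w₁ ∉ e ∧ w₂ ∉ e} ≤ codegree F x a + codegree F x y + codegree F x z :=
  card_le_of_subset_union_union fun e he => by
    obtain ⟨heF, hxe, hw₁e, hw₂e⟩ := mem_filter.1 he
    obtain ⟨v, hve, hvx, hv⟩ := h.exists_mem_le_four_mul_codegree hF hcard heF hxe
    have hv' : v = a ∨ v = y ∨ v = z := by
      rcases hv with hv | hv
      · have := h.mem_of_le_four_mul_codegree hF.sized hF.almostIntersecting hs hx hvx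
          (ne_of_mem_of_not_mem hve hw₁e) hv hg₂ hxg₂ hw₁g₂
        simp only [mem_insert, mem_singleton] at this
        exact (this.resolve_left (ne_of_mem_of_not_mem hve hw₂e)).imp_right Or.inr
      · have := h.symm.mem_of_le_four_mul_codegree hF.sized hF.almostIntersecting hs hx hvx
          (ne_of_mem_of_not_mem hve hw₂e) hv hg₁ hxg₁ hw₂g₁
        simp only [mem_insert, mem_singleton] at this
        exact (this.resolve_left (ne_of_mem_of_not_mem hve hw₁e)).imp_right Or.inl
    simp only [mem_union, mem_filter]
    rcases hv' with rfl | rfl | rfl <;> simp [heF, hxe, hve]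

theorem false (hF : IsAdmissible s F) (hcard : #F = 6 * s + 10) (hs : 625 < s)
    (hx : 5 * s + 24 ≤ 2 * degree F x) (h : HeavyPair s F x w₁ w₂) : False := by
  obtain ⟨g₁, hg₁, hxg₁, hw₂g₁⟩ := h.exists_avoid hF (by omega)
  obtain ⟨g₂, hg₂, hxg₂, hw₁g₂⟩ := h.symm.exists_avoid hF (by omega)
  obtain ⟨a, hag₁, ha₁, ha⟩ := h.exists_mem_le_three_mul_codegree hF hcard hs hx hg₁ hxg₁ hw₂g₁
  have hax := ne_of_mem_of_not_mem hag₁ hxg₁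
  have ha₂ := ne_of_mem_of_not_mem hag₁ hw₂g₁
  have hag₂ := h.symm.mem_of_le_three_mul_codegree hF hcard hx hax ha₁ ha hg₂ hxg₂ hw₁g₂
  have hdeg := h.four_mul_le_degree hF hcard hx hax ha₁ ha₂ ha
  obtain ⟨y₁, hy₁w, hy₁a, rfl⟩ := exists_eq_triple (hF.sized hg₁)
    ((h.cover _ hg₁ hxg₁).resolve_right hw₂g₁) hag₁ ha₁.symm
  obtain ⟨y₂, hy₂w, hy₂a, rfl⟩ := exists_eq_triple (hF.sized hg₂)
    ((h.symm.cover _ hg₂ hxg₂).resolve_right hw₁g₂) hag₂ ha₂.symm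
  have hT := h.card_filter_le_codegree_add hF hcard hs hdeg hg₁ hxg₁ hw₂g₁ hg₂ hxg₂ hw₁g₂
  have hlight : ∀ y, y ≠ x → y ≠ w₁ → y ≠ w₂ → y ≠ a → 3 * codegree F x y ≤ s + 28 :=
    fun y hyx hy₁ hy₂ hya => by
      by_contra! hy
      exact hya (h.eq_of_le_three_mul_codegree hF hcard hs hx hyx hy₁ hy₂ hy hax ha₁ ha₂ ha)
  simp only [mem_insert, mem_singleton, not_or] at hxg₁ hw₂g₁ hxg₂ hw₁g₂
  have := hlight y₁ (Ne.symm hxg₁.2.2) hy₁w (Ne.symm hw₂g₁.2.2) hy₁a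
  have := hlight y₂ (Ne.symm hxg₂.2.2) (Ne.symm hw₁g₂.2.2) hy₂w hy₂a
  have := degree_le_codegree_add_codegree_add_card F x w₁ w₂
  have := hF.codegree_le h.ne_left.symm
  have := hF.codegree_le h.ne_right.symm
  have := hF.codegree_le hax.symm
  omega

end HeavyPair

variable {A p : Finset α}

/-- The function `f` of `M_f`: the vertices outside `A` that complete `p` to an edge. -/
def link (F : Finset (Finset α)) (A p : Finset α) : Finset α :=
  {x ∈ F.biUnion id | x ∉ A ∧ insert x p ∈ F}

theorem mem_link : x ∈ link F A p ↔ x ∉ A ∧ insert x p ∈ F :=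
  ⟨fun hx => (mem_filter.1 hx).2,
    fun hx => mem_filter.2 ⟨mem_biUnion.2 ⟨_, hx.2, mem_insert_self x p⟩, hx⟩⟩

theorem injOn_insert_link (hp : p ⊆ A) : Set.InjOn (insert · p) (link F A p) :=
  fun _ hx _ _ hxy => (insert_inj fun h => (mem_link.1 hx).1 (hp h)).1 hxy

theorem eq_biUnion_link_union (hF3 : (F : Set (Finset α)).Sized 3)
    (hA : ∀ e ∈ F, 2 ≤ #(e ∩ A)) :
    F = ((A.powersetCard 2).biUnion fun p => (link F A p).image (insert · p)) ∪
      {e ∈ F | e ⊆ A} := by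
  ext e
  simp only [mem_union, mem_biUnion, mem_image, mem_powersetCard, mem_filter, mem_link]
  refine ⟨fun he => ?_, ?_⟩
  · have hle : #(e ∩ A) ≤ 3 := hF3 he ▸ card_le_card inter_subset_left
    by_cases h2 : #(e ∩ A) = 2
    · left
      obtain ⟨x, hx⟩ := card_eq_one.1 <| show #(e \ A) = 1 by
        have := card_sdiff_add_card_inter e A
        rw [hF3 he] at this
        omega
      have hxA : x ∉ A := (mem_sdiff.1 (hx ▸ mem_singleton_self x)).2
      have hxe : insert x (e ∩ A) = e := by rw [insert_eq, ← hx, sdiff_union_inter]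
      exact ⟨e ∩ A, ⟨inter_subset_right, h2⟩, x, ⟨hxA, by rwa [hxe]⟩, hxe⟩
    · right
      refine ⟨he, inter_eq_left.1 (eq_of_subset_of_card_le inter_subset_left ?_)⟩
      have := hA e he
      rw [hF3 he]
      omega
  · rintro (⟨p, -, x, ⟨-, hx⟩, rfl⟩ | ⟨he, -⟩) <;> assumption

theorem card_le_sum_card_link_add (hF3 : (F : Set (Finset α)).Sized 3)
    (hA : ∀ e ∈ F, 2 ≤ #(e ∩ A)) :
    #F ≤ ∑ p ∈ A.powersetCard 2, #(link F A p) + #{e ∈ F | e ⊆ A} :=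
  calc #F = #(((A.powersetCard 2).biUnion fun p => (link F A p).image (insert · p)) ∪
        {e ∈ F | e ⊆ A}) := congrArg card (eq_biUnion_link_union hF3 hA)
    _ ≤ _ := (card_union_le _ _).trans <| Nat.add_le_add_right
        (card_biUnion_le.trans (sum_le_sum fun _ _ => card_image_le)) _

theorem card_link_le_codegree (hA : {u, v} ⊆ A) :
    #(link F A {u, v}) ≤ codegree F u v :=
  card_le_card_of_injOn (insert · {u, v})
    (fun x hx => mem_filter.2 ⟨(mem_link.1 hx).2, by simp, by simp⟩) (injOn_insert_link hA)

theorem card_erase_link_sdiff_le (hF : IsAlmostIntersecting s F) (hp : p ⊆ A)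
    (hx : x ∈ link F A p) : #((link F A (A \ p)).erase x) ≤ s := by
  obtain ⟨hxA, hxF⟩ := mem_link.1 hx
  refine (card_le_card_of_injOn (insert · (A \ p)) (fun y hy => ?_)
    ((injOn_insert_link sdiff_subset).mono fun y hy => mem_of_mem_erase hy)).trans (hF _ hxF)
  obtain ⟨hyx, hy⟩ := mem_erase.1 hy
  obtain ⟨hyA, hyF⟩ := mem_link.1 hy
  refine mem_filter.2 ⟨hyF, disjoint_left.2 fun z hz hz' => ?_⟩
  rcases mem_insert.1 hz with rfl | hzp <;> rcases mem_insert.1 hz' with rfl | hz'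
  · exact hyx rfl
  · exact hxA (mem_sdiff.1 hz').1
  · exact hyA (hp hzp)
  · exact (mem_sdiff.1 hz').2 hzp

theorem link_subset_link_sdiff (hF : IsAlmostIntersecting s F) (hp : p ⊆ A)
    (hcard : #(link F A (A \ p)) = s + 1) : link F A p ⊆ link F A (A \ p) := fun x hx => by
  by_contra hx'
  have := card_erase_link_sdiff_le hF hp hx
  rw [erase_eq_of_notMem hx', hcard] at this
  omega

theorem card_link_le_of_nonempty (hF : IsAlmostIntersecting s F) (hp : p ⊆ A)
    (hne : (link F A (A \ p)).Nonempty) : #(link F A p) ≤ s + 1 := by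
  obtain ⟨x, hx⟩ := hne
  have := card_erase_link_sdiff_le hF sdiff_subset hx
  rw [Finset.sdiff_sdiff_eq_self hp] at this
  have := pred_card_le_card_erase (s := link F A p) (a := x)
  omega

theorem link_eq_link_sdiff (hF : IsAlmostIntersecting s F) (hp : p ⊆ A)
    (h : #(link F A p) = s + 1) (h' : #(link F A (A \ p)) = s + 1) :
    link F A p = link F A (A \ p) := by
  refine (link_subset_link_sdiff hF hp h').antisymm ?_
  have := link_subset_link_sdiff hF (sdiff_subset (s := A) (t := p))
  rw [Finset.sdiff_sdiff_eq_self hp] at this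
  exact this h

theorem sdiff_mem_powersetCard_two (hA4 : #A = 4) (hp : p ∈ A.powersetCard 2) :
    A \ p ∈ A.powersetCard 2 := by
  obtain ⟨hpA, hp2⟩ := mem_powersetCard.1 hp
  rw [mem_powersetCard, card_sdiff_of_subset hpA, hA4, hp2]
  exact ⟨sdiff_subset, rfl⟩

theorem IsAdmissible.card_link_eq (hF : IsAdmissible s F) (hcard : #F = 6 * s + 10)
    (hs : 625 < s) (hA4 : #A = 4) (hA : ∀ e ∈ F, 2 ≤ #(e ∩ A)) :
    (∀ p ∈ A.powersetCard 2, #(link F A p) = s + 1) ∧ {e ∈ F | e ⊆ A} = A.powersetCard 3 := by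
  have hP : #(A.powersetCard 2) = 6 := by rw [card_powersetCard, hA4]; rfl
  have hcount := card_le_sum_card_link_add hF.sized hA
  have htriples : {e ∈ F | e ⊆ A} ⊆ A.powersetCard 3 := fun e he =>
    mem_powersetCard.2 ⟨(mem_filter.1 he).2, hF.sized (mem_filter.1 he).1⟩
  have h3 := card_le_card htriples
  rw [card_powersetCard, hA4, show Nat.choose 4 3 = 4 from rfl] at h3
  have hle3 : ∀ p ∈ A.powersetCard 2, #(link F A p) ≤ s + 3 := fun p hp => by
    obtain ⟨hpA, hp2⟩ := mem_powersetCard.1 hp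
    obtain ⟨u, v, huv, rfl⟩ := card_eq_two.1 hp2
    exact (card_link_le_codegree hpA).trans (hF.codegree_le huv)
  have hne : ∀ p ∈ A.powersetCard 2, (link F A p).Nonempty := fun p hp => by
    by_contra hp'
    have := sum_le_add_mul_of_le hle3 hp
    rw [not_nonempty_iff_eq_empty.1 hp', hP, card_empty] at this
    omega
  have hle1 : ∀ p ∈ A.powersetCard 2, #(link F A p) ≤ s + 1 := fun p hp =>
    card_link_le_of_nonempty hF.almostIntersecting (mem_powersetCard.1 hp).1
      (hne _ (sdiff_mem_powersetCard_two hA4 hp))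
  have hsum := sum_le_card_nsmul _ _ _ hle1
  rw [hP, smul_eq_mul] at hsum
  refine ⟨fun p hp => ?_, eq_of_subset_of_card_le htriples ?_⟩
  · have h₁ := sum_le_add_mul_of_le hle1 hp
    have h₂ := hle1 p hp
    rw [hP] at h₁
    omega
  · rw [card_powersetCard, hA4, show Nat.choose 4 3 = 4 from rfl]
    omega

theorem IsAdmissible.exists_eq_of_two_le_card_inter (hF : IsAdmissible s F)
    (hcard : #F = 6 * s + 10) (hs : 625 < s) (hA4 : #A = 4) (hA : ∀ e ∈ F, 2 ≤ #(e ∩ A)) :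
    ∃ (B : Finset α) (f : Finset α → Finset α), Disjoint A B ∧ s + 1 ≤ #B ∧
      (∀ S ∈ A.powersetCard 2, f S ⊆ B ∧ #(f S) = s + 1 ∧ f S = f (A \ S)) ∧
      F = ((A.powersetCard 2).biUnion fun S => (f S).image fun x => insert x S) ∪
        A.powersetCard 3 := by
  obtain ⟨hlink, htriples⟩ := hF.card_link_eq hcard hs hA4 hA
  obtain ⟨p, hp⟩ := powersetCard_nonempty.2 (show 2 ≤ #A by omega)
  refine ⟨(A.powersetCard 2).biUnion (link F A), link F A, ?_, ?_, fun S hS => ⟨?_, hlink S hS, ?_⟩,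
    ?_⟩
  · exact (disjoint_biUnion_right _ _ _).2 fun p _ =>
      disjoint_left.2 fun x hxA hx => (mem_link.1 hx).1 hxA
  · exact (hlink p hp).symm.le.trans (card_le_card (subset_biUnion_of_mem _ hp))
  · exact subset_biUnion_of_mem _ hS
  · exact link_eq_link_sdiff hF.almostIntersecting (mem_powersetCard.1 hS).1 (hlink S hS)
      (hlink _ (sdiff_mem_powersetCard_two hA4 hS))
  · rw [← htriples]
    exact eq_biUnion_link_union hF.sized hA

theorem IsAdmissible.exists_card_eq_four_two_le_card_inter (hF : IsAdmissible s F)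
    (hcard : #F = 6 * s + 10) (hs : 625 < s) :
    ∃ A : Finset α, #A = 4 ∧ ∀ e ∈ F, 2 ≤ #(e ∩ A) := by
  obtain ⟨x, hx⟩ := hF.exists_le_two_mul_degree hcard hs
  have hxW : x ∉ heavySet s F x := fun h => ((mem_heavySet (by omega)).1 h).1 rfl
  have h1 := (hF.heavySet_nonempty hcard x).card_pos
  have h3 := hF.card_heavySet_le_three hcard hs hx
  interval_cases hW : #(heavySet s F x)
  · obtain ⟨w, hw⟩ := card_eq_one.1 hW
    exact absurd hw (hF.heavySet_ne_singleton (by omega) w)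
  · obtain ⟨w₁, w₂, hne, hw⟩ := card_eq_two.1 hW
    exact ((heavyPair_of_heavySet_eq hF.sized hF.almostIntersecting (by omega) hne hw).false
      hF hcard hs hx).elim
  · exact ⟨insert x (heavySet s F x), by rw [card_insert_of_notMem hxW, hW],
      fun e he => hF.two_le_card_inter_insert_heavySet hcard hs hx hW he⟩

end AlmostIntersecting

open AlmostIntersecting in
/-- Let `s > 625` and let `F` be a 3-uniform `[0,s]`-almost intersecting
hypergraph such that for every edge `e ∈ F` and every two vertices `x, y ∈ e`, some edge of
`F` is disjoint from `{x,y}`. If `F` has exactly `6s+10` edges, then `F` is a hypergraph of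
the form `M_f` together with all four 3-element subsets of the 4-element core `A`. -/
theorem stmt_17 {α : Type*} [DecidableEq α] (s : ℕ) (hs : 625 < s)
    (F : Finset (Finset α))
    (huniform : ∀ A ∈ F, A.card = 3)
    (hai : ∀ A ∈ F, (F.filter fun B => Disjoint A B).card ≤ s)
    (hpair : ∀ e ∈ F, ∀ x ∈ e, ∀ y ∈ e, x ≠ y → ∃ g ∈ F, x ∉ g ∧ y ∉ g)
    (hcard : F.card = 6 * s + 10) :
    ∃ (A B : Finset α) (f : Finset α → Finset α),
      Disjoint A B ∧ A.card = 4 ∧ s + 1 ≤ B.card ∧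
      (∀ S ∈ A.powersetCard 2, f S ⊆ B ∧ (f S).card = s + 1 ∧ f S = f (A \ S)) ∧
      F = ((A.powersetCard 2).biUnion fun S => (f S).image fun x => insert x S) ∪
        A.powersetCard 3 := by
  have hF : IsAdmissible s F := ⟨fun _ he => huniform _ he, hai, hpair⟩
  obtain ⟨A, hA4, hA⟩ := hF.exists_card_eq_four_two_le_card_inter hcard hs
  obtain ⟨B, f, hAB, hB, hf, hFeq⟩ := hF.exists_eq_of_two_le_card_inter hcard hs hA4 hA
  exact ⟨A, B, f, hAB, hA4, hB, hf, hFeq⟩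
end

section
/- Let s ≥ 0 and let F be a 3-uniform hypergraph in which every edge is disjoint from at most s other edges. Let x and y be two distinct vertices such that some edge of F is disjoint from {x,y}. Then the number of edges of F containing both x and y is at most s+3. -/
/-!
Fix an edge `e` avoiding `x` and `y`. Edges through `x` and `y` that miss `e` are among the
at most `s` edges disjoint from `e`. An edge through `x` and `y` that meets `e` in a vertex `z`
is `{x, y, z}`, since it has only three vertices, so there are at most `|e| = 3` of them.
-/

namespace Finset

variable {α : Type*} [DecidableEq α]

theorem eq_insert_insert_singleton_of_card_eq_three {A : Finset α} {x y z : α}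
    (hA : A.card = 3) (hx : x ∈ A) (hy : y ∈ A) (hz : z ∈ A)
    (hxy : x ≠ y) (hxz : x ≠ z) (hyz : y ≠ z) : A = {x, y, z} := by
  refine (eq_of_subset_of_card_le ?_ ?_).symm
  · simp only [insert_subset_iff, singleton_subset_iff]
    exact ⟨hx, hy, hz⟩
  · rw [hA, card_insert_of_notMem (by simp [hxy, hxz]), card_pair hyz]

theorem card_filter_mem_mem_not_disjoint_le {F : Finset (Finset α)}
    (huniform : ∀ A ∈ F, A.card = 3) {x y : α} (hxy : x ≠ y) {e : Finset α}
    (hxe : x ∉ e) (hye : y ∉ e) :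
    ((F.filter fun A => x ∈ A ∧ y ∈ A).filter fun A => ¬Disjoint e A).card ≤ e.card := by
  refine (card_le_card ?_).trans (card_image_le (s := e) (f := fun z => ({x, y, z} : Finset α)))
  intro A hA
  simp only [mem_filter, not_disjoint_iff] at hA
  obtain ⟨⟨hAF, hxA, hyA⟩, z, hze, hzA⟩ := hA
  refine mem_image.mpr ⟨z, hze, ?_⟩
  exact (eq_insert_insert_singleton_of_card_eq_three (huniform A hAF) hxA hyA hzA hxy
    (ne_of_mem_of_not_mem hze hxe).symm (ne_of_mem_of_not_mem hze hye).symm).symm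

end Finset

open Finset in
/-- Let `s ≥ 0` and let `F` be a 3-uniform hypergraph in which every edge
is disjoint from at most `s` other edges. Let `x ≠ y` be vertices such that some edge of `F`
is disjoint from `{x,y}`. Then at most `s+3` edges of `F` contain both `x` and `y`. -/
theorem stmt_18 {α : Type*} [DecidableEq α] (s : ℕ)
    (F : Finset (Finset α))
    (huniform : ∀ A ∈ F, A.card = 3)
    (hai : ∀ A ∈ F, (F.filter fun B => Disjoint A B).card ≤ s)
    (x y : α) (hxy : x ≠ y)
    (hdisj : ∃ e ∈ F, x ∉ e ∧ y ∉ e) :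
    (F.filter fun e => x ∈ e ∧ y ∈ e).card ≤ s + 3 := by
  obtain ⟨e, heF, hxe, hye⟩ := hdisj
  set S := F.filter fun A => x ∈ A ∧ y ∈ A
  have hmiss : (S.filter fun A => Disjoint e A).card ≤ s :=
    (card_le_card (filter_subset_filter _ (filter_subset _ F))).trans (hai e heF)
  have hmeet : (S.filter fun A => ¬Disjoint e A).card ≤ 3 :=
    huniform e heF ▸ card_filter_mem_mem_not_disjoint_le huniform hxy hxe hye
  rw [← card_filter_add_card_filter_not (fun A => Disjoint e A)]
  exact add_le_add hmiss hmeet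
end

section
/- Let k ≥ 1, s ≥ 0, and let F be a k-uniform [0,s]-almost intersecting hypergraph such that no set of at most k-1 vertices meets all edges of F. Then F contains no sunflower with k+s+1 petals. -/
/-!
Two petals of the sunflower meet exactly in the core `C`, so `|C| < k` and, as no `k - 1`
vertices cover `F`, some edge `e ∈ F` misses `C`. The traces on `e` of the petals meeting `e`
are then pairwise disjoint, so at most `|e| = k` petals meet `e`; the remaining `s + 1`
petals are edges of `F` disjoint from `e`, too many for a `[0,s]`-almost intersecting family.
-/

namespace Finset

variable {α : Type*} [DecidableEq α] {P : Finset (Finset α)} {C : Finset α}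

theorem ssubset_of_inter_eq_of_sdiff_nonempty {X Y : Finset α} (hcore : X ∩ Y = C)
    (hpetal : (X \ C).Nonempty) : C ⊂ X := by
  subst hcore
  exact ssubset_iff_subset_ne.mpr ⟨inter_subset_left, fun h => by
    rw [h, sdiff_self] at hpetal
    exact not_nonempty_empty hpetal⟩

theorem card_filter_not_disjoint_le_of_disjoint_core
    (hcore : ∀ X ∈ P, ∀ Y ∈ P, X ≠ Y → X ∩ Y = C) {e : Finset α} (he : Disjoint C e) :
    (P.filter fun Z => ¬ Disjoint e Z).card ≤ e.card := by
  set M := P.filter fun Z => ¬ Disjoint e Z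
  have htraces : (M : Set (Finset α)).PairwiseDisjoint (e ∩ ·) := by
    intro Z₁ hZ₁ Z₂ hZ₂ hne
    have h := hcore Z₁ (mem_filter.mp hZ₁).1 Z₂ (mem_filter.mp hZ₂).1 hne
    refine disjoint_left.mpr fun x hx₁ hx₂ => disjoint_left.mp he ?_ (mem_inter.mp hx₁).1
    rw [← h]
    exact mem_inter.mpr ⟨(mem_inter.mp hx₁).2, (mem_inter.mp hx₂).2⟩
  calc M.card ≤ (M.biUnion (e ∩ ·)).card :=
        card_le_card_biUnion htraces fun Z hZ => not_disjoint_iff_nonempty_inter.mp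
          (mem_filter.mp hZ).2
    _ ≤ e.card := card_le_card (biUnion_subset.mpr fun _ _ => inter_subset_left)

end Finset

open Finset in
/-- Let `k ≥ 1`, `s ≥ 0`, and let `F` be a `k`-uniform `[0,s]`-almost
intersecting hypergraph such that no set of at most `k-1` vertices meets all edges of `F`.
Then `F` contains no sunflower with `k+s+1` petals. -/
theorem stmt_19 {α : Type*} [DecidableEq α] (k s : ℕ) (hk : 1 ≤ k)
    (F : Finset (Finset α))
    (huniform : ∀ A ∈ F, A.card = k)
    (hai : ∀ A ∈ F, (F.filter fun B => Disjoint A B).card ≤ s)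
    (hcover : ¬ ∃ T : Finset α, T.card ≤ k - 1 ∧ ∀ e ∈ F, (T ∩ e).Nonempty) :
    ¬ ∃ (P : Finset (Finset α)) (C : Finset α), P ⊆ F ∧ P.card = k + s + 1 ∧
      (∀ X ∈ P, ∀ Y ∈ P, X ≠ Y → X ∩ Y = C) ∧ (∀ X ∈ P, (X \ C).Nonempty) := by
  rintro ⟨P, C, hPF, hPcard, hcore, hpetal⟩
  obtain ⟨X, hX, Y, hY, hXY⟩ := one_lt_card.mp (show 1 < P.card by omega)
  have hC : C.card < k := huniform X (hPF hX) ▸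
    card_lt_card (ssubset_of_inter_eq_of_sdiff_nonempty (hcore X hX Y hY hXY) (hpetal X hX))
  obtain ⟨e, heF, heC⟩ : ∃ e ∈ F, Disjoint C e := by
    by_contra! hmeets
    exact hcover ⟨C, by omega, fun e he => not_disjoint_iff_nonempty_inter.mp (hmeets e he)⟩
  have hmeet := card_filter_not_disjoint_le_of_disjoint_core hcore heC
  have hsplit := card_filter_add_card_filter_not (s := P) fun Z => Disjoint e Z
  have hmiss : (P.filter fun Z => Disjoint e Z).card ≤ (F.filter fun B => Disjoint e B).card :=
    card_le_card (filter_subset_filter _ hPF)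
  have := hai e heF
  have := huniform e heF
  omega
end
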